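/- arXiv:math/0703599 — 7 statements merged into one kernel-verified Lean document; each statement's English description precedes it below -/
import Mathlib

section
/- At every point (t,x) ∈ ℝ×ℝⁿ one has (−2ℓ_t v_t + 2Σ_{i,j} b^{ij} ℓ_i v_j + Ψ v)·v_tt = ∂_t( −ℓ_t v_t² + 2Σ_{i,j} b^{ij} ℓ_i v_j v_t + Ψ v v_t − (Ψ_t/2) v² ) − Σ_{i,j} ∂_{x_j}( b^{ij} ℓ_i v_t² ) + [ℓ_tt + Σ_{i,j} ∂_{x_j}(b^{ij} ℓ_i) − Ψ] v_t² − 2 Σ_{i,j} ∂_t(b^{ij} ℓ_j) v_i v_t + (Ψ_tt/2) v². (This is the deterministic version of identity (2.6) of the paper, in which the Itô correction term is absent.) -/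
open scoped BigOperators

/-- Partial derivative in the time variable `t` of a function `h : ℝ × ℝⁿ → ℝ`. -/
noncomputable def ptd {n : ℕ} (h : ℝ → (Fin n → ℝ) → ℝ) : ℝ → (Fin n → ℝ) → ℝ :=
  fun t x => deriv (fun s => h s x) t

/-- Partial derivative in the spatial variable `x_i` of a function `h : ℝ × ℝⁿ → ℝ`. -/
noncomputable def pxd {n : ℕ} (h : ℝ → (Fin n → ℝ) → ℝ) (i : Fin n) :
    ℝ → (Fin n → ℝ) → ℝ :=
  fun t x => deriv (fun y => h t (Function.update x i y)) (x i)

section Helpers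

variable {n : ℕ}

private lemma hasDerivAt_tline (t : ℝ) (x : Fin n → ℝ) :
    HasDerivAt (fun s : ℝ => ((s, x) : ℝ × (Fin n → ℝ))) ((1 : ℝ), (0 : Fin n → ℝ)) t :=
  (hasDerivAt_id t).prodMk (hasDerivAt_const t x)

private lemma hasDerivAt_xline (t : ℝ) (x : Fin n → ℝ) (j : Fin n) :
    HasDerivAt (fun y : ℝ => ((t, Function.update x j y) : ℝ × (Fin n → ℝ)))
      ((0 : ℝ), Pi.single j 1) (x j) := by
  refine (hasDerivAt_const (x j) t).prodMk ?_
  rw [hasDerivAt_pi]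
  intro k
  by_cases hk : k = j
  · subst hk
    simpa [Function.update_apply] using hasDerivAt_id' (x k)
  · simpa [Function.update_apply, hk, Pi.single_apply] using hasDerivAt_const (x j) (x k)

private lemma ptd_hasDerivAt {h : ℝ → (Fin n → ℝ) → ℝ} {t : ℝ} {x : Fin n → ℝ}
    (hH : DifferentiableAt ℝ (fun p : ℝ × (Fin n → ℝ) => h p.1 p.2) (t, x)) :
    HasDerivAt (fun s => h s x) (ptd h t x) t := by
  have h1 := hH.hasFDerivAt.comp_hasDerivAt t (hasDerivAt_tline t x)
  exact h1.differentiableAt.hasDerivAt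

private lemma ptd_eq {h : ℝ → (Fin n → ℝ) → ℝ} {t : ℝ} {x : Fin n → ℝ}
    (hH : DifferentiableAt ℝ (fun p : ℝ × (Fin n → ℝ) => h p.1 p.2) (t, x)) :
    ptd h t x
      = fderiv ℝ (fun p : ℝ × (Fin n → ℝ) => h p.1 p.2) (t, x) ((1 : ℝ), (0 : Fin n → ℝ)) :=
  by have := (hH.hasFDerivAt.comp_hasDerivAt t (hasDerivAt_tline t x)).deriv; exact this

private lemma pxd_hasDerivAt {h : ℝ → (Fin n → ℝ) → ℝ} {t : ℝ} {x : Fin n → ℝ} (j : Fin n)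
    (hH : DifferentiableAt ℝ (fun p : ℝ × (Fin n → ℝ) => h p.1 p.2) (t, x)) :
    HasDerivAt (fun y => h t (Function.update x j y)) (pxd h j t x) (x j) := by
  have hH' : HasFDerivAt (fun p : ℝ × (Fin n → ℝ) => h p.1 p.2)
      (fderiv ℝ (fun p : ℝ × (Fin n → ℝ) => h p.1 p.2) (t, x))
      (t, Function.update x j (x j)) := by
    rw [Function.update_eq_self]; exact hH.hasFDerivAt
  have h1 := hH'.comp_hasDerivAt (x j) (hasDerivAt_xline t x j)
  exact h1.differentiableAt.hasDerivAt

private lemma pxd_eq {h : ℝ → (Fin n → ℝ) → ℝ} {t : ℝ} {x : Fin n → ℝ} (j : Fin n)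
    (hH : DifferentiableAt ℝ (fun p : ℝ × (Fin n → ℝ) => h p.1 p.2) (t, x)) :
    pxd h j t x
      = fderiv ℝ (fun p : ℝ × (Fin n → ℝ) => h p.1 p.2) (t, x) ((0 : ℝ), Pi.single j 1) := by
  have hH' : HasFDerivAt (fun p : ℝ × (Fin n → ℝ) => h p.1 p.2)
      (fderiv ℝ (fun p : ℝ × (Fin n → ℝ) => h p.1 p.2) (t, x))
      (t, Function.update x j (x j)) := by
    rw [Function.update_eq_self]; exact hH.hasFDerivAt
  exact (hH'.comp_hasDerivAt (x j) (hasDerivAt_xline t x j)).deriv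

private lemma contDiff_ptd {h : ℝ → (Fin n → ℝ) → ℝ}
    (hH : ContDiff ℝ 2 (fun p : ℝ × (Fin n → ℝ) => h p.1 p.2)) :
    ContDiff ℝ 1 (fun p : ℝ × (Fin n → ℝ) => ptd h p.1 p.2) := by
  have he : (fun p : ℝ × (Fin n → ℝ) => ptd h p.1 p.2)
      = fun p : ℝ × (Fin n → ℝ) =>
          fderiv ℝ (fun q : ℝ × (Fin n → ℝ) => h q.1 q.2) p ((1 : ℝ), (0 : Fin n → ℝ)) := by
    funext p
    obtain ⟨a, c⟩ := p
    exact ptd_eq ((hH.differentiable two_ne_zero) (a, c))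
  rw [he]
  exact (hH.fderiv_right (by norm_num)).clm_apply contDiff_const

private lemma contDiff_pxd {h : ℝ → (Fin n → ℝ) → ℝ}
    (hH : ContDiff ℝ 2 (fun p : ℝ × (Fin n → ℝ) => h p.1 p.2)) (j : Fin n) :
    ContDiff ℝ 1 (fun p : ℝ × (Fin n → ℝ) => pxd h j p.1 p.2) := by
  have he : (fun p : ℝ × (Fin n → ℝ) => pxd h j p.1 p.2)
      = fun p : ℝ × (Fin n → ℝ) =>
          fderiv ℝ (fun q : ℝ × (Fin n → ℝ) => h q.1 q.2) p ((0 : ℝ), Pi.single j 1) := by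
    funext p
    obtain ⟨a, c⟩ := p
    exact pxd_eq j ((hH.differentiable two_ne_zero) (a, c))
  rw [he]
  exact (hH.fderiv_right (by norm_num)).clm_apply contDiff_const

private lemma clairaut {h : ℝ → (Fin n → ℝ) → ℝ}
    (hH : ContDiff ℝ 2 (fun p : ℝ × (Fin n → ℝ) => h p.1 p.2))
    (j : Fin n) (t : ℝ) (x : Fin n → ℝ) :
    ptd (pxd h j) t x = pxd (ptd h) j t x := by
  set H := fun p : ℝ × (Fin n → ℝ) => h p.1 p.2 with hHdef
  have hd : Differentiable ℝ H := hH.differentiable two_ne_zero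
  have hfd : ContDiff ℝ 1 (fderiv ℝ H) := hH.fderiv_right (by norm_num)
  have hfd' : DifferentiableAt ℝ (fderiv ℝ H) (t, x) := (hfd.differentiable one_ne_zero) (t, x)
  set f'' := fderiv ℝ (fderiv ℝ H) (t, x) with hf''
  have hsymm := second_derivative_symmetric (f' := fderiv ℝ H) (f'' := f'')
    (fun y => (hd y).hasFDerivAt) hfd'.hasFDerivAt
  have hL : ptd (pxd h j) t x = f'' ((1 : ℝ), (0 : Fin n → ℝ)) ((0 : ℝ), Pi.single j 1) := by
    have e1 : (fun s => pxd h j s x)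
        = fun s => fderiv ℝ H (s, x) ((0 : ℝ), Pi.single j 1) := by
      funext s
      exact pxd_eq j (hd (s, x))
    have h2 : HasDerivAt (fun s => fderiv ℝ H (s, x))
        (f'' ((1 : ℝ), (0 : Fin n → ℝ))) t :=
      hfd'.hasFDerivAt.comp_hasDerivAt t (hasDerivAt_tline t x)
    have h3 := h2.clm_apply (hasDerivAt_const t ((0 : ℝ), Pi.single j (1 : ℝ)))
    show deriv (fun s => pxd h j s x) t = _
    rw [e1]
    simpa using h3.deriv
  have hR : pxd (ptd h) j t x = f'' ((0 : ℝ), Pi.single j 1) ((1 : ℝ), (0 : Fin n → ℝ)) := by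
    have e1 : (fun y => ptd h t (Function.update x j y))
        = fun y => fderiv ℝ H (t, Function.update x j y) ((1 : ℝ), (0 : Fin n → ℝ)) := by
      funext y
      exact ptd_eq (hd (t, Function.update x j y))
    have hfd'' : HasFDerivAt (fderiv ℝ H) f'' (t, Function.update x j (x j)) := by
      rw [Function.update_eq_self]; exact hfd'.hasFDerivAt
    have h2 := hfd''.comp_hasDerivAt (x j) (hasDerivAt_xline t x j)
    have h3 := h2.clm_apply (hasDerivAt_const (x j) ((1 : ℝ), (0 : Fin n → ℝ)))
    show deriv (fun y => ptd h t (Function.update x j y)) (x j) = _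
    rw [e1]
    simpa using h3.deriv
  rw [hL, hR]
  exact hsymm _ _

end Helpers

/-- Deterministic version of identity (2.6) of the paper:
`(−2ℓ_t v_t + 2Σ b^{ij}ℓ_i v_j + Ψv) v_tt = ∂_t(−ℓ_t v_t² + 2Σ b^{ij}ℓ_i v_j v_t + Ψ v v_t
− (Ψ_t/2)v²) − Σ ∂_{x_j}(b^{ij}ℓ_i v_t²) + [ℓ_tt + Σ ∂_{x_j}(b^{ij}ℓ_i) − Ψ]v_t²
− 2Σ ∂_t(b^{ij}ℓ_j) v_i v_t + (Ψ_tt/2)v²`. -/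
theorem stmt_3 {n : ℕ} (hn : 1 ≤ n)
    (b : Fin n → Fin n → ℝ → (Fin n → ℝ) → ℝ)
    (ℓ Ψ u : ℝ → (Fin n → ℝ) → ℝ)
    (hb : ∀ i j, ContDiff ℝ 2 (fun p : ℝ × (Fin n → ℝ) => b i j p.1 p.2))
    (hbsym : ∀ i j, b i j = b j i)
    (hℓ : ContDiff ℝ 3 (fun p : ℝ × (Fin n → ℝ) => ℓ p.1 p.2))
    (hΨ : ContDiff ℝ 2 (fun p : ℝ × (Fin n → ℝ) => Ψ p.1 p.2))
    (hu2 : ContDiff ℝ 2 (fun p : ℝ × (Fin n → ℝ) => u p.1 p.2))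
    (hu3 : ∀ x, ContDiff ℝ 3 (fun s => u s x))
    (θ v : ℝ → (Fin n → ℝ) → ℝ)
    (hθ : θ = fun t x => Real.exp (ℓ t x))
    (hv : v = fun t x => θ t x * u t x)
    (t : ℝ) (x : Fin n → ℝ) :
    (-2 * ptd ℓ t x * ptd v t x
        + 2 * (∑ i, ∑ j, b i j t x * pxd ℓ i t x * pxd v j t x)
        + Ψ t x * v t x) * ptd (ptd v) t x
      = ptd (fun s y =>
            -(ptd ℓ s y) * (ptd v s y) ^ 2
              + 2 * (∑ i, ∑ j, b i j s y * pxd ℓ i s y * pxd v j s y) * ptd v s y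
              + Ψ s y * v s y * ptd v s y
              - ptd Ψ s y / 2 * (v s y) ^ 2) t x
        - (∑ i, ∑ j, pxd (fun s y => b i j s y * pxd ℓ i s y * (ptd v s y) ^ 2) j t x)
        + (ptd (ptd ℓ) t x
            + (∑ i, ∑ j, pxd (fun s y => b i j s y * pxd ℓ i s y) j t x)
            - Ψ t x) * (ptd v t x) ^ 2
        - 2 * (∑ i, ∑ j, ptd (fun s y => b i j s y * pxd ℓ j s y) t x
            * pxd v i t x * ptd v t x)
        + ptd (ptd Ψ) t x / 2 * (v t x) ^ 2 := by
  have hv2 : ContDiff ℝ 2 (fun p : ℝ × (Fin n → ℝ) => v p.1 p.2) := by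
    subst hθ; subst hv
    exact (Real.contDiff_exp.comp (hℓ.of_le (by norm_num))).mul hu2
  have hℓ2 : ContDiff ℝ 2 (fun p : ℝ × (Fin n → ℝ) => ℓ p.1 p.2) := hℓ.of_le (by norm_num)
  have hvt1 := contDiff_ptd hv2
  have hvx1 : ∀ j, ContDiff ℝ 1 (fun p : ℝ × (Fin n → ℝ) => pxd v j p.1 p.2) :=
    fun j => contDiff_pxd hv2 j
  have hlt1 := contDiff_ptd hℓ2
  have hlx1 : ∀ i, ContDiff ℝ 1 (fun p : ℝ × (Fin n → ℝ) => pxd ℓ i p.1 p.2) :=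
    fun i => contDiff_pxd hℓ2 i
  have hPt1 := contDiff_ptd hΨ
  -- time derivatives of the basic quantities
  have Dt : ∀ (h : ℝ → (Fin n → ℝ) → ℝ),
      ContDiff ℝ 1 (fun p : ℝ × (Fin n → ℝ) => h p.1 p.2) →
      HasDerivAt (fun s => h s x) (ptd h t x) t :=
    fun h hh => ptd_hasDerivAt ((hh.differentiable one_ne_zero) (t, x))
  have Dx : ∀ (h : ℝ → (Fin n → ℝ) → ℝ) (j : Fin n),
      ContDiff ℝ 1 (fun p : ℝ × (Fin n → ℝ) => h p.1 p.2) →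
      HasDerivAt (fun y => h t (Function.update x j y)) (pxd h j t x) (x j) :=
    fun h j hh => pxd_hasDerivAt j ((hh.differentiable one_ne_zero) (t, x))
  have hd_v := Dt v (hv2.of_le one_le_two)
  have hd_vt := Dt (ptd v) hvt1
  have hd_vx := fun j => Dt (pxd v j) (hvx1 j)
  have hd_lt := Dt (ptd ℓ) hlt1
  have hd_lx := fun i => Dt (pxd ℓ i) (hlx1 i)
  have hd_P := Dt Ψ (hΨ.of_le one_le_two)
  have hd_Pt := Dt (ptd Ψ) hPt1
  have hd_b := fun i j => Dt (b i j) ((hb i j).of_le one_le_two)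
  have hx_b := fun i j => Dx (b i j) j ((hb i j).of_le one_le_two)
  have hx_lx := fun i j => Dx (pxd ℓ i) j (hlx1 i)
  have hx_vt := fun j => Dx (ptd v) j hvt1
  -- the time derivative of the big bracket
  have hS : HasDerivAt (fun s => ∑ i, ∑ j, b i j s x * pxd ℓ i s x * pxd v j s x)
      (∑ i, ∑ j, ((ptd (b i j) t x * pxd ℓ i t x + b i j t x * ptd (pxd ℓ i) t x)
          * pxd v j t x
        + b i j t x * pxd ℓ i t x * ptd (pxd v j) t x)) t := by
    apply HasDerivAt.fun_sum; intro i _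
    apply HasDerivAt.fun_sum; intro j _
    exact ((hd_b i j).fun_mul (hd_lx i)).fun_mul (hd_vx j)
  have H1 := (((hd_lt.fun_neg.fun_mul (hd_vt.fun_pow 2)).fun_add ((hS.const_mul 2).fun_mul hd_vt)).fun_add
      ((hd_P.fun_mul hd_v).fun_mul hd_vt)).fun_sub ((hd_Pt.div_const 2).fun_mul (hd_v.fun_pow 2))
  have hT1 : ptd (fun s y =>
        -(ptd ℓ s y) * (ptd v s y) ^ 2
          + 2 * (∑ i, ∑ j, b i j s y * pxd ℓ i s y * pxd v j s y) * ptd v s y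
          + Ψ s y * v s y * ptd v s y
          - ptd Ψ s y / 2 * (v s y) ^ 2) t x = _ := H1.deriv
  have hT2 : ∀ i j, pxd (fun s y => b i j s y * pxd ℓ i s y * (ptd v s y) ^ 2) j t x
      = pxd (b i j) j t x * pxd ℓ i t x * (ptd v t x) ^ 2
        + b i j t x * pxd (pxd ℓ i) j t x * (ptd v t x) ^ 2
        + 2 * (b i j t x * pxd ℓ i t x * pxd (ptd v) j t x) * ptd v t x := by
    intro i j
    have H := (((hx_b i j).fun_mul (hx_lx i j)).fun_mul ((hx_vt j).fun_pow 2)).deriv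
    exact H.trans (by simp only [Function.update_eq_self]; push_cast; ring)
  have hT3 : ∀ i j, pxd (fun s y => b i j s y * pxd ℓ i s y) j t x
      = pxd (b i j) j t x * pxd ℓ i t x + b i j t x * pxd (pxd ℓ i) j t x := by
    intro i j
    have H := ((hx_b i j).fun_mul (hx_lx i j)).deriv
    exact H.trans (by simp only [Function.update_eq_self])
  have hT4 : ∀ i j, ptd (fun s y => b i j s y * pxd ℓ j s y) t x
      = ptd (b i j) t x * pxd ℓ j t x + b i j t x * ptd (pxd ℓ j) t x :=
    fun i j => ((hd_b i j).fun_mul (hd_lx j)).deriv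
  rw [hT1]
  simp only [clairaut hv2, hT2, hT3, hT4]
  have hswap : ∑ i, ∑ j, (ptd (b i j) t x * pxd ℓ j t x + b i j t x * ptd (pxd ℓ j) t x)
        * pxd v i t x * ptd v t x
      = ∑ i, ∑ j, (ptd (b i j) t x * pxd ℓ i t x + b i j t x * ptd (pxd ℓ i) t x)
        * pxd v j t x * ptd v t x := by
    rw [Finset.sum_comm]
    refine Finset.sum_congr rfl fun i _ => Finset.sum_congr rfl fun j _ => ?_
    rw [hbsym j i]
  rw [hswap]
  simp only [add_mul, mul_add, sub_mul, mul_sub, Finset.sum_add_distrib, ← Finset.sum_mul,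
    ← Finset.mul_sum]
  push_cast
  ring
end

section
/- At every point (t,x) ∈ ℝ×ℝⁿ one has −2ℓ_t v_t·[ −Σ_{i,j} ∂_{x_j}(b^{ij} v_i) + A v ] = 2[ Σ_{i,j} ∂_{x_j}(b^{ij} ℓ_t v_i v_t) − Σ_{i,j} b^{ij} ℓ_{tj} v_i v_t ] + Σ_{i,j} ∂_t(b^{ij} ℓ_t) v_i v_j − ∂_t( Σ_{i,j} b^{ij} ℓ_t v_i v_j + A ℓ_t v² ) + ∂_t(A ℓ_t) v², where A = (ℓ_t² − ℓ_tt) − Σ_{i,j}(b^{ij} ℓ_i ℓ_j − b^{ij}_j ℓ_i − b^{ij} ℓ_{ij}) − Ψ. (Identity (2.7) of the paper.) -/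
open scoped BigOperators

section Aux
variable {n : ℕ}

/-- time partial derivative of an uncurried function -/
noncomputable def Dt (f : ℝ × (Fin n → ℝ) → ℝ) : ℝ × (Fin n → ℝ) → ℝ :=
  fun q => fderiv ℝ f q (1, 0)

/-- spatial partial derivative of an uncurried function -/
noncomputable def Dx (i : Fin n) (f : ℝ × (Fin n → ℝ) → ℝ) : ℝ × (Fin n → ℝ) → ℝ :=
  fun q => fderiv ℝ f q (0, Pi.single i 1)

lemma hasDerivAt_t_slice (f : (ℝ × (Fin n → ℝ)) → ℝ) {t : ℝ} {x : Fin n → ℝ}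
    (hf : DifferentiableAt ℝ f (t, x)) :
    HasDerivAt (fun s => f (s, x)) (fderiv ℝ f (t, x) (1, 0)) t := by
  have h1 : HasDerivAt (fun s : ℝ => (s, x)) ((1 : ℝ), (0 : Fin n → ℝ)) t :=
    (hasDerivAt_id t).prodMk (hasDerivAt_const t x)
  exact hf.hasFDerivAt.comp_hasDerivAt t h1

lemma hasDerivAt_x_slice (f : (ℝ × (Fin n → ℝ)) → ℝ) {t : ℝ} {x : Fin n → ℝ} (i : Fin n)
    (hf : DifferentiableAt ℝ f (t, x)) :
    HasDerivAt (fun y => f (t, Function.update x i y))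
      (fderiv ℝ f (t, x) (0, Pi.single i 1)) (x i) := by
  have h0 : ∀ y : ℝ, Function.update x i y = x + (y - x i) • (Pi.single i 1 : Fin n → ℝ) := by
    intro y; funext j
    rcases eq_or_ne j i with h | h
    · subst h; simp
    · simp [Function.update_of_ne h, Pi.single_eq_of_ne h]
  have h2 : HasDerivAt (fun y : ℝ => x + (y - x i) • (Pi.single i 1 : Fin n → ℝ))
      ((Pi.single i 1 : Fin n → ℝ)) (x i) := by
    simpa using
      (((hasDerivAt_id (x i)).sub_const (x i)).smul_const ((Pi.single i 1 : Fin n → ℝ))).const_add x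
  have h1 : HasDerivAt (fun y : ℝ => (t, Function.update x i y))
      ((0 : ℝ), (Pi.single i 1 : Fin n → ℝ)) (x i) := by
    have := (hasDerivAt_const (x i) t).prodMk h2
    simpa [← h0] using this
  have h4 : HasFDerivAt f (fderiv ℝ f (t, x)) (t, Function.update x i (x i)) := by
    rw [Function.update_eq_self]; exact hf.hasFDerivAt
  exact h4.comp_hasDerivAt (x i) h1

lemma ptd_eqD (h : ℝ → (Fin n → ℝ) → ℝ) (f : (ℝ × (Fin n → ℝ)) → ℝ)
    (hhf : ∀ s y, h s y = f (s, y)) {t : ℝ} {x : Fin n → ℝ}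
    (hf : DifferentiableAt ℝ f (t, x)) :
    ptd h t x = Dt f (t, x) := by
  have : (fun s => h s x) = fun s => f (s, x) := funext fun s => hhf s x
  rw [ptd, this, (hasDerivAt_t_slice f hf).deriv]; rfl

lemma pxd_eqD (h : ℝ → (Fin n → ℝ) → ℝ) (f : (ℝ × (Fin n → ℝ)) → ℝ)
    (hhf : ∀ s y, h s y = f (s, y)) (i : Fin n) {t : ℝ} {x : Fin n → ℝ}
    (hf : DifferentiableAt ℝ f (t, x)) :
    pxd h i t x = Dx i f (t, x) := by
  have : (fun y => h t (Function.update x i y)) = fun y => f (t, Function.update x i y) :=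
    funext fun y => hhf t _
  rw [pxd, this, (hasDerivAt_x_slice f i hf).deriv]; rfl

lemma Dt_contDiff {k : WithTop ℕ∞} {f : (ℝ × (Fin n → ℝ)) → ℝ}
    (hf : ContDiff ℝ (k + 1) f) : ContDiff ℝ k (Dt f) :=
  ((contDiff_succ_iff_fderiv.mp hf).2.2).clm_apply contDiff_const

lemma Dx_contDiff {k : WithTop ℕ∞} {f : (ℝ × (Fin n → ℝ)) → ℝ} (i : Fin n)
    (hf : ContDiff ℝ (k + 1) f) : ContDiff ℝ k (Dx i f) :=
  ((contDiff_succ_iff_fderiv.mp hf).2.2).clm_apply contDiff_const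

lemma fderiv_mul_apply {f g : (ℝ × (Fin n → ℝ)) → ℝ} {p : ℝ × (Fin n → ℝ)}
    (hf : DifferentiableAt ℝ f p) (hg : DifferentiableAt ℝ g p) (w : ℝ × (Fin n → ℝ)) :
    fderiv ℝ (fun q => f q * g q) p w = fderiv ℝ f p w * g p + f p * fderiv ℝ g p w := by
  rw [fderiv_fun_mul hf hg]
  simp only [ContinuousLinearMap.add_apply, ContinuousLinearMap.smul_apply, smul_eq_mul]
  ring

lemma Dt_mul {f g : (ℝ × (Fin n → ℝ)) → ℝ} {p : ℝ × (Fin n → ℝ)}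
    (hf : DifferentiableAt ℝ f p) (hg : DifferentiableAt ℝ g p) :
    Dt (fun q => f q * g q) p = Dt f p * g p + f p * Dt g p :=
  fderiv_mul_apply hf hg _

lemma Dx_mul (i : Fin n) {f g : (ℝ × (Fin n → ℝ)) → ℝ} {p : ℝ × (Fin n → ℝ)}
    (hf : DifferentiableAt ℝ f p) (hg : DifferentiableAt ℝ g p) :
    Dx i (fun q => f q * g q) p = Dx i f p * g p + f p * Dx i g p :=
  fderiv_mul_apply hf hg _

lemma Dt_add {f g : (ℝ × (Fin n → ℝ)) → ℝ} {p : ℝ × (Fin n → ℝ)}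
    (hf : DifferentiableAt ℝ f p) (hg : DifferentiableAt ℝ g p) :
    Dt (fun q => f q + g q) p = Dt f p + Dt g p := by
  unfold Dt; rw [fderiv_fun_add hf hg]; simp

lemma Dt_sum2 {F : Fin n → Fin n → (ℝ × (Fin n → ℝ)) → ℝ} {p : ℝ × (Fin n → ℝ)}
    (h : ∀ i j, DifferentiableAt ℝ (F i j) p) :
    Dt (fun q => ∑ i, ∑ j, F i j q) p = ∑ i, ∑ j, Dt (F i j) p := by
  unfold Dt
  rw [fderiv_fun_sum (fun i _ => DifferentiableAt.fun_sum (fun j _ => h i j))]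
  simp only [ContinuousLinearMap.coe_sum', Finset.sum_apply]
  refine Finset.sum_congr rfl fun i _ => ?_
  rw [fderiv_fun_sum (fun j _ => h i j)]
  simp

lemma fderiv_swap {f : (ℝ × (Fin n → ℝ)) → ℝ} (hf : ContDiff ℝ 2 f)
    (p v w : ℝ × (Fin n → ℝ)) :
    fderiv ℝ (fun q => fderiv ℝ f q w) p v = fderiv ℝ (fun q => fderiv ℝ f q v) p w := by
  have h1 : ContDiff ℝ 1 (fderiv ℝ f) := by
    have h2 : ContDiff ℝ ((1 : WithTop ℕ∞) + 1) f := hf.of_le (by norm_num)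
    exact (contDiff_succ_iff_fderiv.mp h2).2.2
  have hsym : IsSymmSndFDerivAt ℝ f p := hf.contDiffAt.isSymmSndFDerivAt (by simp)
  have key : ∀ u : ℝ × (Fin n → ℝ), fderiv ℝ (fun q => fderiv ℝ f q u) p
      = (fderiv ℝ (fderiv ℝ f) p).flip u := by
    intro u
    have := fderiv_clm_apply (𝕜 := ℝ) (c := fderiv ℝ f) (u := fun _ => u)
      (h1.differentiable one_ne_zero p) (differentiableAt_const u)
    simpa using this
  rw [key w, key v]
  simp only [ContinuousLinearMap.flip_apply]
  exact hsym v w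

lemma Dt_Dx_swap {f : (ℝ × (Fin n → ℝ)) → ℝ} (hf : ContDiff ℝ 2 f) (i : Fin n)
    (p : ℝ × (Fin n → ℝ)) : Dt (Dx i f) p = Dx i (Dt f) p := by
  unfold Dt Dx
  exact fderiv_swap hf p _ _

lemma Dt_sq {f : (ℝ × (Fin n → ℝ)) → ℝ} {p : ℝ × (Fin n → ℝ)}
    (hf : DifferentiableAt ℝ f p) :
    Dt (fun q => (f q) ^ 2) p = 2 * f p * Dt f p := by
  have : (fun q => (f q) ^ 2) = fun q => f q * f q := by funext q; ring
  rw [this, Dt_mul hf hf]; ring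

end Aux

section Key
variable {n : ℕ}

lemma key_identity (Bff : Fin n → Fin n → (ℝ × (Fin n → ℝ)) → ℝ)
    (Lf Vf Af : (ℝ × (Fin n → ℝ)) → ℝ)
    (hB : ∀ i j, ContDiff ℝ 2 (Bff i j))
    (hL : ContDiff ℝ 3 Lf) (hV : ContDiff ℝ 2 Vf) (hA : Differentiable ℝ Af)
    (p : ℝ × (Fin n → ℝ))
    (hsym : ∀ i j, Bff i j p = Bff j i p) :
    -2 * Dt Lf p * Dt Vf p *
        (-(∑ i, ∑ j, Dx j (fun q => Bff i j q * Dx i Vf q) p) + Af p * Vf p)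
      = 2 * ((∑ i, ∑ j,
              Dx j (fun q => Bff i j q * Dt Lf q * Dx i Vf q * Dt Vf q) p)
            - ∑ i, ∑ j, Bff i j p * Dx j (Dt Lf) p * Dx i Vf p * Dt Vf p)
        + (∑ i, ∑ j, Dt (fun q => Bff i j q * Dt Lf q) p * Dx i Vf p * Dx j Vf p)
        - Dt (fun q =>
            (∑ i, ∑ j, Bff i j q * Dt Lf q * Dx i Vf q * Dx j Vf q)
              + Af q * Dt Lf q * (Vf q) ^ 2) p
        + Dt (fun q => Af q * Dt Lf q) p * (Vf p) ^ 2 := by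
  -- smoothness facts
  have hL2 : ContDiff ℝ 2 Lf := hL.of_le (by norm_num)
  have hLt2 : ContDiff ℝ 2 (Dt Lf) := Dt_contDiff (hL.of_le (by norm_num))
  have hVt1 : ContDiff ℝ 1 (Dt Vf) := Dt_contDiff (hV.of_le (by norm_num))
  have hVx1 : ∀ i, ContDiff ℝ 1 (Dx i Vf) := fun i => Dx_contDiff i (hV.of_le (by norm_num))
  have dB : ∀ i j, Differentiable ℝ (Bff i j) := fun i j => (hB i j).differentiable (by norm_num)
  have dL : Differentiable ℝ Lf := hL.differentiable (by norm_num)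
  have dLt : Differentiable ℝ (Dt Lf) := hLt2.differentiable (by norm_num)
  have dV : Differentiable ℝ Vf := hV.differentiable (by norm_num)
  have dVt : Differentiable ℝ (Dt Vf) := hVt1.differentiable one_ne_zero
  have dVx : ∀ i, Differentiable ℝ (Dx i Vf) := fun i => (hVx1 i).differentiable one_ne_zero
  -- expansions
  have E1 : ∀ i j, Dx j (fun q => Bff i j q * Dx i Vf q) p
      = Dx j (Bff i j) p * Dx i Vf p + Bff i j p * Dx j (Dx i Vf) p :=
    fun i j => Dx_mul j (dB i j p) (dVx i p)
  have E2 : ∀ i j, Dx j (fun q => Bff i j q * Dt Lf q * Dx i Vf q * Dt Vf q) p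
      = (Dt Lf p * Dt Vf p) * (Dx j (Bff i j) p * Dx i Vf p)
        + Dt Vf p * (Bff i j p * Dx j (Dt Lf) p * Dx i Vf p)
        + (Dt Lf p * Dt Vf p) * (Bff i j p * Dx j (Dx i Vf) p)
        + Dt Lf p * (Bff i j p * Dx i Vf p * Dx j (Dt Vf) p) := by
    intro i j
    rw [Dx_mul j (((dB i j p).fun_mul (dLt p)).fun_mul (dVx i p)) (dVt p),
        Dx_mul j ((dB i j p).fun_mul (dLt p)) (dVx i p),
        Dx_mul j (dB i j p) (dLt p)]
    ring
  have E2' : ∀ i j, Bff i j p * Dx j (Dt Lf) p * Dx i Vf p * Dt Vf p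
      = Dt Vf p * (Bff i j p * Dx j (Dt Lf) p * Dx i Vf p) := fun i j => by ring
  have E3 : ∀ i j, Dt (fun q => Bff i j q * Dt Lf q) p * Dx i Vf p * Dx j Vf p
      = Dt Lf p * (Dt (Bff i j) p * Dx i Vf p * Dx j Vf p)
        + Dt (Dt Lf) p * (Bff i j p * Dx i Vf p * Dx j Vf p) := by
    intro i j
    rw [Dt_mul (dB i j p) (dLt p)]
    ring
  have E5 : ∀ i j, Dt (fun q => Bff i j q * Dt Lf q * Dx i Vf q * Dx j Vf q) p
      = Dt Lf p * (Dt (Bff i j) p * Dx i Vf p * Dx j Vf p)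
        + Dt (Dt Lf) p * (Bff i j p * Dx i Vf p * Dx j Vf p)
        + Dt Lf p * (Bff i j p * Dx i (Dt Vf) p * Dx j Vf p)
        + Dt Lf p * (Bff i j p * Dx i Vf p * Dx j (Dt Vf) p) := by
    intro i j
    rw [Dt_mul (((dB i j p).fun_mul (dLt p)).fun_mul (dVx i p)) (dVx j p),
        Dt_mul ((dB i j p).fun_mul (dLt p)) (dVx i p),
        Dt_mul (dB i j p) (dLt p),
        Dt_Dx_swap hV i p, Dt_Dx_swap hV j p]
    ring
  have E4 : Dt (fun q =>
        (∑ i, ∑ j, Bff i j q * Dt Lf q * Dx i Vf q * Dx j Vf q)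
          + Af q * Dt Lf q * (Vf q) ^ 2) p
      = (∑ i, ∑ j, (Dt Lf p * (Dt (Bff i j) p * Dx i Vf p * Dx j Vf p)
          + Dt (Dt Lf) p * (Bff i j p * Dx i Vf p * Dx j Vf p)
          + Dt Lf p * (Bff i j p * Dx i (Dt Vf) p * Dx j Vf p)
          + Dt Lf p * (Bff i j p * Dx i Vf p * Dx j (Dt Vf) p)))
        + (Dt (fun q => Af q * Dt Lf q) p * (Vf p) ^ 2
            + (Af p * Dt Lf p) * (2 * Vf p * Dt Vf p)) := by
    have dQ : ∀ i j, DifferentiableAt ℝ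
        (fun q => Bff i j q * Dt Lf q * Dx i Vf q * Dx j Vf q) p :=
      fun i j => (((dB i j p).mul (dLt p)).mul (dVx i p)).mul (dVx j p)
    have dS : DifferentiableAt ℝ
        (fun q => ∑ i, ∑ j, Bff i j q * Dt Lf q * Dx i Vf q * Dx j Vf q) p :=
      DifferentiableAt.fun_sum fun i _ => DifferentiableAt.fun_sum fun j _ => dQ i j
    have dG : DifferentiableAt ℝ (fun q => Af q * Dt Lf q) p := (hA p).mul (dLt p)
    have dV2 : DifferentiableAt ℝ (fun q => (Vf q) ^ 2) p := (dV p).pow 2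
    rw [Dt_add dS (dG.fun_mul dV2), Dt_sum2 dQ, Dt_mul dG dV2, Dt_sq (dV p)]
    rw [Finset.sum_congr rfl fun i _ => Finset.sum_congr rfl fun j _ => E5 i j]
  -- rewrite everything
  simp only [E1, E2, E2', E3]
  rw [E4]
  -- split the sums and pull out constants
  simp only [Finset.sum_add_distrib, ← Finset.mul_sum]
  -- symmetry swap
  have hswap : (∑ i, ∑ j, Bff i j p * Dx i (Dt Vf) p * Dx j Vf p)
      = ∑ i, ∑ j, Bff i j p * Dx i Vf p * Dx j (Dt Vf) p := by
    rw [Finset.sum_comm]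
    refine Finset.sum_congr rfl fun i _ => Finset.sum_congr rfl fun j _ => ?_
    rw [hsym j i]; ring
  rw [hswap]
  ring

end Key

/-- Identity (2.7) of the paper:
`−2ℓ_t v_t [−Σ ∂_{x_j}(b^{ij}v_i) + Av] = 2[Σ ∂_{x_j}(b^{ij}ℓ_t v_i v_t) − Σ b^{ij}ℓ_{tj} v_i v_t]
+ Σ ∂_t(b^{ij}ℓ_t) v_i v_j − ∂_t(Σ b^{ij}ℓ_t v_i v_j + Aℓ_t v²) + ∂_t(Aℓ_t) v²`. -/
theorem stmt_4 {n : ℕ} (hn : 1 ≤ n)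
    (b : Fin n → Fin n → ℝ → (Fin n → ℝ) → ℝ)
    (ℓ Ψ u : ℝ → (Fin n → ℝ) → ℝ)
    (hb : ∀ i j, ContDiff ℝ 2 (fun p : ℝ × (Fin n → ℝ) => b i j p.1 p.2))
    (hbsym : ∀ i j, b i j = b j i)
    (hℓ : ContDiff ℝ 3 (fun p : ℝ × (Fin n → ℝ) => ℓ p.1 p.2))
    (hΨ : ContDiff ℝ 2 (fun p : ℝ × (Fin n → ℝ) => Ψ p.1 p.2))
    (hu : ContDiff ℝ 2 (fun p : ℝ × (Fin n → ℝ) => u p.1 p.2))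
    (θ v A : ℝ → (Fin n → ℝ) → ℝ)
    (hθ : θ = fun t x => Real.exp (ℓ t x))
    (hv : v = fun t x => θ t x * u t x)
    (hA : A = fun s y =>
      ((ptd ℓ s y) ^ 2 - ptd (ptd ℓ) s y)
        - (∑ i, ∑ j, (b i j s y * pxd ℓ i s y * pxd ℓ j s y
            - pxd (b i j) j s y * pxd ℓ i s y
            - b i j s y * pxd (pxd ℓ i) j s y))
        - Ψ s y)
    (t : ℝ) (x : Fin n → ℝ) :
    -2 * ptd ℓ t x * ptd v t x *
        (-(∑ i, ∑ j, pxd (fun s y => b i j s y * pxd v i s y) j t x) + A t x * v t x)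
      = 2 * ((∑ i, ∑ j,
              pxd (fun s y => b i j s y * ptd ℓ s y * pxd v i s y * ptd v s y) j t x)
            - ∑ i, ∑ j, b i j t x * pxd (ptd ℓ) j t x * pxd v i t x * ptd v t x)
        + (∑ i, ∑ j, ptd (fun s y => b i j s y * ptd ℓ s y) t x
            * pxd v i t x * pxd v j t x)
        - ptd (fun s y =>
            (∑ i, ∑ j, b i j s y * ptd ℓ s y * pxd v i s y * pxd v j s y)
              + A s y * ptd ℓ s y * (v s y) ^ 2) t x
        + ptd (fun s y => A s y * ptd ℓ s y) t x * (v t x) ^ 2 := by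
  set Lf : (ℝ × (Fin n → ℝ)) → ℝ := fun q => ℓ q.1 q.2 with hLf
  set Bfn : Fin n → Fin n → (ℝ × (Fin n → ℝ)) → ℝ := fun i j q => b i j q.1 q.2 with hBfn
  set Vf : (ℝ × (Fin n → ℝ)) → ℝ := fun q => Real.exp (ℓ q.1 q.2) * u q.1 q.2 with hVf
  -- smoothness
  have hBc : ∀ i j, ContDiff ℝ 2 (Bfn i j) := fun i j => hb i j
  have hLc : ContDiff ℝ 3 Lf := hℓ
  have hVc : ContDiff ℝ 2 Vf := ((hℓ.of_le (by norm_num)).exp).mul hu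
  have hLt2 : ContDiff ℝ 2 (Dt Lf) := Dt_contDiff (hLc.of_le (by norm_num))
  have hLx2 : ∀ i, ContDiff ℝ 2 (Dx i Lf) := fun i => Dx_contDiff i (hLc.of_le (by norm_num))
  have dL : Differentiable ℝ Lf := hLc.differentiable (by norm_num)
  have dV : Differentiable ℝ Vf := hVc.differentiable (by norm_num)
  have dB : ∀ i j, Differentiable ℝ (Bfn i j) := fun i j => (hBc i j).differentiable (by norm_num)
  have dLt : Differentiable ℝ (Dt Lf) := hLt2.differentiable (by norm_num)
  have dLx : ∀ i, Differentiable ℝ (Dx i Lf) := fun i => (hLx2 i).differentiable (by norm_num)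
  have dLtt : Differentiable ℝ (Dt (Dt Lf)) :=
    (Dt_contDiff (k := 1) (hLt2.of_le (by norm_num))).differentiable one_ne_zero
  have dLxx : ∀ i j, Differentiable ℝ (Dx j (Dx i Lf)) := fun i j =>
    (Dx_contDiff (k := 1) j ((hLx2 i).of_le (by norm_num))).differentiable one_ne_zero
  have dBx : ∀ i j, Differentiable ℝ (Dx j (Bfn i j)) := fun i j =>
    (Dx_contDiff (k := 1) j ((hBc i j).of_le (by norm_num))).differentiable one_ne_zero
  have dVt : Differentiable ℝ (Dt Vf) :=
    (Dt_contDiff (k := 1) (hVc.of_le (by norm_num))).differentiable one_ne_zero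
  have dVx : ∀ i, Differentiable ℝ (Dx i Vf) := fun i =>
    (Dx_contDiff (k := 1) i (hVc.of_le (by norm_num))).differentiable one_ne_zero
  -- pointwise identifications
  have e1 : ∀ s y, ptd ℓ s y = Dt Lf (s, y) := fun s y =>
    ptd_eqD ℓ Lf (fun _ _ => rfl) (dL _)
  have e2 : ∀ i s y, pxd ℓ i s y = Dx i Lf (s, y) := fun i s y =>
    pxd_eqD ℓ Lf (fun _ _ => rfl) i (dL _)
  have hvV : ∀ s y, v s y = Vf (s, y) := by intro s y; simp only [hv, hθ, hVf]
  have e3 : ∀ s y, ptd v s y = Dt Vf (s, y) := fun s y => ptd_eqD v Vf hvV (dV _)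
  have e4 : ∀ i s y, pxd v i s y = Dx i Vf (s, y) := fun i s y => pxd_eqD v Vf hvV i (dV _)
  have e5 : ∀ s y, ptd (ptd ℓ) s y = Dt (Dt Lf) (s, y) := fun s y =>
    ptd_eqD (ptd ℓ) (Dt Lf) e1 (dLt _)
  have e6 : ∀ j s y, pxd (ptd ℓ) j s y = Dx j (Dt Lf) (s, y) := fun j s y =>
    pxd_eqD (ptd ℓ) (Dt Lf) e1 j (dLt _)
  have e7 : ∀ i j s y, pxd (pxd ℓ i) j s y = Dx j (Dx i Lf) (s, y) := fun i j s y =>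
    pxd_eqD (pxd ℓ i) (Dx i Lf) (e2 i) j (dLx i _)
  have e9 : ∀ i j s y, pxd (b i j) j s y = Dx j (Bfn i j) (s, y) := fun i j s y =>
    pxd_eqD (b i j) (Bfn i j) (fun _ _ => rfl) j (dB i j _)
  set Af : (ℝ × (Fin n → ℝ)) → ℝ := fun q =>
    ((Dt Lf q) ^ 2 - Dt (Dt Lf) q)
      - (∑ i, ∑ j, (Bfn i j q * Dx i Lf q * Dx j Lf q
          - Dx j (Bfn i j) q * Dx i Lf q
          - Bfn i j q * Dx j (Dx i Lf) q))
      - Ψ q.1 q.2 with hAf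
  have eA : ∀ s y, A s y = Af (s, y) := by
    intro s y
    rw [hA, hAf]
    simp only [e1, e5, e2, e9, e7]; rfl
  have dA : Differentiable ℝ Af := by
    rw [hAf]
    intro q
    refine DifferentiableAt.sub (DifferentiableAt.sub (DifferentiableAt.sub ?_ ?_) ?_) ?_
    · exact (dLt q).pow 2
    · exact dLtt q
    · refine DifferentiableAt.fun_sum fun i _ => DifferentiableAt.fun_sum fun j _ => ?_
      exact (((((dB i j q).mul (dLx i q)).mul (dLx j q)).sub
        ((dBx i j q).mul (dLx i q))).sub ((dB i j q).mul (dLxx i j q)))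
    · exact (hΨ.differentiable (by norm_num)) q
  -- differentiability of composite integrands
  have dq1 : ∀ i j, DifferentiableAt ℝ (fun q => Bfn i j q * Dx i Vf q) (t, x) :=
    fun i j => (dB i j _).mul (dVx i _)
  have dq2 : ∀ i j, DifferentiableAt ℝ
      (fun q => Bfn i j q * Dt Lf q * Dx i Vf q * Dt Vf q) (t, x) :=
    fun i j => (((dB i j _).mul (dLt _)).mul (dVx i _)).mul (dVt _)
  have dq3 : ∀ i j, DifferentiableAt ℝ (fun q => Bfn i j q * Dt Lf q) (t, x) :=
    fun i j => (dB i j _).mul (dLt _)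
  have dq4 : DifferentiableAt ℝ (fun q =>
      (∑ i, ∑ j, Bfn i j q * Dt Lf q * Dx i Vf q * Dx j Vf q)
        + Af q * Dt Lf q * (Vf q) ^ 2) (t, x) := by
    refine DifferentiableAt.add ?_ ?_
    · exact DifferentiableAt.fun_sum fun i _ => DifferentiableAt.fun_sum fun j _ =>
        (((dB i j _).mul (dLt _)).mul (dVx i _)).mul (dVx j _)
    · exact ((dA _).mul (dLt _)).mul ((dV _).pow 2)
  have dq5 : DifferentiableAt ℝ (fun q => Af q * Dt Lf q) (t, x) := (dA _).mul (dLt _)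
  -- composite conversions
  have E1 : ∀ i j, pxd (fun s y => b i j s y * pxd v i s y) j t x
      = Dx j (fun q => Bfn i j q * Dx i Vf q) (t, x) := fun i j =>
    pxd_eqD _ _ (fun s y => by rw [e4]) j (dq1 i j)
  have E2 : ∀ i j, pxd (fun s y => b i j s y * ptd ℓ s y * pxd v i s y * ptd v s y) j t x
      = Dx j (fun q => Bfn i j q * Dt Lf q * Dx i Vf q * Dt Vf q) (t, x) := fun i j =>
    pxd_eqD _ _ (fun s y => by rw [e1, e4, e3]) j (dq2 i j)
  have E3 : ∀ i j, ptd (fun s y => b i j s y * ptd ℓ s y) t x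
      = Dt (fun q => Bfn i j q * Dt Lf q) (t, x) := fun i j =>
    ptd_eqD _ _ (fun s y => by rw [e1]) (dq3 i j)
  have E4 : ptd (fun s y =>
        (∑ i, ∑ j, b i j s y * ptd ℓ s y * pxd v i s y * pxd v j s y)
          + A s y * ptd ℓ s y * (v s y) ^ 2) t x
      = Dt (fun q =>
        (∑ i, ∑ j, Bfn i j q * Dt Lf q * Dx i Vf q * Dx j Vf q)
          + Af q * Dt Lf q * (Vf q) ^ 2) (t, x) :=
    ptd_eqD _ _ (fun s y => by simp only [e1, e4, eA, hvV]; rfl) dq4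
  have E5 : ptd (fun s y => A s y * ptd ℓ s y) t x
      = Dt (fun q => Af q * Dt Lf q) (t, x) :=
    ptd_eqD _ _ (fun s y => by rw [eA, e1]) dq5
  simp only [E1, E2, E3]
  rw [E4, E5]
  simp only [e1, e3, e4, e6, eA, hvV]
  exact key_identity Bfn Lf Vf Af hBc hLc hVc dA (t, x)
    (fun i j => by show b i j t x = b j i t x; rw [hbsym i j])
end

section
/- At every point (t,x) ∈ ℝ×ℝⁿ one has 2 Σ_{i,j} b^{ij} ℓ_i v_j · [ −Σ_{i,j} ∂_{x_j}(b^{ij} v_i) + A v ] = − Σ_{i,j} ∂_{x_j}[ Σ_{i',j'}( 2 b^{ij} b^{i'j'} ℓ_{i'} v_i v_{j'} − b^{ij} b^{i'j'} ℓ_i v_{i'} v_{j'} ) − A b^{ij} ℓ_i v² ] + Σ_{i,j} Σ_{i',j'} [ 2 b^{ij'} ∂_{x_{j'}}(b^{i'j} ℓ_{i'}) − ∂_{x_{j'}}(b^{ij} b^{i'j'} ℓ_{i'}) ] v_i v_j − Σ_{i,j} ∂_{x_j}(A b^{ij} ℓ_i) v², where A = (ℓ_t² − ℓ_tt) − Σ_{i,j}(b^{ij}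 ℓ_i ℓ_j − b^{ij}_j ℓ_i − b^{ij} ℓ_{ij}) − Ψ. (Identity (2.8) of the paper, which uses the symmetry b^{ij} = b^{ji}.) -/
open scoped BigOperators

namespace Stmt5

variable {n : ℕ}

abbrev unc (h : ℝ → (Fin n → ℝ) → ℝ) : ℝ × (Fin n → ℝ) → ℝ := fun p => h p.1 p.2

lemma slice_hasDerivAt_fderiv (h : ℝ → (Fin n → ℝ) → ℝ) (i : Fin n) (t : ℝ) (x : Fin n → ℝ)
    (y₀ : ℝ) (hh : DifferentiableAt ℝ (unc h) (t, Function.update x i y₀)) :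
    HasDerivAt (fun y => h t (Function.update x i y))
      (fderiv ℝ (unc h) (t, Function.update x i y₀) (0, Pi.single i 1)) y₀ := by
  have hc : HasDerivAt (fun y : ℝ => ((t, Function.update x i y) : ℝ × (Fin n → ℝ)))
      ((0 : ℝ), Pi.single i (1:ℝ)) y₀ :=
    (hasDerivAt_const y₀ t).prodMk (hasDerivAt_update x i y₀)
  exact hh.hasFDerivAt.comp_hasDerivAt y₀ hc

lemma pxd_eq_fderiv (h : ℝ → (Fin n → ℝ) → ℝ) (i : Fin n) (t : ℝ) (x : Fin n → ℝ)
    (hh : DifferentiableAt ℝ (unc h) (t, x)) :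
    pxd h i t x = fderiv ℝ (unc h) (t, x) (0, Pi.single i 1) := by
  have h1 : Function.update x i (x i) = x := Function.update_eq_self i x
  have H := slice_hasDerivAt_fderiv h i t x (x i) (by rwa [h1])
  rw [h1] at H
  exact H.deriv

lemma hasDerivAt_slice (h : ℝ → (Fin n → ℝ) → ℝ) (i : Fin n) (t : ℝ) (x : Fin n → ℝ)
    (hh : DifferentiableAt ℝ (unc h) (t, x)) :
    HasDerivAt (fun y => h t (Function.update x i y)) (pxd h i t x) (x i) := by
  have h1 : Function.update x i (x i) = x := Function.update_eq_self i x
  have H := slice_hasDerivAt_fderiv h i t x (x i) (by rwa [h1])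
  rw [h1] at H
  rwa [pxd_eq_fderiv h i t x hh]

lemma contDiff_pxd {m : ℕ} (h : ℝ → (Fin n → ℝ) → ℝ) (i : Fin n)
    (hh : ContDiff ℝ (m + 1 : ℕ) (unc h)) : ContDiff ℝ (m : ℕ) (unc (pxd h i)) := by
  have hd : Differentiable ℝ (unc h) := hh.differentiable (by simp)
  have he : unc (pxd h i) = fun p => fderiv ℝ (unc h) p (0, Pi.single i 1) := by
    funext p
    exact pxd_eq_fderiv h i p.1 p.2 (hd (p.1, p.2))
  rw [he]
  exact (hh.fderiv_right (by exact_mod_cast le_refl (m+1))).clm_apply contDiff_const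

lemma ptd_eq_fderiv (h : ℝ → (Fin n → ℝ) → ℝ) (t : ℝ) (x : Fin n → ℝ)
    (hh : DifferentiableAt ℝ (unc h) (t, x)) :
    ptd h t x = fderiv ℝ (unc h) (t, x) ((1:ℝ), (0 : Fin n → ℝ)) := by
  have hc : HasDerivAt (fun s : ℝ => ((s, x) : ℝ × (Fin n → ℝ))) ((1:ℝ), (0 : Fin n → ℝ)) t :=
    (hasDerivAt_id t).prodMk (hasDerivAt_const t x)
  exact (hh.hasFDerivAt.comp_hasDerivAt t hc).deriv

lemma contDiff_ptd {m : ℕ} (h : ℝ → (Fin n → ℝ) → ℝ)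
    (hh : ContDiff ℝ (m + 1 : ℕ) (unc h)) : ContDiff ℝ (m : ℕ) (unc (ptd h)) := by
  have hd : Differentiable ℝ (unc h) := hh.differentiable (by simp)
  have he : unc (ptd h) = fun p => fderiv ℝ (unc h) p ((1:ℝ), (0 : Fin n → ℝ)) := by
    funext p
    exact ptd_eq_fderiv h p.1 p.2 (hd (p.1, p.2))
  rw [he]
  exact (hh.fderiv_right (by exact_mod_cast le_refl (m+1))).clm_apply contDiff_const

lemma pxd_comm (h : ℝ → (Fin n → ℝ) → ℝ) (hh : ContDiff ℝ 2 (unc h)) (i j : Fin n)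
    (t : ℝ) (x : Fin n → ℝ) :
    pxd (pxd h i) j t x = pxd (pxd h j) i t x := by
  have hd : Differentiable ℝ (unc h) := hh.differentiable two_ne_zero
  have hfd : ContDiff ℝ 1 (fderiv ℝ (unc h)) := hh.fderiv_right (by norm_num)
  have key : ∀ k l : Fin n, pxd (pxd h k) l t x =
      fderiv ℝ (fderiv ℝ (unc h)) (t, x) (0, Pi.single l 1) (0, Pi.single k 1) := by
    intro k l
    have h1 : ContDiff ℝ (1:ℕ) (unc (pxd h k)) := contDiff_pxd h k (by exact_mod_cast hh)
    rw [pxd_eq_fderiv (pxd h k) l t x ((h1.differentiable one_ne_zero) (t, x))]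
    have he : unc (pxd h k) = fun p => fderiv ℝ (unc h) p (0, Pi.single k 1) := by
      funext p; exact pxd_eq_fderiv h k p.1 p.2 (hd (p.1, p.2))
    rw [he, fderiv_clm_apply ((hfd.differentiable one_ne_zero) (t,x)) (differentiableAt_const _)]
    simp
  rw [key i j, key j i]
  have hsym := (hh.contDiffAt (x := ((t,x) : ℝ × (Fin n → ℝ)))).isSymmSndFDerivAt (by norm_num)
  exact hsym.eq _ _


lemma sum2_to_prod {α β : Type*} [Fintype α] [Fintype β] (f : α → β → ℝ) :
    (∑ i, ∑ j, f i j) = ∑ q : α × β, f q.1 q.2 := by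
  rw [← Finset.sum_product', Finset.univ_product_univ]

lemma sum4_to_prod {α β γ δ : Type*} [Fintype α] [Fintype β] [Fintype γ] [Fintype δ]
    (f : α → β → γ → δ → ℝ) :
    (∑ i, ∑ j, ∑ k, ∑ l, f i j k l)
      = ∑ p : (α × β) × (γ × δ), f p.1.1 p.1.2 p.2.1 p.2.2 :=
  calc (∑ i, ∑ j, ∑ k, ∑ l, f i j k l)
      = ∑ q : α × β, ∑ k, ∑ l, f q.1 q.2 k l := sum2_to_prod _
    _ = ∑ q : α × β, ∑ r : γ × δ, f q.1 q.2 r.1 r.2 :=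
        Finset.sum_congr rfl fun q _ => sum2_to_prod _
    _ = ∑ p : (α × β) × (γ × δ), f p.1.1 p.1.2 p.2.1 p.2.2 := sum2_to_prod _

lemma sum2_sub {α β : Type*} [Fintype α] [Fintype β] (f g : α → β → ℝ) :
    (∑ i, ∑ j, (f i j - g i j)) = (∑ i, ∑ j, f i j) - ∑ i, ∑ j, g i j := by
  simp [Finset.sum_sub_distrib]

lemma sum2_add {α β : Type*} [Fintype α] [Fintype β] (f g : α → β → ℝ) :
    (∑ i, ∑ j, (f i j + g i j)) = (∑ i, ∑ j, f i j) + ∑ i, ∑ j, g i j := by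
  simp [Finset.sum_add_distrib]

lemma sum2_mul {α β : Type*} [Fintype α] [Fintype β] (f : α → β → ℝ) (c : ℝ) :
    (∑ i, ∑ j, f i j) * c = ∑ i, ∑ j, f i j * c := by
  simp [Finset.sum_mul]

lemma mul_sum2 {α β : Type*} [Fintype α] [Fintype β] (c : ℝ) (f : α → β → ℝ) :
    c * (∑ i, ∑ j, f i j) = ∑ i, ∑ j, c * f i j := by
  simp [Finset.mul_sum]

lemma sum2_congr {α β : Type*} [Fintype α] [Fintype β] (f g : α → β → ℝ)
    (h : ∀ i j, f i j = g i j) : (∑ i, ∑ j, f i j) = ∑ i, ∑ j, g i j :=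
  Finset.sum_congr rfl fun i _ => Finset.sum_congr rfl fun j _ => h i j

def eSwap (α : Type*) : (α × α) × (α × α) ≃ (α × α) × (α × α) := Equiv.prodComm _ _

def eJJ (α : Type*) : (α × α) × (α × α) ≃ (α × α) × (α × α) :=
  ⟨fun p => ((p.1.1, p.2.2), (p.2.1, p.1.2)), fun p => ((p.1.1, p.2.2), (p.2.1, p.1.2)),
    fun _ => rfl, fun _ => rfl⟩

def eI (α : Type*) : (α × α) × (α × α) ≃ (α × α) × (α × α) :=
  ⟨fun p => (p.1, (p.2.2, p.2.1)), fun p => (p.1, (p.2.2, p.2.1)), fun _ => rfl, fun _ => rfl⟩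

def eCinv (α : Type*) : (α × α) × (α × α) ≃ (α × α) × (α × α) :=
  ⟨fun p => (p.2, (p.1.2, p.1.1)), fun p => ((p.2.2, p.2.1), p.1), fun _ => rfl, fun _ => rfl⟩

/-- The purely algebraic core identity. -/
lemma key_algebra (Bv : Fin n → Fin n → ℝ) (dBv : Fin n → Fin n → Fin n → ℝ)
    (Lv : Fin n → ℝ) (dLv : Fin n → Fin n → ℝ) (Vxv dAv : Fin n → ℝ)
    (Vxxv : Fin n → Fin n → ℝ) (Vv Av : ℝ)
    (hBs : ∀ i j, Bv i j = Bv j i) (hVs : ∀ i j, Vxxv i j = Vxxv j i) :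
    2 * (∑ i, ∑ j, Bv i j * Lv i * Vxv j) *
        (-(∑ i, ∑ j, (dBv i j j * Vxv i + Bv i j * Vxxv i j)) + Av * Vv)
      = -(∑ i, ∑ j,
            ((∑ i', ∑ j',
              (2 * dBv i j j * Bv i' j' * Lv i' * Vxv i * Vxv j'
                + 2 * Bv i j * dBv i' j' j * Lv i' * Vxv i * Vxv j'
                + 2 * Bv i j * Bv i' j' * dLv i' j * Vxv i * Vxv j'
                + 2 * Bv i j * Bv i' j' * Lv i' * Vxxv i j * Vxv j'
                + 2 * Bv i j * Bv i' j' * Lv i' * Vxv i * Vxxv j' j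
                - (dBv i j j * Bv i' j' * Lv i * Vxv i' * Vxv j'
                  + Bv i j * dBv i' j' j * Lv i * Vxv i' * Vxv j'
                  + Bv i j * Bv i' j' * dLv i j * Vxv i' * Vxv j'
                  + Bv i j * Bv i' j' * Lv i * Vxxv i' j * Vxv j'
                  + Bv i j * Bv i' j' * Lv i * Vxv i' * Vxxv j' j)))
              - (dAv j * Bv i j * Lv i * Vv ^ 2
                + Av * dBv i j j * Lv i * Vv ^ 2
                + Av * Bv i j * dLv i j * Vv ^ 2
                + 2 * Av * Bv i j * Lv i * Vv * Vxv j)))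
        + (∑ i, ∑ j, (∑ i', ∑ j',
            (2 * Bv i j' * (dBv i' j j' * Lv i' + Bv i' j * dLv i' j')
              - (dBv i j j' * Bv i' j' * Lv i'
                + Bv i j * dBv i' j' j' * Lv i'
                + Bv i j * Bv i' j' * dLv i' j')))
            * Vxv i * Vxv j)
        - (∑ i, ∑ j, (dAv j * Bv i j * Lv i + Av * dBv i j j * Lv i + Av * Bv i j * dLv i j))
            * Vv ^ 2 := by
  have hY : (∑ i, ∑ j, ((∑ i', ∑ j',
      (2 * dBv i j j * Bv i' j' * Lv i' * Vxv i * Vxv j'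
    + 2 * Bv i j * dBv i' j' j * Lv i' * Vxv i * Vxv j'
    + 2 * Bv i j * Bv i' j' * dLv i' j * Vxv i * Vxv j'
    + 2 * Bv i j * Bv i' j' * Lv i' * Vxxv i j * Vxv j'
    + 2 * Bv i j * Bv i' j' * Lv i' * Vxv i * Vxxv j' j
    - (dBv i j j * Bv i' j' * Lv i * Vxv i' * Vxv j'
      + Bv i j * dBv i' j' j * Lv i * Vxv i' * Vxv j'
      + Bv i j * Bv i' j' * dLv i j * Vxv i' * Vxv j'
      + Bv i j * Bv i' j' * Lv i * Vxxv i' j * Vxv j'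
      + Bv i j * Bv i' j' * Lv i * Vxv i' * Vxxv j' j)))
      - (dAv j * Bv i j * Lv i * Vv ^ 2 + Av * dBv i j j * Lv i * Vv ^ 2
    + Av * Bv i j * dLv i j * Vv ^ 2 + 2 * Av * Bv i j * Lv i * Vv * Vxv j)))
      = (∑ i, ∑ j, ∑ i', ∑ j',
      (2 * dBv i j j * Bv i' j' * Lv i' * Vxv i * Vxv j'
    + 2 * Bv i j * dBv i' j' j * Lv i' * Vxv i * Vxv j'
    + 2 * Bv i j * Bv i' j' * dLv i' j * Vxv i * Vxv j'
    + 2 * Bv i j * Bv i' j' * Lv i' * Vxxv i j * Vxv j'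
    + 2 * Bv i j * Bv i' j' * Lv i' * Vxv i * Vxxv j' j
    - (dBv i j j * Bv i' j' * Lv i * Vxv i' * Vxv j'
      + Bv i j * dBv i' j' j * Lv i * Vxv i' * Vxv j'
      + Bv i j * Bv i' j' * dLv i j * Vxv i' * Vxv j'
      + Bv i j * Bv i' j' * Lv i * Vxxv i' j * Vxv j'
      + Bv i j * Bv i' j' * Lv i * Vxv i' * Vxxv j' j)))
      - (∑ i, ∑ j, (dAv j * Bv i j * Lv i * Vv ^ 2 + Av * dBv i j j * Lv i * Vv ^ 2
    + Av * Bv i j * dLv i j * Vv ^ 2 + 2 * Av * Bv i j * Lv i * Vv * Vxv j)) := sum2_sub _ _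
  have hP1 : (∑ i, ∑ j, (dAv j * Bv i j * Lv i + Av * dBv i j j * Lv i + Av * Bv i j * dLv i j)) * Vv ^ 2
      = ∑ i, ∑ j, (dAv j * Bv i j * Lv i + Av * dBv i j j * Lv i + Av * Bv i j * dLv i j) * Vv ^ 2 := sum2_mul _ _
  have hP2 : 2 * Av * Vv * (∑ i, ∑ j, Bv i j * Lv i * Vxv j)
      = ∑ i, ∑ j, 2 * Av * Vv * (Bv i j * Lv i * Vxv j) := mul_sum2 _ _
  have hP3 : (∑ i, ∑ j, (dAv j * Bv i j * Lv i * Vv ^ 2 + Av * dBv i j j * Lv i * Vv ^ 2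
    + Av * Bv i j * dLv i j * Vv ^ 2 + 2 * Av * Bv i j * Lv i * Vv * Vxv j))
      = (∑ i, ∑ j, (dAv j * Bv i j * Lv i + Av * dBv i j j * Lv i + Av * Bv i j * dLv i j) * Vv ^ 2) + ∑ i, ∑ j, 2 * Av * Vv * (Bv i j * Lv i * Vxv j) := by
    calc (∑ i, ∑ j, (dAv j * Bv i j * Lv i * Vv ^ 2 + Av * dBv i j j * Lv i * Vv ^ 2
    + Av * Bv i j * dLv i j * Vv ^ 2 + 2 * Av * Bv i j * Lv i * Vv * Vxv j))
        = ∑ i, ∑ j, ((dAv j * Bv i j * Lv i + Av * dBv i j j * Lv i + Av * Bv i j * dLv i j) * Vv ^ 2 + 2 * Av * Vv * (Bv i j * Lv i * Vxv j)) :=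
          sum2_congr _ _ (fun i j => by ring)
      _ = _ := sum2_add _ _
  have hT1 : (∑ i, ∑ j, ∑ i', ∑ j',
      (2 * dBv i j j * Bv i' j' * Lv i' * Vxv i * Vxv j'
    + 2 * Bv i j * dBv i' j' j * Lv i' * Vxv i * Vxv j'
    + 2 * Bv i j * Bv i' j' * dLv i' j * Vxv i * Vxv j'
    + 2 * Bv i j * Bv i' j' * Lv i' * Vxxv i j * Vxv j'
    + 2 * Bv i j * Bv i' j' * Lv i' * Vxv i * Vxxv j' j
    - (dBv i j j * Bv i' j' * Lv i * Vxv i' * Vxv j'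
      + Bv i j * dBv i' j' j * Lv i * Vxv i' * Vxv j'
      + Bv i j * Bv i' j' * dLv i j * Vxv i' * Vxv j'
      + Bv i j * Bv i' j' * Lv i * Vxxv i' j * Vxv j'
      + Bv i j * Bv i' j' * Lv i * Vxv i' * Vxxv j' j)))
      = ∑ p : (Fin n × Fin n) × (Fin n × Fin n),
      (2 * dBv p.1.1 p.1.2 p.1.2 * Bv p.2.1 p.2.2 * Lv p.2.1 * Vxv p.1.1 * Vxv p.2.2
    + 2 * Bv p.1.1 p.1.2 * dBv p.2.1 p.2.2 p.1.2 * Lv p.2.1 * Vxv p.1.1 * Vxv p.2.2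
    + 2 * Bv p.1.1 p.1.2 * Bv p.2.1 p.2.2 * dLv p.2.1 p.1.2 * Vxv p.1.1 * Vxv p.2.2
    + 2 * Bv p.1.1 p.1.2 * Bv p.2.1 p.2.2 * Lv p.2.1 * Vxxv p.1.1 p.1.2 * Vxv p.2.2
    + 2 * Bv p.1.1 p.1.2 * Bv p.2.1 p.2.2 * Lv p.2.1 * Vxv p.1.1 * Vxxv p.2.2 p.1.2
    - (dBv p.1.1 p.1.2 p.1.2 * Bv p.2.1 p.2.2 * Lv p.1.1 * Vxv p.2.1 * Vxv p.2.2
      + Bv p.1.1 p.1.2 * dBv p.2.1 p.2.2 p.1.2 * Lv p.1.1 * Vxv p.2.1 * Vxv p.2.2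
      + Bv p.1.1 p.1.2 * Bv p.2.1 p.2.2 * dLv p.1.1 p.1.2 * Vxv p.2.1 * Vxv p.2.2
      + Bv p.1.1 p.1.2 * Bv p.2.1 p.2.2 * Lv p.1.1 * Vxxv p.2.1 p.1.2 * Vxv p.2.2
      + Bv p.1.1 p.1.2 * Bv p.2.1 p.2.2 * Lv p.1.1 * Vxv p.2.1 * Vxxv p.2.2 p.1.2)) := sum4_to_prod _
  have hT2i : ∀ i j : Fin n, (∑ i', ∑ j',
      (2 * Bv i j' * (dBv i' j j' * Lv i' + Bv i' j * dLv i' j')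
    - (dBv i j j' * Bv i' j' * Lv i'
      + Bv i j * dBv i' j' j' * Lv i'
      + Bv i j * Bv i' j' * dLv i' j'))) * Vxv i * Vxv j
      = ∑ i', ∑ j',
      (2 * Bv i j' * (dBv i' j j' * Lv i' + Bv i' j * dLv i' j')
    - (dBv i j j' * Bv i' j' * Lv i'
      + Bv i j * dBv i' j' j' * Lv i'
      + Bv i j * Bv i' j' * dLv i' j')) * Vxv i * Vxv j := by
    intro i j
    simp only [Finset.sum_mul]
  have hT2 : (∑ i, ∑ j, (∑ i', ∑ j',
      (2 * Bv i j' * (dBv i' j j' * Lv i' + Bv i' j * dLv i' j')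
    - (dBv i j j' * Bv i' j' * Lv i'
      + Bv i j * dBv i' j' j' * Lv i'
      + Bv i j * Bv i' j' * dLv i' j'))) * Vxv i * Vxv j)
      = ∑ p : (Fin n × Fin n) × (Fin n × Fin n),
      (2 * Bv p.1.1 p.2.2 * (dBv p.2.1 p.1.2 p.2.2 * Lv p.2.1 + Bv p.2.1 p.1.2 * dLv p.2.1 p.2.2)
    - (dBv p.1.1 p.1.2 p.2.2 * Bv p.2.1 p.2.2 * Lv p.2.1
      + Bv p.1.1 p.1.2 * dBv p.2.1 p.2.2 p.2.2 * Lv p.2.1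
      + Bv p.1.1 p.1.2 * Bv p.2.1 p.2.2 * dLv p.2.1 p.2.2)) * Vxv p.1.1 * Vxv p.1.2 := by
    calc (∑ i, ∑ j, (∑ i', ∑ j',
      (2 * Bv i j' * (dBv i' j j' * Lv i' + Bv i' j * dLv i' j')
    - (dBv i j j' * Bv i' j' * Lv i'
      + Bv i j * dBv i' j' j' * Lv i'
      + Bv i j * Bv i' j' * dLv i' j'))) * Vxv i * Vxv j)
        = ∑ i, ∑ j, ∑ i', ∑ j',
      (2 * Bv i j' * (dBv i' j j' * Lv i' + Bv i' j * dLv i' j')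
    - (dBv i j j' * Bv i' j' * Lv i'
      + Bv i j * dBv i' j' j' * Lv i'
      + Bv i j * Bv i' j' * dLv i' j')) * Vxv i * Vxv j := sum2_congr _ _ hT2i
      _ = _ := sum4_to_prod _
  have w1 : (∑ i, ∑ j, Bv i j * Lv i * Vxv j) = ∑ q : Fin n × Fin n, Bv q.1 q.2 * Lv q.1 * Vxv q.2 := sum2_to_prod _
  have w2 : (∑ i, ∑ j, (dBv i j j * Vxv i + Bv i j * Vxxv i j)) = ∑ q : Fin n × Fin n, (dBv q.1 q.2 q.2 * Vxv q.1 + Bv q.1 q.2 * Vxxv q.1 q.2) := sum2_to_prod _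
  have w3 : (∑ q : Fin n × Fin n, Bv q.1 q.2 * Lv q.1 * Vxv q.2) * (∑ q : Fin n × Fin n, (dBv q.1 q.2 q.2 * Vxv q.1 + Bv q.1 q.2 * Vxxv q.1 q.2))
      = ∑ q : Fin n × Fin n, ∑ r : Fin n × Fin n, Bv q.1 q.2 * Lv q.1 * Vxv q.2 * (dBv r.1 r.2 r.2 * Vxv r.1 + Bv r.1 r.2 * Vxxv r.1 r.2) :=
    Finset.sum_mul_sum _ _ _ _
  have w4 : (∑ q : Fin n × Fin n, ∑ r : Fin n × Fin n, Bv q.1 q.2 * Lv q.1 * Vxv q.2 * (dBv r.1 r.2 r.2 * Vxv r.1 + Bv r.1 r.2 * Vxxv r.1 r.2))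
      = ∑ p : (Fin n × Fin n) × (Fin n × Fin n), Bv p.1.1 p.1.2 * Lv p.1.1 * Vxv p.1.2 * (dBv p.2.1 p.2.2 p.2.2 * Vxv p.2.1 + Bv p.2.1 p.2.2 * Vxxv p.2.1 p.2.2) := sum2_to_prod _
  have hW : (∑ i, ∑ j, Bv i j * Lv i * Vxv j) * (∑ i, ∑ j, (dBv i j j * Vxv i + Bv i j * Vxxv i j))
      = ∑ p : (Fin n × Fin n) × (Fin n × Fin n), Bv p.1.1 p.1.2 * Lv p.1.1 * Vxv p.1.2 * (dBv p.2.1 p.2.2 p.2.2 * Vxv p.2.1 + Bv p.2.1 p.2.2 * Vxxv p.2.1 p.2.2) := by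
    rw [w1, w2, w3, w4]
  have hg1 : (∑ p : (Fin n × Fin n) × (Fin n × Fin n), 2 * dBv p.1.1 p.1.2 p.1.2 * Bv p.2.1 p.2.2 * Lv p.2.1 * Vxv p.1.1 * Vxv p.2.2)
      + (∑ p : (Fin n × Fin n) × (Fin n × Fin n), -(2 * (Bv p.1.1 p.1.2 * Lv p.1.1 * Vxv p.1.2) * (dBv p.2.1 p.2.2 p.2.2 * Vxv p.2.1))) = 0 := by
    have h : (∑ p : (Fin n × Fin n) × (Fin n × Fin n), 2 * dBv p.1.1 p.1.2 p.1.2 * Bv p.2.1 p.2.2 * Lv p.2.1 * Vxv p.1.1 * Vxv p.2.2)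
        = ∑ p : (Fin n × Fin n) × (Fin n × Fin n), -(-(2 * (Bv p.1.1 p.1.2 * Lv p.1.1 * Vxv p.1.2) * (dBv p.2.1 p.2.2 p.2.2 * Vxv p.2.1))) :=
      Fintype.sum_equiv (eSwap (Fin n)) _ _ (by
        rintro ⟨⟨a, b⟩, ⟨c, d⟩⟩
        show 2 * dBv a b b * Bv c d * Lv c * Vxv a * Vxv d
          = -(-(2 * (Bv c d * Lv c * Vxv d) * (dBv a b b * Vxv a)))
        ring)
    have h2 : (∑ p : (Fin n × Fin n) × (Fin n × Fin n), -(-(2 * (Bv p.1.1 p.1.2 * Lv p.1.1 * Vxv p.1.2) * (dBv p.2.1 p.2.2 p.2.2 * Vxv p.2.1))))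
        = -∑ p : (Fin n × Fin n) × (Fin n × Fin n), -(2 * (Bv p.1.1 p.1.2 * Lv p.1.1 * Vxv p.1.2) * (dBv p.2.1 p.2.2 p.2.2 * Vxv p.2.1)) := Finset.sum_neg_distrib _
    linarith [h, h2]
  have hg2 : (∑ p : (Fin n × Fin n) × (Fin n × Fin n), 2 * Bv p.1.1 p.1.2 * dBv p.2.1 p.2.2 p.1.2 * Lv p.2.1 * Vxv p.1.1 * Vxv p.2.2)
      + (∑ p : (Fin n × Fin n) × (Fin n × Fin n), -(2 * Bv p.1.1 p.2.2 * dBv p.2.1 p.1.2 p.2.2 * Lv p.2.1 * Vxv p.1.1 * Vxv p.1.2)) = 0 := by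
    have h : (∑ p : (Fin n × Fin n) × (Fin n × Fin n), 2 * Bv p.1.1 p.1.2 * dBv p.2.1 p.2.2 p.1.2 * Lv p.2.1 * Vxv p.1.1 * Vxv p.2.2)
        = ∑ p : (Fin n × Fin n) × (Fin n × Fin n), -(-(2 * Bv p.1.1 p.2.2 * dBv p.2.1 p.1.2 p.2.2 * Lv p.2.1 * Vxv p.1.1 * Vxv p.1.2)) :=
      Fintype.sum_equiv (eJJ (Fin n)) _ _ (by
        rintro ⟨⟨a, b⟩, ⟨c, d⟩⟩
        show 2 * Bv a b * dBv c d b * Lv c * Vxv a * Vxv d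
          = -(-(2 * Bv a b * dBv c d b * Lv c * Vxv a * Vxv d))
        ring)
    have h2 : (∑ p : (Fin n × Fin n) × (Fin n × Fin n), -(-(2 * Bv p.1.1 p.2.2 * dBv p.2.1 p.1.2 p.2.2 * Lv p.2.1 * Vxv p.1.1 * Vxv p.1.2)))
        = -∑ p : (Fin n × Fin n) × (Fin n × Fin n), -(2 * Bv p.1.1 p.2.2 * dBv p.2.1 p.1.2 p.2.2 * Lv p.2.1 * Vxv p.1.1 * Vxv p.1.2) := Finset.sum_neg_distrib _
    linarith [h, h2]
  have hg3 : (∑ p : (Fin n × Fin n) × (Fin n × Fin n), 2 * Bv p.1.1 p.1.2 * Bv p.2.1 p.2.2 * dLv p.2.1 p.1.2 * Vxv p.1.1 * Vxv p.2.2)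
      + (∑ p : (Fin n × Fin n) × (Fin n × Fin n), -(2 * Bv p.1.1 p.2.2 * Bv p.2.1 p.1.2 * dLv p.2.1 p.2.2 * Vxv p.1.1 * Vxv p.1.2)) = 0 := by
    have h : (∑ p : (Fin n × Fin n) × (Fin n × Fin n), 2 * Bv p.1.1 p.1.2 * Bv p.2.1 p.2.2 * dLv p.2.1 p.1.2 * Vxv p.1.1 * Vxv p.2.2)
        = ∑ p : (Fin n × Fin n) × (Fin n × Fin n), -(-(2 * Bv p.1.1 p.2.2 * Bv p.2.1 p.1.2 * dLv p.2.1 p.2.2 * Vxv p.1.1 * Vxv p.1.2)) :=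
      Fintype.sum_equiv (eJJ (Fin n)) _ _ (by
        rintro ⟨⟨a, b⟩, ⟨c, d⟩⟩
        show 2 * Bv a b * Bv c d * dLv c b * Vxv a * Vxv d
          = -(-(2 * Bv a b * Bv c d * dLv c b * Vxv a * Vxv d))
        ring)
    have h2 : (∑ p : (Fin n × Fin n) × (Fin n × Fin n), -(-(2 * Bv p.1.1 p.2.2 * Bv p.2.1 p.1.2 * dLv p.2.1 p.2.2 * Vxv p.1.1 * Vxv p.1.2)))
        = -∑ p : (Fin n × Fin n) × (Fin n × Fin n), -(2 * Bv p.1.1 p.2.2 * Bv p.2.1 p.1.2 * dLv p.2.1 p.2.2 * Vxv p.1.1 * Vxv p.1.2) := Finset.sum_neg_distrib _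
    linarith [h, h2]
  have hg4 : (∑ p : (Fin n × Fin n) × (Fin n × Fin n), -(dBv p.1.1 p.1.2 p.1.2 * Bv p.2.1 p.2.2 * Lv p.1.1 * Vxv p.2.1 * Vxv p.2.2))
      + (∑ p : (Fin n × Fin n) × (Fin n × Fin n), Bv p.1.1 p.1.2 * dBv p.2.1 p.2.2 p.2.2 * Lv p.2.1 * Vxv p.1.1 * Vxv p.1.2) = 0 := by
    have h : (∑ p : (Fin n × Fin n) × (Fin n × Fin n), -(dBv p.1.1 p.1.2 p.1.2 * Bv p.2.1 p.2.2 * Lv p.1.1 * Vxv p.2.1 * Vxv p.2.2))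
        = ∑ p : (Fin n × Fin n) × (Fin n × Fin n), -(Bv p.1.1 p.1.2 * dBv p.2.1 p.2.2 p.2.2 * Lv p.2.1 * Vxv p.1.1 * Vxv p.1.2) :=
      Fintype.sum_equiv (eSwap (Fin n)) _ _ (by
        rintro ⟨⟨a, b⟩, ⟨c, d⟩⟩
        show -(dBv a b b * Bv c d * Lv a * Vxv c * Vxv d)
          = -(Bv c d * dBv a b b * Lv a * Vxv c * Vxv d)
        ring)
    have h2 : (∑ p : (Fin n × Fin n) × (Fin n × Fin n), -(Bv p.1.1 p.1.2 * dBv p.2.1 p.2.2 p.2.2 * Lv p.2.1 * Vxv p.1.1 * Vxv p.1.2))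
        = -∑ p : (Fin n × Fin n) × (Fin n × Fin n), Bv p.1.1 p.1.2 * dBv p.2.1 p.2.2 p.2.2 * Lv p.2.1 * Vxv p.1.1 * Vxv p.1.2 := Finset.sum_neg_distrib _
    linarith [h, h2]
  have hg5 : (∑ p : (Fin n × Fin n) × (Fin n × Fin n), -(Bv p.1.1 p.1.2 * dBv p.2.1 p.2.2 p.1.2 * Lv p.1.1 * Vxv p.2.1 * Vxv p.2.2))
      + (∑ p : (Fin n × Fin n) × (Fin n × Fin n), dBv p.1.1 p.1.2 p.2.2 * Bv p.2.1 p.2.2 * Lv p.2.1 * Vxv p.1.1 * Vxv p.1.2) = 0 := by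
    have h : (∑ p : (Fin n × Fin n) × (Fin n × Fin n), -(Bv p.1.1 p.1.2 * dBv p.2.1 p.2.2 p.1.2 * Lv p.1.1 * Vxv p.2.1 * Vxv p.2.2))
        = ∑ p : (Fin n × Fin n) × (Fin n × Fin n), -(dBv p.1.1 p.1.2 p.2.2 * Bv p.2.1 p.2.2 * Lv p.2.1 * Vxv p.1.1 * Vxv p.1.2) :=
      Fintype.sum_equiv (eSwap (Fin n)) _ _ (by
        rintro ⟨⟨a, b⟩, ⟨c, d⟩⟩
        show -(Bv a b * dBv c d b * Lv a * Vxv c * Vxv d)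
          = -(dBv c d b * Bv a b * Lv a * Vxv c * Vxv d)
        ring)
    have h2 : (∑ p : (Fin n × Fin n) × (Fin n × Fin n), -(dBv p.1.1 p.1.2 p.2.2 * Bv p.2.1 p.2.2 * Lv p.2.1 * Vxv p.1.1 * Vxv p.1.2))
        = -∑ p : (Fin n × Fin n) × (Fin n × Fin n), dBv p.1.1 p.1.2 p.2.2 * Bv p.2.1 p.2.2 * Lv p.2.1 * Vxv p.1.1 * Vxv p.1.2 := Finset.sum_neg_distrib _
    linarith [h, h2]
  have hg6 : (∑ p : (Fin n × Fin n) × (Fin n × Fin n), -(Bv p.1.1 p.1.2 * Bv p.2.1 p.2.2 * dLv p.1.1 p.1.2 * Vxv p.2.1 * Vxv p.2.2))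
      + (∑ p : (Fin n × Fin n) × (Fin n × Fin n), Bv p.1.1 p.1.2 * Bv p.2.1 p.2.2 * dLv p.2.1 p.2.2 * Vxv p.1.1 * Vxv p.1.2) = 0 := by
    have h : (∑ p : (Fin n × Fin n) × (Fin n × Fin n), -(Bv p.1.1 p.1.2 * Bv p.2.1 p.2.2 * dLv p.1.1 p.1.2 * Vxv p.2.1 * Vxv p.2.2))
        = ∑ p : (Fin n × Fin n) × (Fin n × Fin n), -(Bv p.1.1 p.1.2 * Bv p.2.1 p.2.2 * dLv p.2.1 p.2.2 * Vxv p.1.1 * Vxv p.1.2) :=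
      Fintype.sum_equiv (eSwap (Fin n)) _ _ (by
        rintro ⟨⟨a, b⟩, ⟨c, d⟩⟩
        show -(Bv a b * Bv c d * dLv a b * Vxv c * Vxv d)
          = -(Bv c d * Bv a b * dLv a b * Vxv c * Vxv d)
        ring)
    have h2 : (∑ p : (Fin n × Fin n) × (Fin n × Fin n), -(Bv p.1.1 p.1.2 * Bv p.2.1 p.2.2 * dLv p.2.1 p.2.2 * Vxv p.1.1 * Vxv p.1.2))
        = -∑ p : (Fin n × Fin n) × (Fin n × Fin n), Bv p.1.1 p.1.2 * Bv p.2.1 p.2.2 * dLv p.2.1 p.2.2 * Vxv p.1.1 * Vxv p.1.2 := Finset.sum_neg_distrib _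
    linarith [h, h2]
  have hg7 : (∑ p : (Fin n × Fin n) × (Fin n × Fin n), 2 * Bv p.1.1 p.1.2 * Bv p.2.1 p.2.2 * Lv p.2.1 * Vxxv p.1.1 p.1.2 * Vxv p.2.2)
      + (∑ p : (Fin n × Fin n) × (Fin n × Fin n), -(2 * (Bv p.1.1 p.1.2 * Lv p.1.1 * Vxv p.1.2) * (Bv p.2.1 p.2.2 * Vxxv p.2.1 p.2.2))) = 0 := by
    have h : (∑ p : (Fin n × Fin n) × (Fin n × Fin n), 2 * Bv p.1.1 p.1.2 * Bv p.2.1 p.2.2 * Lv p.2.1 * Vxxv p.1.1 p.1.2 * Vxv p.2.2)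
        = ∑ p : (Fin n × Fin n) × (Fin n × Fin n), -(-(2 * (Bv p.1.1 p.1.2 * Lv p.1.1 * Vxv p.1.2) * (Bv p.2.1 p.2.2 * Vxxv p.2.1 p.2.2))) :=
      Fintype.sum_equiv (eSwap (Fin n)) _ _ (by
        rintro ⟨⟨a, b⟩, ⟨c, d⟩⟩
        show 2 * Bv a b * Bv c d * Lv c * Vxxv a b * Vxv d
          = -(-(2 * (Bv c d * Lv c * Vxv d) * (Bv a b * Vxxv a b)))
        ring)
    have h2 : (∑ p : (Fin n × Fin n) × (Fin n × Fin n), -(-(2 * (Bv p.1.1 p.1.2 * Lv p.1.1 * Vxv p.1.2) * (Bv p.2.1 p.2.2 * Vxxv p.2.1 p.2.2))))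
        = -∑ p : (Fin n × Fin n) × (Fin n × Fin n), -(2 * (Bv p.1.1 p.1.2 * Lv p.1.1 * Vxv p.1.2) * (Bv p.2.1 p.2.2 * Vxxv p.2.1 p.2.2)) := Finset.sum_neg_distrib _
    linarith [h, h2]
  have h10 : (∑ p : (Fin n × Fin n) × (Fin n × Fin n), -(Bv p.1.1 p.1.2 * Bv p.2.1 p.2.2 * Lv p.1.1 * Vxv p.2.1 * Vxxv p.2.2 p.1.2))
      = ∑ p : (Fin n × Fin n) × (Fin n × Fin n), -(Bv p.1.1 p.1.2 * Bv p.2.1 p.2.2 * Lv p.1.1 * Vxxv p.2.1 p.1.2 * Vxv p.2.2) :=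
    Fintype.sum_equiv (eI (Fin n)) _ _ (by
      rintro ⟨⟨a, b⟩, ⟨c, d⟩⟩
      show -(Bv a b * Bv c d * Lv a * Vxv c * Vxxv d b) = -(Bv a b * Bv d c * Lv a * Vxxv d b * Vxv c)
      rw [hBs d c]
      ring)
  have h5 : (∑ p : (Fin n × Fin n) × (Fin n × Fin n), 2 * Bv p.1.1 p.1.2 * Bv p.2.1 p.2.2 * Lv p.2.1 * Vxv p.1.1 * Vxxv p.2.2 p.1.2)
      = ∑ p : (Fin n × Fin n) × (Fin n × Fin n), (-2 : ℝ) * (-(Bv p.1.1 p.1.2 * Bv p.2.1 p.2.2 * Lv p.1.1 * Vxxv p.2.1 p.1.2 * Vxv p.2.2)) :=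
    Fintype.sum_equiv (eCinv (Fin n)) _ _ (by
      rintro ⟨⟨a, b⟩, ⟨c, d⟩⟩
      show 2 * Bv a b * Bv c d * Lv c * Vxv a * Vxxv d b = (-2 : ℝ) * (-(Bv c d * Bv b a * Lv c * Vxxv b d * Vxv a))
      rw [hBs b a, hVs b d]
      ring)
  have h5b : (∑ p : (Fin n × Fin n) × (Fin n × Fin n), (-2 : ℝ) * (-(Bv p.1.1 p.1.2 * Bv p.2.1 p.2.2 * Lv p.1.1 * Vxxv p.2.1 p.1.2 * Vxv p.2.2)))
      = (-2 : ℝ) * ∑ p : (Fin n × Fin n) × (Fin n × Fin n), -(Bv p.1.1 p.1.2 * Bv p.2.1 p.2.2 * Lv p.1.1 * Vxxv p.2.1 p.1.2 * Vxv p.2.2) := by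
    rw [← Finset.mul_sum]
  have hg8 : (∑ p : (Fin n × Fin n) × (Fin n × Fin n), 2 * Bv p.1.1 p.1.2 * Bv p.2.1 p.2.2 * Lv p.2.1 * Vxv p.1.1 * Vxxv p.2.2 p.1.2)
      + (∑ p : (Fin n × Fin n) × (Fin n × Fin n), -(Bv p.1.1 p.1.2 * Bv p.2.1 p.2.2 * Lv p.1.1 * Vxxv p.2.1 p.1.2 * Vxv p.2.2))
      + (∑ p : (Fin n × Fin n) × (Fin n × Fin n), -(Bv p.1.1 p.1.2 * Bv p.2.1 p.2.2 * Lv p.1.1 * Vxv p.2.1 * Vxxv p.2.2 p.1.2)) = 0 := by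
    linarith [h5, h5b, h10]
  have hsplit : (∑ p : (Fin n × Fin n) × (Fin n × Fin n),
      (2 * dBv p.1.1 p.1.2 p.1.2 * Bv p.2.1 p.2.2 * Lv p.2.1 * Vxv p.1.1 * Vxv p.2.2
      + 2 * Bv p.1.1 p.1.2 * dBv p.2.1 p.2.2 p.1.2 * Lv p.2.1 * Vxv p.1.1 * Vxv p.2.2
      + 2 * Bv p.1.1 p.1.2 * Bv p.2.1 p.2.2 * dLv p.2.1 p.1.2 * Vxv p.1.1 * Vxv p.2.2
      + 2 * Bv p.1.1 p.1.2 * Bv p.2.1 p.2.2 * Lv p.2.1 * Vxxv p.1.1 p.1.2 * Vxv p.2.2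
      + 2 * Bv p.1.1 p.1.2 * Bv p.2.1 p.2.2 * Lv p.2.1 * Vxv p.1.1 * Vxxv p.2.2 p.1.2
      + -(dBv p.1.1 p.1.2 p.1.2 * Bv p.2.1 p.2.2 * Lv p.1.1 * Vxv p.2.1 * Vxv p.2.2)
      + -(Bv p.1.1 p.1.2 * dBv p.2.1 p.2.2 p.1.2 * Lv p.1.1 * Vxv p.2.1 * Vxv p.2.2)
      + -(Bv p.1.1 p.1.2 * Bv p.2.1 p.2.2 * dLv p.1.1 p.1.2 * Vxv p.2.1 * Vxv p.2.2)
      + -(Bv p.1.1 p.1.2 * Bv p.2.1 p.2.2 * Lv p.1.1 * Vxxv p.2.1 p.1.2 * Vxv p.2.2)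
      + -(Bv p.1.1 p.1.2 * Bv p.2.1 p.2.2 * Lv p.1.1 * Vxv p.2.1 * Vxxv p.2.2 p.1.2)
      + -(2 * Bv p.1.1 p.2.2 * dBv p.2.1 p.1.2 p.2.2 * Lv p.2.1 * Vxv p.1.1 * Vxv p.1.2)
      + -(2 * Bv p.1.1 p.2.2 * Bv p.2.1 p.1.2 * dLv p.2.1 p.2.2 * Vxv p.1.1 * Vxv p.1.2)
      + dBv p.1.1 p.1.2 p.2.2 * Bv p.2.1 p.2.2 * Lv p.2.1 * Vxv p.1.1 * Vxv p.1.2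
      + Bv p.1.1 p.1.2 * dBv p.2.1 p.2.2 p.2.2 * Lv p.2.1 * Vxv p.1.1 * Vxv p.1.2
      + Bv p.1.1 p.1.2 * Bv p.2.1 p.2.2 * dLv p.2.1 p.2.2 * Vxv p.1.1 * Vxv p.1.2
      + -(2 * (Bv p.1.1 p.1.2 * Lv p.1.1 * Vxv p.1.2) * (dBv p.2.1 p.2.2 p.2.2 * Vxv p.2.1))
      + -(2 * (Bv p.1.1 p.1.2 * Lv p.1.1 * Vxv p.1.2) * (Bv p.2.1 p.2.2 * Vxxv p.2.1 p.2.2))))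
      = (∑ p : (Fin n × Fin n) × (Fin n × Fin n), 2 * dBv p.1.1 p.1.2 p.1.2 * Bv p.2.1 p.2.2 * Lv p.2.1 * Vxv p.1.1 * Vxv p.2.2)
      + (∑ p : (Fin n × Fin n) × (Fin n × Fin n), 2 * Bv p.1.1 p.1.2 * dBv p.2.1 p.2.2 p.1.2 * Lv p.2.1 * Vxv p.1.1 * Vxv p.2.2)
      + (∑ p : (Fin n × Fin n) × (Fin n × Fin n), 2 * Bv p.1.1 p.1.2 * Bv p.2.1 p.2.2 * dLv p.2.1 p.1.2 * Vxv p.1.1 * Vxv p.2.2)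
      + (∑ p : (Fin n × Fin n) × (Fin n × Fin n), 2 * Bv p.1.1 p.1.2 * Bv p.2.1 p.2.2 * Lv p.2.1 * Vxxv p.1.1 p.1.2 * Vxv p.2.2)
      + (∑ p : (Fin n × Fin n) × (Fin n × Fin n), 2 * Bv p.1.1 p.1.2 * Bv p.2.1 p.2.2 * Lv p.2.1 * Vxv p.1.1 * Vxxv p.2.2 p.1.2)
      + (∑ p : (Fin n × Fin n) × (Fin n × Fin n), -(dBv p.1.1 p.1.2 p.1.2 * Bv p.2.1 p.2.2 * Lv p.1.1 * Vxv p.2.1 * Vxv p.2.2))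
      + (∑ p : (Fin n × Fin n) × (Fin n × Fin n), -(Bv p.1.1 p.1.2 * dBv p.2.1 p.2.2 p.1.2 * Lv p.1.1 * Vxv p.2.1 * Vxv p.2.2))
      + (∑ p : (Fin n × Fin n) × (Fin n × Fin n), -(Bv p.1.1 p.1.2 * Bv p.2.1 p.2.2 * dLv p.1.1 p.1.2 * Vxv p.2.1 * Vxv p.2.2))
      + (∑ p : (Fin n × Fin n) × (Fin n × Fin n), -(Bv p.1.1 p.1.2 * Bv p.2.1 p.2.2 * Lv p.1.1 * Vxxv p.2.1 p.1.2 * Vxv p.2.2))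
      + (∑ p : (Fin n × Fin n) × (Fin n × Fin n), -(Bv p.1.1 p.1.2 * Bv p.2.1 p.2.2 * Lv p.1.1 * Vxv p.2.1 * Vxxv p.2.2 p.1.2))
      + (∑ p : (Fin n × Fin n) × (Fin n × Fin n), -(2 * Bv p.1.1 p.2.2 * dBv p.2.1 p.1.2 p.2.2 * Lv p.2.1 * Vxv p.1.1 * Vxv p.1.2))
      + (∑ p : (Fin n × Fin n) × (Fin n × Fin n), -(2 * Bv p.1.1 p.2.2 * Bv p.2.1 p.1.2 * dLv p.2.1 p.2.2 * Vxv p.1.1 * Vxv p.1.2))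
      + (∑ p : (Fin n × Fin n) × (Fin n × Fin n), dBv p.1.1 p.1.2 p.2.2 * Bv p.2.1 p.2.2 * Lv p.2.1 * Vxv p.1.1 * Vxv p.1.2)
      + (∑ p : (Fin n × Fin n) × (Fin n × Fin n), Bv p.1.1 p.1.2 * dBv p.2.1 p.2.2 p.2.2 * Lv p.2.1 * Vxv p.1.1 * Vxv p.1.2)
      + (∑ p : (Fin n × Fin n) × (Fin n × Fin n), Bv p.1.1 p.1.2 * Bv p.2.1 p.2.2 * dLv p.2.1 p.2.2 * Vxv p.1.1 * Vxv p.1.2)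
      + (∑ p : (Fin n × Fin n) × (Fin n × Fin n), -(2 * (Bv p.1.1 p.1.2 * Lv p.1.1 * Vxv p.1.2) * (dBv p.2.1 p.2.2 p.2.2 * Vxv p.2.1)))
      + (∑ p : (Fin n × Fin n) × (Fin n × Fin n), -(2 * (Bv p.1.1 p.1.2 * Lv p.1.1 * Vxv p.1.2) * (Bv p.2.1 p.2.2 * Vxxv p.2.1 p.2.2))) := by
    simp only [Finset.sum_add_distrib]
  have hquad : (∑ p : (Fin n × Fin n) × (Fin n × Fin n),
      (2 * dBv p.1.1 p.1.2 p.1.2 * Bv p.2.1 p.2.2 * Lv p.2.1 * Vxv p.1.1 * Vxv p.2.2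
      + 2 * Bv p.1.1 p.1.2 * dBv p.2.1 p.2.2 p.1.2 * Lv p.2.1 * Vxv p.1.1 * Vxv p.2.2
      + 2 * Bv p.1.1 p.1.2 * Bv p.2.1 p.2.2 * dLv p.2.1 p.1.2 * Vxv p.1.1 * Vxv p.2.2
      + 2 * Bv p.1.1 p.1.2 * Bv p.2.1 p.2.2 * Lv p.2.1 * Vxxv p.1.1 p.1.2 * Vxv p.2.2
      + 2 * Bv p.1.1 p.1.2 * Bv p.2.1 p.2.2 * Lv p.2.1 * Vxv p.1.1 * Vxxv p.2.2 p.1.2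
      + -(dBv p.1.1 p.1.2 p.1.2 * Bv p.2.1 p.2.2 * Lv p.1.1 * Vxv p.2.1 * Vxv p.2.2)
      + -(Bv p.1.1 p.1.2 * dBv p.2.1 p.2.2 p.1.2 * Lv p.1.1 * Vxv p.2.1 * Vxv p.2.2)
      + -(Bv p.1.1 p.1.2 * Bv p.2.1 p.2.2 * dLv p.1.1 p.1.2 * Vxv p.2.1 * Vxv p.2.2)
      + -(Bv p.1.1 p.1.2 * Bv p.2.1 p.2.2 * Lv p.1.1 * Vxxv p.2.1 p.1.2 * Vxv p.2.2)
      + -(Bv p.1.1 p.1.2 * Bv p.2.1 p.2.2 * Lv p.1.1 * Vxv p.2.1 * Vxxv p.2.2 p.1.2)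
      + -(2 * Bv p.1.1 p.2.2 * dBv p.2.1 p.1.2 p.2.2 * Lv p.2.1 * Vxv p.1.1 * Vxv p.1.2)
      + -(2 * Bv p.1.1 p.2.2 * Bv p.2.1 p.1.2 * dLv p.2.1 p.2.2 * Vxv p.1.1 * Vxv p.1.2)
      + dBv p.1.1 p.1.2 p.2.2 * Bv p.2.1 p.2.2 * Lv p.2.1 * Vxv p.1.1 * Vxv p.1.2
      + Bv p.1.1 p.1.2 * dBv p.2.1 p.2.2 p.2.2 * Lv p.2.1 * Vxv p.1.1 * Vxv p.1.2
      + Bv p.1.1 p.1.2 * Bv p.2.1 p.2.2 * dLv p.2.1 p.2.2 * Vxv p.1.1 * Vxv p.1.2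
      + -(2 * (Bv p.1.1 p.1.2 * Lv p.1.1 * Vxv p.1.2) * (dBv p.2.1 p.2.2 p.2.2 * Vxv p.2.1))
      + -(2 * (Bv p.1.1 p.1.2 * Lv p.1.1 * Vxv p.1.2) * (Bv p.2.1 p.2.2 * Vxxv p.2.1 p.2.2)))) = 0 := by
    rw [hsplit]
    linarith [hg1, hg2, hg3, hg4, hg5, hg6, hg7, hg8]
  have hconn : (∑ p : (Fin n × Fin n) × (Fin n × Fin n),
      (2 * dBv p.1.1 p.1.2 p.1.2 * Bv p.2.1 p.2.2 * Lv p.2.1 * Vxv p.1.1 * Vxv p.2.2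
      + 2 * Bv p.1.1 p.1.2 * dBv p.2.1 p.2.2 p.1.2 * Lv p.2.1 * Vxv p.1.1 * Vxv p.2.2
      + 2 * Bv p.1.1 p.1.2 * Bv p.2.1 p.2.2 * dLv p.2.1 p.1.2 * Vxv p.1.1 * Vxv p.2.2
      + 2 * Bv p.1.1 p.1.2 * Bv p.2.1 p.2.2 * Lv p.2.1 * Vxxv p.1.1 p.1.2 * Vxv p.2.2
      + 2 * Bv p.1.1 p.1.2 * Bv p.2.1 p.2.2 * Lv p.2.1 * Vxv p.1.1 * Vxxv p.2.2 p.1.2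
      + -(dBv p.1.1 p.1.2 p.1.2 * Bv p.2.1 p.2.2 * Lv p.1.1 * Vxv p.2.1 * Vxv p.2.2)
      + -(Bv p.1.1 p.1.2 * dBv p.2.1 p.2.2 p.1.2 * Lv p.1.1 * Vxv p.2.1 * Vxv p.2.2)
      + -(Bv p.1.1 p.1.2 * Bv p.2.1 p.2.2 * dLv p.1.1 p.1.2 * Vxv p.2.1 * Vxv p.2.2)
      + -(Bv p.1.1 p.1.2 * Bv p.2.1 p.2.2 * Lv p.1.1 * Vxxv p.2.1 p.1.2 * Vxv p.2.2)
      + -(Bv p.1.1 p.1.2 * Bv p.2.1 p.2.2 * Lv p.1.1 * Vxv p.2.1 * Vxxv p.2.2 p.1.2)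
      + -(2 * Bv p.1.1 p.2.2 * dBv p.2.1 p.1.2 p.2.2 * Lv p.2.1 * Vxv p.1.1 * Vxv p.1.2)
      + -(2 * Bv p.1.1 p.2.2 * Bv p.2.1 p.1.2 * dLv p.2.1 p.2.2 * Vxv p.1.1 * Vxv p.1.2)
      + dBv p.1.1 p.1.2 p.2.2 * Bv p.2.1 p.2.2 * Lv p.2.1 * Vxv p.1.1 * Vxv p.1.2
      + Bv p.1.1 p.1.2 * dBv p.2.1 p.2.2 p.2.2 * Lv p.2.1 * Vxv p.1.1 * Vxv p.1.2
      + Bv p.1.1 p.1.2 * Bv p.2.1 p.2.2 * dLv p.2.1 p.2.2 * Vxv p.1.1 * Vxv p.1.2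
      + -(2 * (Bv p.1.1 p.1.2 * Lv p.1.1 * Vxv p.1.2) * (dBv p.2.1 p.2.2 p.2.2 * Vxv p.2.1))
      + -(2 * (Bv p.1.1 p.1.2 * Lv p.1.1 * Vxv p.1.2) * (Bv p.2.1 p.2.2 * Vxxv p.2.1 p.2.2))))
      = (∑ p : (Fin n × Fin n) × (Fin n × Fin n),
      (2 * dBv p.1.1 p.1.2 p.1.2 * Bv p.2.1 p.2.2 * Lv p.2.1 * Vxv p.1.1 * Vxv p.2.2
    + 2 * Bv p.1.1 p.1.2 * dBv p.2.1 p.2.2 p.1.2 * Lv p.2.1 * Vxv p.1.1 * Vxv p.2.2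
    + 2 * Bv p.1.1 p.1.2 * Bv p.2.1 p.2.2 * dLv p.2.1 p.1.2 * Vxv p.1.1 * Vxv p.2.2
    + 2 * Bv p.1.1 p.1.2 * Bv p.2.1 p.2.2 * Lv p.2.1 * Vxxv p.1.1 p.1.2 * Vxv p.2.2
    + 2 * Bv p.1.1 p.1.2 * Bv p.2.1 p.2.2 * Lv p.2.1 * Vxv p.1.1 * Vxxv p.2.2 p.1.2
    - (dBv p.1.1 p.1.2 p.1.2 * Bv p.2.1 p.2.2 * Lv p.1.1 * Vxv p.2.1 * Vxv p.2.2
      + Bv p.1.1 p.1.2 * dBv p.2.1 p.2.2 p.1.2 * Lv p.1.1 * Vxv p.2.1 * Vxv p.2.2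
      + Bv p.1.1 p.1.2 * Bv p.2.1 p.2.2 * dLv p.1.1 p.1.2 * Vxv p.2.1 * Vxv p.2.2
      + Bv p.1.1 p.1.2 * Bv p.2.1 p.2.2 * Lv p.1.1 * Vxxv p.2.1 p.1.2 * Vxv p.2.2
      + Bv p.1.1 p.1.2 * Bv p.2.1 p.2.2 * Lv p.1.1 * Vxv p.2.1 * Vxxv p.2.2 p.1.2)))
      - (∑ p : (Fin n × Fin n) × (Fin n × Fin n),
      (2 * Bv p.1.1 p.2.2 * (dBv p.2.1 p.1.2 p.2.2 * Lv p.2.1 + Bv p.2.1 p.1.2 * dLv p.2.1 p.2.2)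
    - (dBv p.1.1 p.1.2 p.2.2 * Bv p.2.1 p.2.2 * Lv p.2.1
      + Bv p.1.1 p.1.2 * dBv p.2.1 p.2.2 p.2.2 * Lv p.2.1
      + Bv p.1.1 p.1.2 * Bv p.2.1 p.2.2 * dLv p.2.1 p.2.2)) * Vxv p.1.1 * Vxv p.1.2)
      - 2 * ∑ p : (Fin n × Fin n) × (Fin n × Fin n), Bv p.1.1 p.1.2 * Lv p.1.1 * Vxv p.1.2 * (dBv p.2.1 p.2.2 p.2.2 * Vxv p.2.1 + Bv p.2.1 p.2.2 * Vxxv p.2.1 p.2.2) := by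
    calc (∑ p : (Fin n × Fin n) × (Fin n × Fin n),
      (2 * dBv p.1.1 p.1.2 p.1.2 * Bv p.2.1 p.2.2 * Lv p.2.1 * Vxv p.1.1 * Vxv p.2.2
      + 2 * Bv p.1.1 p.1.2 * dBv p.2.1 p.2.2 p.1.2 * Lv p.2.1 * Vxv p.1.1 * Vxv p.2.2
      + 2 * Bv p.1.1 p.1.2 * Bv p.2.1 p.2.2 * dLv p.2.1 p.1.2 * Vxv p.1.1 * Vxv p.2.2
      + 2 * Bv p.1.1 p.1.2 * Bv p.2.1 p.2.2 * Lv p.2.1 * Vxxv p.1.1 p.1.2 * Vxv p.2.2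
      + 2 * Bv p.1.1 p.1.2 * Bv p.2.1 p.2.2 * Lv p.2.1 * Vxv p.1.1 * Vxxv p.2.2 p.1.2
      + -(dBv p.1.1 p.1.2 p.1.2 * Bv p.2.1 p.2.2 * Lv p.1.1 * Vxv p.2.1 * Vxv p.2.2)
      + -(Bv p.1.1 p.1.2 * dBv p.2.1 p.2.2 p.1.2 * Lv p.1.1 * Vxv p.2.1 * Vxv p.2.2)
      + -(Bv p.1.1 p.1.2 * Bv p.2.1 p.2.2 * dLv p.1.1 p.1.2 * Vxv p.2.1 * Vxv p.2.2)
      + -(Bv p.1.1 p.1.2 * Bv p.2.1 p.2.2 * Lv p.1.1 * Vxxv p.2.1 p.1.2 * Vxv p.2.2)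
      + -(Bv p.1.1 p.1.2 * Bv p.2.1 p.2.2 * Lv p.1.1 * Vxv p.2.1 * Vxxv p.2.2 p.1.2)
      + -(2 * Bv p.1.1 p.2.2 * dBv p.2.1 p.1.2 p.2.2 * Lv p.2.1 * Vxv p.1.1 * Vxv p.1.2)
      + -(2 * Bv p.1.1 p.2.2 * Bv p.2.1 p.1.2 * dLv p.2.1 p.2.2 * Vxv p.1.1 * Vxv p.1.2)
      + dBv p.1.1 p.1.2 p.2.2 * Bv p.2.1 p.2.2 * Lv p.2.1 * Vxv p.1.1 * Vxv p.1.2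
      + Bv p.1.1 p.1.2 * dBv p.2.1 p.2.2 p.2.2 * Lv p.2.1 * Vxv p.1.1 * Vxv p.1.2
      + Bv p.1.1 p.1.2 * Bv p.2.1 p.2.2 * dLv p.2.1 p.2.2 * Vxv p.1.1 * Vxv p.1.2
      + -(2 * (Bv p.1.1 p.1.2 * Lv p.1.1 * Vxv p.1.2) * (dBv p.2.1 p.2.2 p.2.2 * Vxv p.2.1))
      + -(2 * (Bv p.1.1 p.1.2 * Lv p.1.1 * Vxv p.1.2) * (Bv p.2.1 p.2.2 * Vxxv p.2.1 p.2.2))))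
        = ∑ p : (Fin n × Fin n) × (Fin n × Fin n),
      ((2 * dBv p.1.1 p.1.2 p.1.2 * Bv p.2.1 p.2.2 * Lv p.2.1 * Vxv p.1.1 * Vxv p.2.2
    + 2 * Bv p.1.1 p.1.2 * dBv p.2.1 p.2.2 p.1.2 * Lv p.2.1 * Vxv p.1.1 * Vxv p.2.2
    + 2 * Bv p.1.1 p.1.2 * Bv p.2.1 p.2.2 * dLv p.2.1 p.1.2 * Vxv p.1.1 * Vxv p.2.2
    + 2 * Bv p.1.1 p.1.2 * Bv p.2.1 p.2.2 * Lv p.2.1 * Vxxv p.1.1 p.1.2 * Vxv p.2.2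
    + 2 * Bv p.1.1 p.1.2 * Bv p.2.1 p.2.2 * Lv p.2.1 * Vxv p.1.1 * Vxxv p.2.2 p.1.2
    - (dBv p.1.1 p.1.2 p.1.2 * Bv p.2.1 p.2.2 * Lv p.1.1 * Vxv p.2.1 * Vxv p.2.2
      + Bv p.1.1 p.1.2 * dBv p.2.1 p.2.2 p.1.2 * Lv p.1.1 * Vxv p.2.1 * Vxv p.2.2
      + Bv p.1.1 p.1.2 * Bv p.2.1 p.2.2 * dLv p.1.1 p.1.2 * Vxv p.2.1 * Vxv p.2.2
      + Bv p.1.1 p.1.2 * Bv p.2.1 p.2.2 * Lv p.1.1 * Vxxv p.2.1 p.1.2 * Vxv p.2.2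
      + Bv p.1.1 p.1.2 * Bv p.2.1 p.2.2 * Lv p.1.1 * Vxv p.2.1 * Vxxv p.2.2 p.1.2))
      - (2 * Bv p.1.1 p.2.2 * (dBv p.2.1 p.1.2 p.2.2 * Lv p.2.1 + Bv p.2.1 p.1.2 * dLv p.2.1 p.2.2)
    - (dBv p.1.1 p.1.2 p.2.2 * Bv p.2.1 p.2.2 * Lv p.2.1
      + Bv p.1.1 p.1.2 * dBv p.2.1 p.2.2 p.2.2 * Lv p.2.1
      + Bv p.1.1 p.1.2 * Bv p.2.1 p.2.2 * dLv p.2.1 p.2.2)) * Vxv p.1.1 * Vxv p.1.2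
      - 2 * (Bv p.1.1 p.1.2 * Lv p.1.1 * Vxv p.1.2 * (dBv p.2.1 p.2.2 p.2.2 * Vxv p.2.1 + Bv p.2.1 p.2.2 * Vxxv p.2.1 p.2.2))) := Finset.sum_congr rfl (fun p _ => by ring)
      _ = _ := by
        rw [Finset.sum_sub_distrib, Finset.sum_sub_distrib, ← Finset.mul_sum]
  linear_combination hY - hP3 + hP1 + hP2 + hT1 - 2 * hW - hT2 + hquad - hconn

end Stmt5

open Stmt5 in
/-- Identity (2.8) of the paper. -/
theorem stmt_5 {n : ℕ} (hn : 1 ≤ n)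
    (b : Fin n → Fin n → ℝ → (Fin n → ℝ) → ℝ)
    (ℓ Ψ u : ℝ → (Fin n → ℝ) → ℝ)
    (hb : ∀ i j, ContDiff ℝ 2 (fun p : ℝ × (Fin n → ℝ) => b i j p.1 p.2))
    (hbsym : ∀ i j, b i j = b j i)
    (hℓ : ContDiff ℝ 3 (fun p : ℝ × (Fin n → ℝ) => ℓ p.1 p.2))
    (hΨ : ContDiff ℝ 2 (fun p : ℝ × (Fin n → ℝ) => Ψ p.1 p.2))
    (hu : ContDiff ℝ 2 (fun p : ℝ × (Fin n → ℝ) => u p.1 p.2))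
    (θ v A : ℝ → (Fin n → ℝ) → ℝ)
    (hθ : θ = fun t x => Real.exp (ℓ t x))
    (hv : v = fun t x => θ t x * u t x)
    (hA : A = fun s y =>
      ((ptd ℓ s y) ^ 2 - ptd (ptd ℓ) s y)
        - (∑ i, ∑ j, (b i j s y * pxd ℓ i s y * pxd ℓ j s y
            - pxd (b i j) j s y * pxd ℓ i s y
            - b i j s y * pxd (pxd ℓ i) j s y))
        - Ψ s y)
    (t : ℝ) (x : Fin n → ℝ) :
    2 * (∑ i, ∑ j, b i j t x * pxd ℓ i t x * pxd v j t x) *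
        (-(∑ i, ∑ j, pxd (fun s y => b i j s y * pxd v i s y) j t x) + A t x * v t x)
      = -(∑ i, ∑ j, pxd (fun s y =>
            (∑ i', ∑ j',
              (2 * b i j s y * b i' j' s y * pxd ℓ i' s y * pxd v i s y * pxd v j' s y
                - b i j s y * b i' j' s y * pxd ℓ i s y * pxd v i' s y * pxd v j' s y))
              - A s y * b i j s y * pxd ℓ i s y * (v s y) ^ 2) j t x)
        + (∑ i, ∑ j, (∑ i', ∑ j',
            (2 * b i j' t x * pxd (fun s y => b i' j s y * pxd ℓ i' s y) j' t x
              - pxd (fun s y => b i j s y * b i' j' s y * pxd ℓ i' s y) j' t x))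
            * pxd v i t x * pxd v j t x)
        - (∑ i, ∑ j, pxd (fun s y => A s y * b i j s y * pxd ℓ i s y) j t x)
            * (v t x) ^ 2 := by
  -- basic smoothness facts
  have hl3 : ContDiff ℝ ((2:ℕ)+1) (unc ℓ) := by exact_mod_cast hℓ
  have hb2 : ∀ i j, ContDiff ℝ ((1:ℕ)+1) (unc (b i j)) := fun i j => by exact_mod_cast hb i j
  have hv2 : ContDiff ℝ ((1:ℕ)+1) (unc v) := by
    rw [hv, hθ]
    exact_mod_cast ((hℓ.of_le (by norm_num)).exp.mul hu : ContDiff ℝ 2 _)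
  have hpl2 : ∀ i, ContDiff ℝ ((1:ℕ)+1) (unc (pxd ℓ i)) := fun i => contDiff_pxd ℓ i hl3
  have hpl1 : ∀ i, ContDiff ℝ (1:ℕ) (unc (pxd ℓ i)) := fun i => (hpl2 i).of_le (by exact_mod_cast Nat.le_succ 1)
  have hdpl1 : ∀ i j, ContDiff ℝ (1:ℕ) (unc (pxd (pxd ℓ i) j)) := fun i j => contDiff_pxd _ j (hpl2 i)
  have hpb1 : ∀ i j k, ContDiff ℝ (1:ℕ) (unc (pxd (b i j) k)) := fun i j k => contDiff_pxd _ k (hb2 i j)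
  have hpv1 : ∀ i, ContDiff ℝ (1:ℕ) (unc (pxd v i)) := fun i => contDiff_pxd v i hv2
  have hb1 : ∀ i j, ContDiff ℝ (1:ℕ) (unc (b i j)) := fun i j => (hb2 i j).of_le (by exact_mod_cast Nat.le_succ 1)
  have hA1 : ContDiff ℝ (1:ℕ) (unc A) := by
    rw [hA]
    have h1 : ContDiff ℝ (1:ℕ) (unc (ptd ℓ)) :=
      (contDiff_ptd (m := 2) ℓ hl3).of_le (by exact_mod_cast Nat.le_succ 1)
    have h2 : ContDiff ℝ (1:ℕ) (unc (ptd (ptd ℓ))) :=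
      contDiff_ptd (m := 1) (ptd ℓ) (contDiff_ptd (m := 2) ℓ hl3)
    have hsum : ContDiff ℝ (1:ℕ) (fun p : ℝ × (Fin n → ℝ) =>
        ∑ i, ∑ j, (b i j p.1 p.2 * pxd ℓ i p.1 p.2 * pxd ℓ j p.1 p.2
          - pxd (b i j) j p.1 p.2 * pxd ℓ i p.1 p.2
          - b i j p.1 p.2 * pxd (pxd ℓ i) j p.1 p.2)) := by
      refine ContDiff.sum fun i _ => ContDiff.sum fun j _ => ?_
      exact (((hb1 i j).mul (hpl1 i)).mul (hpl1 j)).sub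
        (((hpb1 i j j).mul (hpl1 i))) |>.sub ((hb1 i j).mul (hdpl1 i j))
    exact (((h1.pow 2).sub h2).sub hsum).sub (hΨ.of_le (by exact_mod_cast one_le_two))
  -- pointwise differentiability
  have dAt : DifferentiableAt ℝ (unc A) (t,x) := (hA1.differentiable (by simp)) (t,x)
  have dbAt : ∀ i j, DifferentiableAt ℝ (unc (b i j)) (t,x) := fun i j =>
    ((hb1 i j).differentiable (by simp)) _
  have dplAt : ∀ i, DifferentiableAt ℝ (unc (pxd ℓ i)) (t,x) := fun i =>
    ((hpl1 i).differentiable (by simp)) _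
  have dpvAt : ∀ i, DifferentiableAt ℝ (unc (pxd v i)) (t,x) := fun i =>
    ((hpv1 i).differentiable (by simp)) _
  have dvAt : DifferentiableAt ℝ (unc v) (t,x) :=
    (hv2.differentiable (by simp)) _
  -- slice derivatives
  have Sb : ∀ i j k, HasDerivAt (fun y => b i j t (Function.update x k y))
      (pxd (b i j) k t x) (x k) := fun i j k => hasDerivAt_slice _ k t x (dbAt i j)
  have Sl : ∀ i k, HasDerivAt (fun y => pxd ℓ i t (Function.update x k y))
      (pxd (pxd ℓ i) k t x) (x k) := fun i k => hasDerivAt_slice _ k t x (dplAt i)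
  have Sv : ∀ i k, HasDerivAt (fun y => pxd v i t (Function.update x k y))
      (pxd (pxd v i) k t x) (x k) := fun i k => hasDerivAt_slice _ k t x (dpvAt i)
  have Sv0 : ∀ k, HasDerivAt (fun y => v t (Function.update x k y)) (pxd v k t x) (x k) :=
    fun k => hasDerivAt_slice _ k t x dvAt
  have SA : ∀ k, HasDerivAt (fun y => A t (Function.update x k y)) (pxd A k t x) (x k) :=
    fun k => hasDerivAt_slice _ k t x dAt
  -- expansion lemmas
  have E1 : ∀ i j : Fin n, pxd (fun s y => b i j s y * pxd v i s y) j t x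
      = pxd (b i j) j t x * pxd v i t x + b i j t x * pxd (pxd v i) j t x := by
    intro i j
    have h := ((Sb i j j).mul (Sv i j)).deriv
    simp only [Function.update_eq_self, Pi.mul_def] at h
    exact h
  have E3a : ∀ i' j j' : Fin n, pxd (fun s y => b i' j s y * pxd ℓ i' s y) j' t x
      = pxd (b i' j) j' t x * pxd ℓ i' t x + b i' j t x * pxd (pxd ℓ i') j' t x := by
    intro i' j j'
    have h := ((Sb i' j j').mul (Sl i' j')).deriv
    simp only [Function.update_eq_self, Pi.mul_def] at h
    exact h
  have E3b : ∀ i j i' j' : Fin n, pxd (fun s y => b i j s y * b i' j' s y * pxd ℓ i' s y) j' t x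
      = pxd (b i j) j' t x * b i' j' t x * pxd ℓ i' t x
        + b i j t x * pxd (b i' j') j' t x * pxd ℓ i' t x
        + b i j t x * b i' j' t x * pxd (pxd ℓ i') j' t x := by
    intro i j i' j'
    have h := ((((Sb i j j').mul (Sb i' j' j')).mul (Sl i' j'))).deriv
    simp only [Function.update_eq_self, Pi.mul_def] at h
    exact h.trans (by ring)
  have E5 : ∀ i j : Fin n, pxd (fun s y => A s y * b i j s y * pxd ℓ i s y) j t x
      = pxd A j t x * b i j t x * pxd ℓ i t x + A t x * pxd (b i j) j t x * pxd ℓ i t x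
        + A t x * b i j t x * pxd (pxd ℓ i) j t x := by
    intro i j
    have h := (((SA j).mul (Sb i j j)).mul (Sl i j)).deriv
    simp only [Function.update_eq_self, Pi.mul_def] at h
    exact h.trans (by ring)
  have E2 : ∀ i j : Fin n, pxd (fun s y =>
        (∑ i', ∑ j',
          (2 * b i j s y * b i' j' s y * pxd ℓ i' s y * pxd v i s y * pxd v j' s y
            - b i j s y * b i' j' s y * pxd ℓ i s y * pxd v i' s y * pxd v j' s y))
          - A s y * b i j s y * pxd ℓ i s y * (v s y) ^ 2) j t x
      = (∑ i', ∑ j',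
          (2 * pxd (b i j) j t x * b i' j' t x * pxd ℓ i' t x * pxd v i t x * pxd v j' t x
            + 2 * b i j t x * pxd (b i' j') j t x * pxd ℓ i' t x * pxd v i t x * pxd v j' t x
            + 2 * b i j t x * b i' j' t x * pxd (pxd ℓ i') j t x * pxd v i t x * pxd v j' t x
            + 2 * b i j t x * b i' j' t x * pxd ℓ i' t x * pxd (pxd v i) j t x * pxd v j' t x
            + 2 * b i j t x * b i' j' t x * pxd ℓ i' t x * pxd v i t x * pxd (pxd v j') j t x
            - (pxd (b i j) j t x * b i' j' t x * pxd ℓ i t x * pxd v i' t x * pxd v j' t x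
              + b i j t x * pxd (b i' j') j t x * pxd ℓ i t x * pxd v i' t x * pxd v j' t x
              + b i j t x * b i' j' t x * pxd (pxd ℓ i) j t x * pxd v i' t x * pxd v j' t x
              + b i j t x * b i' j' t x * pxd ℓ i t x * pxd (pxd v i') j t x * pxd v j' t x
              + b i j t x * b i' j' t x * pxd ℓ i t x * pxd v i' t x * pxd (pxd v j') j t x)))
        - (pxd A j t x * b i j t x * pxd ℓ i t x * (v t x) ^ 2
          + A t x * pxd (b i j) j t x * pxd ℓ i t x * (v t x) ^ 2
          + A t x * b i j t x * pxd (pxd ℓ i) j t x * (v t x) ^ 2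
          + 2 * A t x * b i j t x * pxd ℓ i t x * v t x * pxd v j t x) := by
    intro i j
    have H0 := (HasDerivAt.sum (fun i' (_ : i' ∈ Finset.univ) =>
        HasDerivAt.sum (fun j' (_ : j' ∈ Finset.univ) =>
          ((((((Sb i j j).const_mul (2:ℝ)).mul (Sb i' j' j)).mul (Sl i' j)).mul (Sv i j)).mul
              (Sv j' j)).sub
            (((((Sb i j j).mul (Sb i' j' j)).mul (Sl i j)).mul (Sv i' j)).mul (Sv j' j))))).sub
      ((((SA j).mul (Sb i j j)).mul (Sl i j)).mul ((Sv0 j).pow 2))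
    have h := H0.deriv
    simp only [Function.update_eq_self, Pi.mul_def, Pi.sub_def, Pi.pow_def, Finset.sum_fn] at h
    refine h.trans ?_
    congr 1
    · refine Finset.sum_congr rfl fun i' _ => Finset.sum_congr rfl fun j' _ => by ring
    · push_cast
      ring
  -- rewrite the goal in terms of pointwise atoms
  simp only [E1, E2, E3a, E3b, E5]
  exact key_algebra (fun i j => b i j t x) (fun i j k => pxd (b i j) k t x)
    (fun i => pxd ℓ i t x) (fun i j => pxd (pxd ℓ i) j t x)
    (fun i => pxd v i t x) (fun j => pxd A j t x)
    (fun i j => pxd (pxd v i) j t x) (v t x) (A t x)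
    (fun i j => by show b i j t x = b j i t x; rw [hbsym i j])
    (fun i j => by
      show pxd (pxd v i) j t x = pxd (pxd v j) i t x
      exact pxd_comm v (by exact_mod_cast hv2) i j t x)
end

section
/- Define B = AΨ + ∂_t(Aℓ_t) − Σ_i ∂_{x_i}(Aℓ_i), where A = (ℓ_t² − ℓ_tt) − Σ_i(ℓ_i² − ℓ_{ii}) − Ψ, ℓ(t,x) = λ[|x−x₀|² − c(t−T/2)²] and Ψ = (2n−2c−1+k)λ. Then there exists a constant C > 0, depending only on n, c, k, T and R₁, such that for every λ ≥ 1, every t ∈ [0,T] and every x ∈ ℝⁿ with |x−x₀| ≤ R₁, one has | B(t,x) − 4λ³[ (4c+5−k)|x−x₀|² − (8c+1−k)c²(t−T/2)² ] | ≤ C λ². (This is the expansion of B in (3.3) of the paper, with the O(λ²) remainder made explicit.) -/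
open scoped BigOperators

private lemma sum_update_deriv {n : ℕ} (x₀ x : Fin n → ℝ) (i : Fin n) :
    HasDerivAt (fun y : ℝ => ∑ j, (Function.update x i y j - x₀ j) ^ 2)
      (2 * (x i - x₀ i)) (x i) := by
  have h : ∀ j ∈ Finset.univ, HasDerivAt
      (fun y : ℝ => (Function.update x i y j - x₀ j) ^ 2)
      (if j = i then 2 * (x i - x₀ i) else 0) (x i) := by
    intro j _
    rcases eq_or_ne j i with rfl | hj
    · simp only [Function.update_self, if_pos rfl]
      have h1 : HasDerivAt (fun y : ℝ => y - x₀ j) 1 (x j) := (hasDerivAt_id _).sub_const _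
      have h2 := h1.fun_pow 2
      convert h2 using 1
      all_goals first | rfl | (push_cast; ring)
    · simp only [Function.update_of_ne hj, if_neg hj]
      exact hasDerivAt_const _ _
  have := HasDerivAt.fun_sum h
  simpa using this

/-- Expansion of the zeroth-order Carleman coefficient `B` in (3.3)
of the paper, with the `O(λ²)` remainder made explicit: for `λ ≥ 1`, `t ∈ [0,T]` and
`|x − x₀| ≤ R₁`, one has `|B − 4λ³[(4c+5−k)|x−x₀|² − (8c+1−k)c²(t−T/2)²]| ≤ Cλ²`. -/
theorem stmt_9 {n : ℕ} (hn : 1 ≤ n) (x₀ : Fin n → ℝ) (T R₁ c k : ℝ)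
    (hT : 0 < T) (hR₁ : 0 < R₁) (hc : 0 < c)
    (ℓ : ℝ → ℝ → (Fin n → ℝ) → ℝ)
    (hℓ : ℓ = fun lam t x => lam * ((∑ i, (x i - x₀ i) ^ 2) - c * (t - T / 2) ^ 2))
    (Ψ : ℝ → ℝ) (hΨ : Ψ = fun lam => (2 * (n : ℝ) - 2 * c - 1 + k) * lam)
    (A : ℝ → ℝ → (Fin n → ℝ) → ℝ)
    (hA : A = fun lam t x =>
      ((ptd (ℓ lam) t x) ^ 2 - ptd (ptd (ℓ lam)) t x)
        - (∑ i, ((pxd (ℓ lam) i t x) ^ 2 - pxd (pxd (ℓ lam) i) i t x))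
        - Ψ lam)
    (B : ℝ → ℝ → (Fin n → ℝ) → ℝ)
    (hB : B = fun lam t x =>
      A lam t x * Ψ lam
        + ptd (fun s y => A lam s y * ptd (ℓ lam) s y) t x
        - ∑ i, pxd (fun s y => A lam s y * pxd (ℓ lam) i s y) i t x) :
    ∃ C : ℝ, 0 < C ∧
      ∀ lam : ℝ, 1 ≤ lam → ∀ t ∈ Set.Icc (0 : ℝ) T, ∀ x : Fin n → ℝ,
        Real.sqrt (∑ i, (x i - x₀ i) ^ 2) ≤ R₁ →
          |B lam t x
              - 4 * lam ^ 3 *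
                ((4 * c + 5 - k) * (∑ i, (x i - x₀ i) ^ 2)
                  - (8 * c + 1 - k) * c ^ 2 * (t - T / 2) ^ 2)|
            ≤ C * lam ^ 2 := by
  refine ⟨(4 * c + 1 - k) ^ 2 + 1, by positivity, ?_⟩
  intro lam hlam t ht x hx
  -- first time derivative of ℓ
  have h_pt : ∀ (s : ℝ) (y : Fin n → ℝ),
      ptd (ℓ lam) s y = -(2 * c * lam * (s - T / 2)) := by
    intro s y
    have h1 : HasDerivAt
        (fun u : ℝ => lam * ((∑ i, (y i - x₀ i) ^ 2) - c * (u - T / 2) ^ 2))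
        (-(2 * c * lam * (s - T / 2))) s := by
      have h2 := ((((hasDerivAt_id s).sub_const (T / 2)).fun_pow 2).const_mul c).const_sub
        (∑ i, (y i - x₀ i) ^ 2)
      have h3 := h2.const_mul lam
      convert h3 using 1
      all_goals first | rfl | (simp only [id_eq]; push_cast; ring) | (push_cast; ring)
    simp only [hℓ, ptd]
    exact h1.deriv
  -- second time derivative of ℓ
  have h_ptt : ∀ (s : ℝ) (y : Fin n → ℝ),
      ptd (ptd (ℓ lam)) s y = -(2 * c * lam) := by
    intro s y
    show deriv (fun u => ptd (ℓ lam) u y) s = _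
    rw [show (fun u => ptd (ℓ lam) u y) = fun u : ℝ => -(2 * c * lam * (u - T / 2)) from
      funext fun u => h_pt u y]
    have h1 : HasDerivAt (fun u : ℝ => -(2 * c * lam * (u - T / 2))) (-(2 * c * lam)) s := by
      have h2 := (((hasDerivAt_id s).sub_const (T / 2)).const_mul (2 * c * lam)).fun_neg
      convert h2 using 1
      all_goals first | rfl | ring
    exact h1.deriv
  -- first spatial derivatives of ℓ
  have h_px : ∀ (i : Fin n) (s : ℝ) (y : Fin n → ℝ),
      pxd (ℓ lam) i s y = 2 * lam * (y i - x₀ i) := by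
    intro i s y
    have h1 : HasDerivAt
        (fun v : ℝ => lam * ((∑ j, (Function.update y i v j - x₀ j) ^ 2)
          - c * (s - T / 2) ^ 2)) (2 * lam * (y i - x₀ i)) (y i) := by
      have h2 := ((sum_update_deriv x₀ y i).sub_const (c * (s - T / 2) ^ 2)).const_mul lam
      convert h2 using 1
      all_goals first | rfl | ring
    simp only [hℓ, pxd]
    exact h1.deriv
  -- second spatial derivatives of ℓ
  have h_pxx : ∀ (i : Fin n) (s : ℝ) (y : Fin n → ℝ),
      pxd (pxd (ℓ lam) i) i s y = 2 * lam := by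
    intro i s y
    show deriv (fun v => pxd (ℓ lam) i s (Function.update y i v)) (y i) = _
    rw [show (fun v => pxd (ℓ lam) i s (Function.update y i v))
        = fun v : ℝ => 2 * lam * (v - x₀ i) from funext fun v => by
          rw [h_px i s (Function.update y i v), Function.update_self]]
    have h1 : HasDerivAt (fun v : ℝ => 2 * lam * (v - x₀ i)) (2 * lam) (y i) := by
      have h2 := ((hasDerivAt_id (y i)).sub_const (x₀ i)).const_mul (2 * lam)
      convert h2 using 1
      all_goals first | rfl | ring
    exact h1.deriv
  -- closed form for A
  have h_A : ∀ (s : ℝ) (y : Fin n → ℝ),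
      A lam s y = 4 * lam ^ 2 * (c ^ 2 * (s - T / 2) ^ 2 - ∑ i, (y i - x₀ i) ^ 2)
        + (4 * c + 1 - k) * lam := by
    intro s y
    have hsum : ∑ i, ((pxd (ℓ lam) i s y) ^ 2 - pxd (pxd (ℓ lam) i) i s y)
        = 4 * lam ^ 2 * (∑ i, (y i - x₀ i) ^ 2) - 2 * lam * n := by
      have : ∀ i ∈ Finset.univ, (pxd (ℓ lam) i s y) ^ 2 - pxd (pxd (ℓ lam) i) i s y
          = 4 * lam ^ 2 * (y i - x₀ i) ^ 2 - 2 * lam := by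
        intro i _
        rw [h_px i s y, h_pxx i s y]; ring
      rw [Finset.sum_congr rfl this, Finset.sum_sub_distrib, ← Finset.mul_sum,
        Finset.sum_const, Finset.card_univ, Fintype.card_fin, nsmul_eq_mul]
      ring
    rw [hA]
    simp only [h_pt s y, h_ptt s y, hsum, hΨ]
    ring
  set τ : ℝ := t - T / 2 with hτ
  set S : ℝ := ∑ i, (x i - x₀ i) ^ 2 with hS
  -- time-derivative term of B
  have h_Bt : ptd (fun s y => A lam s y * ptd (ℓ lam) s y) t x
      = -16 * c ^ 3 * lam ^ 3 * τ ^ 2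
        - 2 * c * lam * (4 * lam ^ 2 * (c ^ 2 * τ ^ 2 - S) + (4 * c + 1 - k) * lam) := by
    show deriv (fun s => A lam s x * ptd (ℓ lam) s x) t = _
    rw [show (fun s => A lam s x * ptd (ℓ lam) s x)
        = fun s : ℝ => (4 * lam ^ 2 * (c ^ 2 * (s - T / 2) ^ 2 - S) + (4 * c + 1 - k) * lam)
            * (-(2 * c * lam * (s - T / 2))) from funext fun s => by
          rw [h_A s x, h_pt s x]]
    have hF : HasDerivAt
        (fun s : ℝ => 4 * lam ^ 2 * (c ^ 2 * (s - T / 2) ^ 2 - S) + (4 * c + 1 - k) * lam)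
        (8 * lam ^ 2 * c ^ 2 * τ) t := by
      have h2 := (((((hasDerivAt_id t).sub_const (T / 2)).fun_pow 2).const_mul (c ^ 2)).sub_const
        S).const_mul (4 * lam ^ 2) |>.add_const ((4 * c + 1 - k) * lam)
      convert h2 using 1
      all_goals first | rfl | (simp only [id_eq]; push_cast; ring) | (push_cast; ring)
    have hG : HasDerivAt (fun s : ℝ => -(2 * c * lam * (s - T / 2))) (-(2 * c * lam)) t := by
      have h2 := (((hasDerivAt_id t).sub_const (T / 2)).const_mul (2 * c * lam)).fun_neg
      convert h2 using 1
      all_goals first | rfl | ring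
    rw [(hF.fun_mul hG).deriv]
    ring
  -- spatial-derivative terms of B
  have h_Bx : ∀ i : Fin n, pxd (fun s y => A lam s y * pxd (ℓ lam) i s y) i t x
      = -16 * lam ^ 3 * (x i - x₀ i) ^ 2
        + 2 * lam * (4 * lam ^ 2 * (c ^ 2 * τ ^ 2 - S) + (4 * c + 1 - k) * lam) := by
    intro i
    show deriv (fun v => A lam t (Function.update x i v)
        * pxd (ℓ lam) i t (Function.update x i v)) (x i) = _
    rw [show (fun v => A lam t (Function.update x i v) * pxd (ℓ lam) i t (Function.update x i v))
        = fun v : ℝ => (4 * lam ^ 2 * (c ^ 2 * τ ^ 2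
              - ∑ j, (Function.update x i v j - x₀ j) ^ 2) + (4 * c + 1 - k) * lam)
            * (2 * lam * (v - x₀ i)) from funext fun v => by
          rw [h_A t (Function.update x i v), h_px i t (Function.update x i v),
            Function.update_self]]
    have hF : HasDerivAt
        (fun v : ℝ => 4 * lam ^ 2 * (c ^ 2 * τ ^ 2
            - ∑ j, (Function.update x i v j - x₀ j) ^ 2) + (4 * c + 1 - k) * lam)
        (-(8 * lam ^ 2 * (x i - x₀ i))) (x i) := by
      have h2 := (((sum_update_deriv x₀ x i).const_sub (c ^ 2 * τ ^ 2)).const_mul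
        (4 * lam ^ 2)).add_const ((4 * c + 1 - k) * lam)
      convert h2 using 1
      all_goals first | rfl | ring
    have hG : HasDerivAt (fun v : ℝ => 2 * lam * (v - x₀ i)) (2 * lam) (x i) := by
      have h2 := ((hasDerivAt_id (x i)).sub_const (x₀ i)).const_mul (2 * lam)
      convert h2 using 1
      all_goals first | rfl | ring
    rw [(hF.fun_mul hG).deriv]
    simp only [Function.update_eq_self]
    rw [← hS]
    ring
  -- closed form for B
  have h_Bsum : ∑ i, pxd (fun s y => A lam s y * pxd (ℓ lam) i s y) i t x
      = -16 * lam ^ 3 * S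
        + n * (2 * lam * (4 * lam ^ 2 * (c ^ 2 * τ ^ 2 - S) + (4 * c + 1 - k) * lam)) := by
    rw [Finset.sum_congr rfl fun i _ => h_Bx i, Finset.sum_add_distrib, Finset.sum_const,
      Finset.card_univ, Fintype.card_fin, nsmul_eq_mul, ← Finset.mul_sum, ← hS]
    try ring
  have h_Bval : B lam t x
      = 4 * lam ^ 3 * ((4 * c + 5 - k) * S - (8 * c + 1 - k) * c ^ 2 * τ ^ 2)
        - (4 * c + 1 - k) ^ 2 * lam ^ 2 := by
    rw [hB]
    simp only
    rw [h_A t x, h_Bt, h_Bsum, hΨ]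
    ring
  rw [h_Bval]
  have h1 : |4 * lam ^ 3 * ((4 * c + 5 - k) * S - (8 * c + 1 - k) * c ^ 2 * τ ^ 2)
      - (4 * c + 1 - k) ^ 2 * lam ^ 2
      - 4 * lam ^ 3 * ((4 * c + 5 - k) * S - (8 * c + 1 - k) * c ^ 2 * τ ^ 2)|
      = (4 * c + 1 - k) ^ 2 * lam ^ 2 := by
    rw [show 4 * lam ^ 3 * ((4 * c + 5 - k) * S - (8 * c + 1 - k) * c ^ 2 * τ ^ 2)
        - (4 * c + 1 - k) ^ 2 * lam ^ 2
        - 4 * lam ^ 3 * ((4 * c + 5 - k) * S - (8 * c + 1 - k) * c ^ 2 * τ ^ 2)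
        = -((4 * c + 1 - k) ^ 2 * lam ^ 2) by ring, abs_neg, abs_of_nonneg (by positivity)]
  rw [h1]
  nlinarith [sq_nonneg lam, sq_nonneg (4 * c + 1 - k)]
end

section
/- Let u : ℝ×ℝⁿ → ℝ be C³ in time and C² overall and set v = θu. Then at every point (t,x) ∈ ℝ×ℝⁿ: θ(−2ℓ_t v_t + 2∇ℓ·∇v + Ψ v)(u_tt − Δu) + ∂_t[ ℓ_t(v_t² + |∇v|²) − 2(∇ℓ·∇v)v_t − Ψ v v_t + Aℓ_t v² ] + Σ_{i=1}^n ∂_{x_i}[ 2 v_i (∇ℓ·∇v) − ℓ_i |∇v|² − 2ℓ_t v_t v_i + ℓ_i v_t² + Ψ v v_i − Aℓ_i v² ] = (1−k)λ v_t² + (k+3−4c)λ |∇v|² + B v² + (−2ℓ_t v_t + 2∇ℓ·∇v + Ψ v)², where A = 4λ²[c²(t−T/2)² − |x−x₀|²] + (4c+1−k)λ and B = AΨ + ∂_t(Aℓ_t) − Σ_i ∂_{x_i}(Aℓ_i). (This is the noise-free, deterministic version of the pointwise Carleman-type estimate of Lemma 3.1 of the paper, which there holds with ≥ in the stochastic setting;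 in the deterministic case it is an identity.) -/
open scoped BigOperators

section generic
variable {n : ℕ} {f : ℝ → (Fin n → ℝ) → ℝ}

/-- time curve -/
lemma curve_t (t : ℝ) (x : Fin n → ℝ) :
    HasDerivAt (fun s : ℝ => ((s, x) : ℝ × (Fin n → ℝ))) (1, 0) t :=
  (hasDerivAt_id t).prodMk (hasDerivAt_const t x)

lemma update_eq_line (x : Fin n → ℝ) (i : Fin n) (y : ℝ) :
    Function.update x i y = x + (y - x i) • (Pi.single i 1 : Fin n → ℝ) := by
  funext j
  by_cases h : j = i
  · subst h; simp
  · simp [Function.update_apply, h, Pi.single_apply, Ne.symm h]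

lemma curve_x (t : ℝ) (x : Fin n → ℝ) (i : Fin n) :
    HasDerivAt (fun y : ℝ => ((t, Function.update x i y) : ℝ × (Fin n → ℝ)))
      ((0, Pi.single i 1) : ℝ × (Fin n → ℝ)) (x i) := by
  have h2 : HasDerivAt (fun y : ℝ => x + (y - x i) • (Pi.single i 1 : Fin n → ℝ))
      ((Pi.single i 1 : Fin n → ℝ)) (x i) := by
    have : HasDerivAt (fun y : ℝ => (y - x i)) 1 (x i) :=
      (hasDerivAt_id (x i)).sub_const (x i)
    simpa using (this.smul_const ((Pi.single i 1 : Fin n → ℝ))).const_add x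
  have := (hasDerivAt_const (x i) t).prodMk h2
  simpa [← update_eq_line] using this

lemma hasDerivAt_time (hf : DifferentiableAt ℝ (fun p : ℝ × (Fin n → ℝ) => f p.1 p.2) (t, x)) :
    HasDerivAt (fun s => f s x)
      (fderiv ℝ (fun p : ℝ × (Fin n → ℝ) => f p.1 p.2) (t, x) (1, 0)) t := by
  simpa [Function.comp_def] using (hf.hasFDerivAt.comp_hasDerivAt t (curve_t t x))

lemma hasDerivAt_space (i : Fin n)
    (hf : DifferentiableAt ℝ (fun p : ℝ × (Fin n → ℝ) => f p.1 p.2) (t, x)) :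
    HasDerivAt (fun y => f t (Function.update x i y))
      (fderiv ℝ (fun p : ℝ × (Fin n → ℝ) => f p.1 p.2) (t, x) ((0, Pi.single i 1) : ℝ × (Fin n → ℝ))) (x i) := by
  have hf' : DifferentiableAt ℝ (fun p : ℝ × (Fin n → ℝ) => f p.1 p.2)
      (t, Function.update x i (x i)) := by simpa using hf
  have := hf'.hasFDerivAt.comp_hasDerivAt (x i) (curve_x t x i)
  simpa [Function.comp_def] using this

lemma ptd_eq_fderiv (hf : DifferentiableAt ℝ (fun p : ℝ × (Fin n → ℝ) => f p.1 p.2) (t, x)) :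
    ptd f t x = fderiv ℝ (fun p : ℝ × (Fin n → ℝ) => f p.1 p.2) (t, x) (1, 0) :=
  (hasDerivAt_time hf).deriv

lemma pxd_eq_fderiv (i : Fin n)
    (hf : DifferentiableAt ℝ (fun p : ℝ × (Fin n → ℝ) => f p.1 p.2) (t, x)) :
    pxd f i t x = fderiv ℝ (fun p : ℝ × (Fin n → ℝ) => f p.1 p.2) (t, x) ((0, Pi.single i 1) : ℝ × (Fin n → ℝ)) :=
  (hasDerivAt_space i hf).deriv

end generic

section second
variable {n : ℕ} {f : ℝ → (Fin n → ℝ) → ℝ}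
  (hf : ContDiff ℝ 2 (fun p : ℝ × (Fin n → ℝ) => f p.1 p.2))

/-- abbreviation for the uncurried function -/
private def F (f : ℝ → (Fin n → ℝ) → ℝ) : ℝ × (Fin n → ℝ) → ℝ := fun p => f p.1 p.2

include hf in
lemma hasFDerivAt_fderiv_apply (e : ℝ × (Fin n → ℝ)) (q : ℝ × (Fin n → ℝ)) :
    HasFDerivAt (fun p => fderiv ℝ (F f) p e)
      ((ContinuousLinearMap.apply ℝ ℝ e).comp (fderiv ℝ (fderiv ℝ (F f)) q)) q := by
  have h1 : ContDiff ℝ 1 (fderiv ℝ (F f)) := ContDiff.fderiv_right hf (le_refl _)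
  exact (ContinuousLinearMap.apply ℝ ℝ e).hasFDerivAt.comp q
    ((h1.differentiable one_ne_zero q).hasFDerivAt)

include hf in
lemma hasDerivAt_time2 (t : ℝ) (x : Fin n → ℝ) (e : ℝ × (Fin n → ℝ)) :
    HasDerivAt (fun s => fderiv ℝ (F f) (s, x) e)
      (fderiv ℝ (fderiv ℝ (F f)) (t, x) (1, 0) e) t := by
  simpa [Function.comp_def] using ((hasFDerivAt_fderiv_apply hf e (t, x)).comp_hasDerivAt t (curve_t t x))

include hf in
lemma hasDerivAt_space2 (t : ℝ) (x : Fin n → ℝ) (i : Fin n) (e : ℝ × (Fin n → ℝ)) :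
    HasDerivAt (fun y => fderiv ℝ (F f) (t, Function.update x i y) e)
      (fderiv ℝ (fderiv ℝ (F f)) (t, x) ((0, Pi.single i 1) : ℝ × (Fin n → ℝ)) e) (x i) := by
  have h := (hasFDerivAt_fderiv_apply hf e
      (t, Function.update x i (x i))).comp_hasDerivAt (x i) (curve_x t x i)
  simpa [Function.comp_def] using h

include hf in
lemma symm2 (t : ℝ) (x : Fin n → ℝ) (a b : ℝ × (Fin n → ℝ)) :
    fderiv ℝ (fderiv ℝ (F f)) (t, x) a b = fderiv ℝ (fderiv ℝ (F f)) (t, x) b a :=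
  (hf.contDiffAt.isSymmSndFDerivAt (by simp)) a b

end second

section derived
variable {n : ℕ} {f : ℝ → (Fin n → ℝ) → ℝ}
  (hf : ContDiff ℝ 2 (fun p : ℝ × (Fin n → ℝ) => f p.1 p.2))

/-- second derivative bilinear form -/
noncomputable def Hd (f : ℝ → (Fin n → ℝ) → ℝ) (t : ℝ) (x : Fin n → ℝ)
    (a b : ℝ × (Fin n → ℝ)) : ℝ :=
  fderiv ℝ (fderiv ℝ (F f)) (t, x) a b

noncomputable def dirT {n : ℕ} : ℝ × (Fin n → ℝ) := (1, 0)
noncomputable def dirX {n : ℕ} (i : Fin n) : ℝ × (Fin n → ℝ) := (0, Pi.single i 1)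

include hf

lemma hd_symm (t : ℝ) (x : Fin n → ℝ) (a b : ℝ × (Fin n → ℝ)) :
    Hd f t x a b = Hd f t x b a := symm2 hf t x a b

lemma hasDerivAt_f_time (t : ℝ) (x : Fin n → ℝ) :
    HasDerivAt (fun s => f s x) (ptd f t x) t := by
  have h := hasDerivAt_time (f := f)
    ((hf.differentiable (by norm_num)) (t, x))
  rwa [ptd_eq_fderiv ((hf.differentiable (by norm_num)) (t, x))]

lemma hasDerivAt_f_space (t : ℝ) (x : Fin n → ℝ) (i : Fin n) :
    HasDerivAt (fun y => f t (Function.update x i y)) (pxd f i t x) (x i) := by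
  have h := hasDerivAt_space (f := f) i ((hf.differentiable (by norm_num)) (t, x))
  rwa [pxd_eq_fderiv i ((hf.differentiable (by norm_num)) (t, x))]

lemma funext_ptd : ∀ s y, ptd f s y = fderiv ℝ (F f) (s, y) dirT := by
  intro s y
  exact ptd_eq_fderiv ((hf.differentiable (by norm_num)) (s, y))

lemma funext_pxd (j : Fin n) :
    ∀ s y, pxd f j s y = fderiv ℝ (F f) (s, y) (dirX j) := by
  intro s y
  exact pxd_eq_fderiv j ((hf.differentiable (by norm_num)) (s, y))

lemma hasDerivAt_ptd_time (t : ℝ) (x : Fin n → ℝ) :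
    HasDerivAt (fun s => ptd f s x) (Hd f t x dirT dirT) t := by
  have : (fun s => ptd f s x) = fun s => fderiv ℝ (F f) (s, x) dirT := by
    funext s; exact funext_ptd hf s x
  rw [this]; exact hasDerivAt_time2 hf t x dirT

lemma hasDerivAt_pxd_time (t : ℝ) (x : Fin n → ℝ) (j : Fin n) :
    HasDerivAt (fun s => pxd f j s x) (Hd f t x dirT (dirX j)) t := by
  have : (fun s => pxd f j s x) = fun s => fderiv ℝ (F f) (s, x) (dirX j) := by
    funext s; exact funext_pxd hf j s x
  rw [this]; exact hasDerivAt_time2 hf t x (dirX j)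

lemma hasDerivAt_ptd_space (t : ℝ) (x : Fin n → ℝ) (i : Fin n) :
    HasDerivAt (fun y => ptd f t (Function.update x i y)) (Hd f t x (dirX i) dirT) (x i) := by
  have : (fun y => ptd f t (Function.update x i y))
      = fun y => fderiv ℝ (F f) (t, Function.update x i y) dirT := by
    funext y; exact funext_ptd hf t _
  rw [this]; exact hasDerivAt_space2 hf t x i dirT

lemma hasDerivAt_pxd_space (t : ℝ) (x : Fin n → ℝ) (i j : Fin n) :
    HasDerivAt (fun y => pxd f j t (Function.update x i y))
      (Hd f t x (dirX i) (dirX j)) (x i) := by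
  have : (fun y => pxd f j t (Function.update x i y))
      = fun y => fderiv ℝ (F f) (t, Function.update x i y) (dirX j) := by
    funext y; exact funext_pxd hf j t _
  rw [this]; exact hasDerivAt_space2 hf t x i (dirX j)

lemma ptd_ptd_eq (t : ℝ) (x : Fin n → ℝ) :
    ptd (ptd f) t x = Hd f t x dirT dirT := (hasDerivAt_ptd_time hf t x).deriv

lemma ptd_pxd_eq (t : ℝ) (x : Fin n → ℝ) (j : Fin n) :
    ptd (pxd f j) t x = Hd f t x dirT (dirX j) := (hasDerivAt_pxd_time hf t x j).deriv

lemma pxd_ptd_eq (t : ℝ) (x : Fin n → ℝ) (i : Fin n) :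
    pxd (ptd f) i t x = Hd f t x (dirX i) dirT := (hasDerivAt_ptd_space hf t x i).deriv

lemma pxd_pxd_eq (t : ℝ) (x : Fin n → ℝ) (i j : Fin n) :
    pxd (pxd f j) i t x = Hd f t x (dirX i) (dirX j) := (hasDerivAt_pxd_space hf t x i j).deriv

end derived

section conc
variable {n : ℕ} (x₀ : Fin n → ℝ) (T c lam : ℝ) {ℓ : ℝ → (Fin n → ℝ) → ℝ}

lemma hasDerivAt_sumsq (y : Fin n → ℝ) (i : Fin n) (z : ℝ) :
    HasDerivAt (fun z => ∑ j, (Function.update y i z j - x₀ j)^2)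
      (2*(z - x₀ i)) z := by
  have h : ∀ j : Fin n, HasDerivAt (fun z : ℝ => (Function.update y i z j - x₀ j)^2)
      (if i = j then 2*(z - x₀ i) else 0) z := by
    intro j
    by_cases hji : j = i
    · subst hji
      simp only [Function.update_self, if_pos rfl]
      have := ((hasDerivAt_id z).sub_const (x₀ j)).fun_pow 2
      simpa [mul_comm] using this
    · simp only [Function.update_apply, if_neg hji, if_neg (Ne.symm hji)]
      exact hasDerivAt_const z _
  have := HasDerivAt.fun_sum (fun j (_ : j ∈ Finset.univ) => h j)
  simpa [Finset.sum_ite_eq] using this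

lemma hasDerivAt_ell_time (hℓ : ∀ s (y : Fin n → ℝ), ℓ s y
      = lam * ((∑ i, (y i - x₀ i) ^ 2) - c * (s - T / 2) ^ 2))
    (s : ℝ) (y : Fin n → ℝ) :
    HasDerivAt (fun r => ℓ r y) (-(2*c*lam)*(s - T/2)) s := by
  have h1 : HasDerivAt (fun r : ℝ => lam * ((∑ i, (y i - x₀ i) ^ 2) - c * (r - T / 2) ^ 2))
      (lam * (-(c * (2 * (s - T/2))))) s := by
    have h2 : HasDerivAt (fun r : ℝ => (r - T/2)^2) (2*(s - T/2)) s := by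
      simpa [mul_comm] using ((hasDerivAt_id s).sub_const (T/2)).fun_pow 2
    exact ((h2.const_mul c).const_sub _).const_mul lam
  have : (fun r => ℓ r y) = fun r : ℝ =>
      lam * ((∑ i, (y i - x₀ i) ^ 2) - c * (r - T / 2) ^ 2) := by
    funext r; exact hℓ r y
  rw [this]
  convert h1 using 1; ring

lemma hasDerivAt_ell_space (hℓ : ∀ s (y : Fin n → ℝ), ℓ s y
      = lam * ((∑ i, (y i - x₀ i) ^ 2) - c * (s - T / 2) ^ 2))
    (s : ℝ) (y : Fin n → ℝ) (i : Fin n) :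
    HasDerivAt (fun z => ℓ s (Function.update y i z)) (2*lam*(y i - x₀ i)) (y i) := by
  have h1 : HasDerivAt (fun z => lam * ((∑ j, (Function.update y i z j - x₀ j) ^ 2)
        - c * (s - T / 2) ^ 2)) (lam * (2*(y i - x₀ i))) (y i) :=
    (((hasDerivAt_sumsq x₀ y i (y i))).sub_const _).const_mul lam
  have : (fun z => ℓ s (Function.update y i z)) = fun z =>
      lam * ((∑ j, (Function.update y i z j - x₀ j) ^ 2) - c * (s - T / 2) ^ 2) := by
    funext z; exact hℓ s _
  rw [this]
  convert h1 using 1; ring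

lemma ptd_ell (hℓ : ∀ s (y : Fin n → ℝ), ℓ s y
      = lam * ((∑ i, (y i - x₀ i) ^ 2) - c * (s - T / 2) ^ 2)) :
    ∀ s (y : Fin n → ℝ), ptd ℓ s y = -(2*c*lam)*(s - T/2) := fun s y =>
  (hasDerivAt_ell_time x₀ T c lam hℓ s y).deriv

lemma pxd_ell (hℓ : ∀ s (y : Fin n → ℝ), ℓ s y
      = lam * ((∑ i, (y i - x₀ i) ^ 2) - c * (s - T / 2) ^ 2)) (i : Fin n) :
    ∀ s (y : Fin n → ℝ), pxd ℓ i s y = 2*lam*(y i - x₀ i) := fun s y =>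
  (hasDerivAt_ell_space x₀ T c lam hℓ s y i).deriv

end conc

section theta
variable {n : ℕ} (x₀ : Fin n → ℝ) (T c lam : ℝ) {ℓ θ : ℝ → (Fin n → ℝ) → ℝ}
  (hℓ : ∀ s (y : Fin n → ℝ), ℓ s y
      = lam * ((∑ i, (y i - x₀ i) ^ 2) - c * (s - T / 2) ^ 2))
  (hθ : ∀ s (y : Fin n → ℝ), θ s y = Real.exp (ℓ s y))

include hℓ hθ in
lemma hasDerivAt_theta_time (s : ℝ) (y : Fin n → ℝ) :
    HasDerivAt (fun r => θ r y) (-(2*c*lam)*(s - T/2) * θ s y) s := by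
  have h := (hasDerivAt_ell_time x₀ T c lam hℓ s y).exp
  have he : (fun r => θ r y) = fun r => Real.exp (ℓ r y) := by
    funext r; exact hθ r y
  rw [he, ← hθ s y] at *
  convert h using 1; ring

include hℓ hθ in
lemma hasDerivAt_theta_space (s : ℝ) (y : Fin n → ℝ) (i : Fin n) :
    HasDerivAt (fun z => θ s (Function.update y i z)) (2*lam*(y i - x₀ i) * θ s y) (y i) := by
  have h := (hasDerivAt_ell_space x₀ T c lam hℓ s y i).exp
  have he : (fun z => θ s (Function.update y i z)) = fun z => Real.exp (ℓ s (Function.update y i z)) := by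
    funext z; exact hθ s _
  rw [he]
  have : Real.exp (ℓ s (Function.update y i (y i))) = θ s y := by
    rw [Function.update_eq_self, ← hθ s y]
  rw [this] at h
  convert h using 1; ring

include hℓ in
lemma contDiff_ell : ContDiff ℝ 2 (fun p : ℝ × (Fin n → ℝ) => ℓ p.1 p.2) := by
  have : (fun p : ℝ × (Fin n → ℝ) => ℓ p.1 p.2)
      = fun p : ℝ × (Fin n → ℝ) =>
        lam * ((∑ i, (p.2 i - x₀ i) ^ 2) - c * (p.1 - T / 2) ^ 2) := by
    funext p; exact hℓ p.1 p.2
  rw [this]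
  apply ContDiff.mul contDiff_const
  apply ContDiff.sub
  · apply ContDiff.sum
    intro i _
    have h1 : ContDiff ℝ 2 (fun p : ℝ × (Fin n → ℝ) => p.2 i) :=
      (contDiff_apply ℝ ℝ i).comp contDiff_snd
    exact (h1.sub contDiff_const).pow 2
  · exact ContDiff.mul contDiff_const (((contDiff_fst.sub contDiff_const)).pow 2)

include hℓ hθ in
lemma contDiff_v {u v : ℝ → (Fin n → ℝ) → ℝ}
    (hu2 : ContDiff ℝ 2 (fun p : ℝ × (Fin n → ℝ) => u p.1 p.2))
    (hv : ∀ s y, v s y = θ s y * u s y) :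
    ContDiff ℝ 2 (fun p : ℝ × (Fin n → ℝ) => v p.1 p.2) := by
  have : (fun p : ℝ × (Fin n → ℝ) => v p.1 p.2)
      = fun p : ℝ × (Fin n → ℝ) => Real.exp (ℓ p.1 p.2) * u p.1 p.2 := by
    funext p; rw [hv p.1 p.2, hθ p.1 p.2]
  rw [this]
  exact (Real.contDiff_exp.comp (contDiff_ell x₀ T c lam hℓ)).mul hu2

end theta

/-- The noise-free, deterministic version of the pointwise
Carleman-type estimate of Lemma 3.1 of the paper (an identity in the deterministic
case), for the wave operator with weight `ℓ(t,x) = λ(|x−x₀|² − c(t−T/2)²)`. -/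
theorem stmt_10 {n : ℕ} (hn : 1 ≤ n) (x₀ : Fin n → ℝ) (T c k lam : ℝ)
    (hT : 0 < T) (hc : 0 < c) (hlam : 0 < lam)
    (ℓ θ : ℝ → (Fin n → ℝ) → ℝ)
    (hℓ : ℓ = fun t x => lam * ((∑ i, (x i - x₀ i) ^ 2) - c * (t - T / 2) ^ 2))
    (hθ : θ = fun t x => Real.exp (ℓ t x))
    (Ψ : ℝ) (hΨ : Ψ = (2 * (n : ℝ) - 2 * c - 1 + k) * lam)
    (A : ℝ → (Fin n → ℝ) → ℝ)
    (hA : A = fun t x =>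
      4 * lam ^ 2 * (c ^ 2 * (t - T / 2) ^ 2 - ∑ i, (x i - x₀ i) ^ 2)
        + (4 * c + 1 - k) * lam)
    (B : ℝ → (Fin n → ℝ) → ℝ)
    (hB : B = fun t x =>
      A t x * Ψ + ptd (fun s y => A s y * ptd ℓ s y) t x
        - ∑ i, pxd (fun s y => A s y * pxd ℓ i s y) i t x)
    (u v : ℝ → (Fin n → ℝ) → ℝ)
    (hu2 : ContDiff ℝ 2 (fun p : ℝ × (Fin n → ℝ) => u p.1 p.2))
    (hu3 : ∀ x, ContDiff ℝ 3 (fun s => u s x))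
    (hv : v = fun t x => θ t x * u t x)
    (t : ℝ) (x : Fin n → ℝ) :
    θ t x * (-2 * ptd ℓ t x * ptd v t x
          + 2 * (∑ i, pxd ℓ i t x * pxd v i t x) + Ψ * v t x)
        * (ptd (ptd u) t x - ∑ i, pxd (pxd u i) i t x)
      + ptd (fun s y =>
          ptd ℓ s y * ((ptd v s y) ^ 2 + ∑ i, (pxd v i s y) ^ 2)
            - 2 * (∑ i, pxd ℓ i s y * pxd v i s y) * ptd v s y
            - Ψ * v s y * ptd v s y
            + A s y * ptd ℓ s y * (v s y) ^ 2) t x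
      + (∑ i, pxd (fun s y =>
          2 * pxd v i s y * (∑ j, pxd ℓ j s y * pxd v j s y)
            - pxd ℓ i s y * (∑ j, (pxd v j s y) ^ 2)
            - 2 * ptd ℓ s y * ptd v s y * pxd v i s y
            + pxd ℓ i s y * (ptd v s y) ^ 2
            + Ψ * v s y * pxd v i s y
            - A s y * pxd ℓ i s y * (v s y) ^ 2) i t x)
      = (1 - k) * lam * (ptd v t x) ^ 2
        + (k + 3 - 4 * c) * lam * (∑ i, (pxd v i t x) ^ 2)
        + B t x * (v t x) ^ 2
        + (-2 * ptd ℓ t x * ptd v t x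
            + 2 * (∑ i, pxd ℓ i t x * pxd v i t x) + Ψ * v t x) ^ 2 := by

  -- pointwise forms of the hypotheses
  have hℓp : ∀ s (y : Fin n → ℝ), ℓ s y
      = lam * ((∑ i, (y i - x₀ i) ^ 2) - c * (s - T / 2) ^ 2) := fun s y => by rw [hℓ]
  have hθp : ∀ s (y : Fin n → ℝ), θ s y = Real.exp (ℓ s y) := fun s y => by rw [hθ]
  have hAp : ∀ s (y : Fin n → ℝ), A s y
      = 4 * lam ^ 2 * (c ^ 2 * (s - T / 2) ^ 2 - ∑ i, (y i - x₀ i) ^ 2)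
        + (4 * c + 1 - k) * lam := fun s y => by rw [hA]
  have hvp : ∀ s (y : Fin n → ℝ), v s y = θ s y * u s y := fun s y => by rw [hv]
  have hv2 : ContDiff ℝ 2 (fun p : ℝ × (Fin n → ℝ) => v p.1 p.2) :=
    contDiff_v x₀ T c lam hℓp hθp hu2 hvp
  have ptdl : ∀ s (y : Fin n → ℝ), ptd ℓ s y = -(2*c*lam)*(s - T/2) :=
    ptd_ell x₀ T c lam hℓp
  have pxdl : ∀ (i : Fin n) (s :ℝ) (y : Fin n → ℝ), pxd ℓ i s y = 2*lam*(y i - x₀ i) :=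
    fun i s y => pxd_ell x₀ T c lam hℓp i s y
  -- first derivatives of v in terms of u
  have hvt : ∀ s (y : Fin n → ℝ), ptd v s y
      = -(2*c*lam)*(s - T/2) * v s y + θ s y * ptd u s y := by
    intro s y
    have h := (hasDerivAt_theta_time x₀ T c lam hℓp hθp s y).fun_mul (hasDerivAt_f_time hu2 s y)
    have he : (fun r => θ r y * u r y) = fun r => v r y := by
      funext r; rw [hvp]
    rw [he] at h
    have h2 : ptd v s y = _ := h.deriv
    rw [h2, hvp s y]; ring
  have hvx : ∀ (i : Fin n) (s : ℝ) (y : Fin n → ℝ), pxd v i s y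
      = 2*lam*(y i - x₀ i) * v s y + θ s y * pxd u i s y := by
    intro i s y
    have h := (hasDerivAt_theta_space x₀ T c lam hℓp hθp s y i).fun_mul
      (hasDerivAt_f_space hu2 s y i)
    have he : (fun z => θ s (Function.update y i z) * u s (Function.update y i z))
        = fun z => v s (Function.update y i z) := by
      funext z; rw [hvp]
    rw [he] at h
    simp only [Function.update_eq_self] at h
    have h2 : pxd v i s y = _ := h.deriv
    rw [h2, hvp s y]; ring

  -- wave operator conversion
  have lin1 : ∀ s : ℝ, HasDerivAt (fun r : ℝ => -(2*c*lam)*(r - T/2)) (-(2*c*lam)) s := by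
    intro s
    simpa using ((hasDerivAt_id s).sub_const (T/2)).const_mul (-(2*c*lam))
  have theta_utt : θ t x * ptd (ptd u) t x
      = Hd v t x dirT dirT - 2*(-(2*c*lam)*(t - T/2))*ptd v t x
        + ((-(2*c*lam)*(t - T/2))^2 + 2*c*lam)*v t x := by
    have dd : HasDerivAt (fun s => -(2*c*lam)*(s - T/2) * v s x + θ s x * ptd u s x) _ t :=
      ((lin1 t).mul (hasDerivAt_f_time hv2 t x)).add
        ((hasDerivAt_theta_time x₀ T c lam hℓp hθp t x).mul (hasDerivAt_ptd_time hu2 t x))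
    have he : (fun s => ptd v s x) = fun s => -(2*c*lam)*(s - T/2) * v s x + θ s x * ptd u s x := by
      funext s; rw [hvt]
    rw [← he] at dd
    have huniq : Hd v t x dirT dirT = _ := (hasDerivAt_ptd_time hv2 t x).unique dd
    rw [ptd_ptd_eq hu2 t x]
    have h3 := hvt t x
    linear_combination (-1 : ℝ) * huniq + (-(2*c*lam)*(t - T/2)) * h3
  have theta_uii : ∀ i : Fin n, θ t x * pxd (pxd u i) i t x
      = Hd v t x (dirX i) (dirX i) - 2*(2*lam*(x i - x₀ i) * pxd v i t x)
        + (4*lam^2*(x i - x₀ i)^2 - 2*lam)*v t x := by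
    intro i
    have lin2 : HasDerivAt (fun z : ℝ => 2*lam*(z - x₀ i)) (2*lam) (x i) := by
      simpa using ((hasDerivAt_id (x i)).sub_const (x₀ i)).const_mul (2*lam)
    have dd : HasDerivAt (fun z => 2*lam*(z - x₀ i) * v t (Function.update x i z)
        + θ t (Function.update x i z) * pxd u i t (Function.update x i z)) _ (x i) :=
      (lin2.mul (hasDerivAt_f_space hv2 t x i)).add
        ((hasDerivAt_theta_space x₀ T c lam hℓp hθp t x i).mul (hasDerivAt_pxd_space hu2 t x i i))
    have he : (fun z => pxd v i t (Function.update x i z))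
        = fun z => 2*lam*(z - x₀ i) * v t (Function.update x i z)
          + θ t (Function.update x i z) * pxd u i t (Function.update x i z) := by
      funext z; rw [hvx]; simp [Function.update_self]
    rw [← he] at dd
    have huniq : Hd v t x (dirX i) (dirX i) = _ := (hasDerivAt_pxd_space hv2 t x i i).unique dd
    simp only [Function.update_eq_self] at huniq
    rw [pxd_pxd_eq hu2 t x i i]
    have h3 := hvx i t x
    linear_combination (-1 : ℝ) * huniq + (2*lam*(x i - x₀ i)) * h3

  have e1 : θ t x * (ptd (ptd u) t x - ∑ i, pxd (pxd u i) i t x)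
      = Hd v t x dirT dirT - (∑ i, Hd v t x (dirX i) (dirX i))
        - 2*(-(2*c*lam)*(t - T/2))*ptd v t x
        + 2*(∑ i, 2*lam*(x i - x₀ i)*pxd v i t x)
        + (((-(2*c*lam)*(t - T/2))^2 + 2*c*lam)
            - (4*lam^2*(∑ i, (x i - x₀ i)^2) - 2*lam*(n:ℝ)))*v t x := by
    have hsum : ∑ i, θ t x * pxd (pxd u i) i t x
        = ∑ i, (Hd v t x (dirX i) (dirX i) - 2*(2*lam*(x i - x₀ i) * pxd v i t x)
            + (4*lam^2*(x i - x₀ i)^2 - 2*lam)*v t x) :=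
      Finset.sum_congr rfl fun i _ => theta_uii i
    rw [mul_sub, Finset.mul_sum, theta_utt, hsum]
    simp only [Finset.sum_sub_distrib, Finset.sum_add_distrib, ← Finset.sum_mul,
      ← Finset.mul_sum, Finset.sum_const, Finset.card_univ, Fintype.card_fin, nsmul_eq_mul]
    ring

  rw [hB]
  simp only [ptdl, pxdl]
  -- A-term differentiability (time)
  have hA6t : HasDerivAt (fun s => A s x * (-(2*c*lam)*(s - T/2)))
      (ptd (fun s y => A s y * (-(2 * c * lam) * (s - T / 2))) t x) t := by
    have hd : DifferentiableAt ℝ (fun s => A s x * (-(2*c*lam)*(s - T/2))) t := by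
      have he : (fun s => A s x * (-(2*c*lam)*(s - T/2)))
          = fun s => (4*lam^2*(c^2*(s - T/2)^2 - ∑ i, (x i - x₀ i)^2) + (4*c+1-k)*lam)
              * (-(2*c*lam)*(s - T/2)) := by
        funext s; rw [hAp]
      rw [he]; fun_prop
    exact hd.hasDerivAt
  -- A-term differentiability (space)
  have hA6s : ∀ i : Fin n, HasDerivAt
      (fun z => A t (Function.update x i z) * (2*lam*(Function.update x i z i - x₀ i)))
      (pxd (fun s y => A s y * (2 * lam * (y i - x₀ i))) i t x) (x i) := by
    intro i
    have hd : DifferentiableAt ℝ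
        (fun z => A t (Function.update x i z) * (2*lam*(Function.update x i z i - x₀ i)))
        (x i) := by
      have he : (fun z => A t (Function.update x i z)
            * (2*lam*(Function.update x i z i - x₀ i)))
          = fun z => (4*lam^2*(c^2*(t - T/2)^2 - ∑ j, (Function.update x i z j - x₀ j)^2)
              + (4*c+1-k)*lam) * (2*lam*(z - x₀ i)) := by
        funext z; rw [hAp]; simp [Function.update_self]
      rw [he]
      have hs : DifferentiableAt ℝ (fun z => ∑ j, (Function.update x i z j - x₀ j)^2) (x i) :=
        (hasDerivAt_sumsq x₀ x i (x i)).differentiableAt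
      exact (((hs.const_sub _).const_mul _).add_const _).mul (by fun_prop)
    exact hd.hasDerivAt
  -- derivative of the rewritten spatial ℓ-gradient components
  have lxupd : ∀ i j : Fin n, HasDerivAt
      (fun z => 2*lam*(Function.update x i z j - x₀ j)) (if j = i then 2*lam else 0) (x i) := by
    intro i j
    by_cases h : j = i
    · subst h
      have he : (fun z => 2*lam*(Function.update x j z j - x₀ j))
          = fun z => 2*lam*(z - x₀ j) := by
        funext z; rw [Function.update_self]
      rw [he, if_pos rfl]
      simpa using ((hasDerivAt_id (x j)).sub_const (x₀ j)).const_mul (2*lam)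
    · have he : (fun z => 2*lam*(Function.update x i z j - x₀ j))
          = fun _ => 2*lam*(x j - x₀ j) := by
        funext z; rw [Function.update_of_ne h]
      rw [he, if_neg h]
      exact hasDerivAt_const _ _
  -- time divergence term
  have hT : ptd (fun s y =>
        -(2 * c * lam) * (s - T / 2) * (ptd v s y ^ 2 + ∑ i : Fin n, pxd v i s y ^ 2) -
            (2 * ∑ j : Fin n, 2 * lam * (y j - x₀ j) * pxd v j s y) * ptd v s y -
          Ψ * v s y * ptd v s y +
        A s y * (-(2 * c * lam) * (s - T / 2)) * v s y ^ 2) t x = _ :=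
    HasDerivAt.deriv
      (((((lin1 t).mul (((hasDerivAt_ptd_time hv2 t x).pow 2).add
          (HasDerivAt.fun_sum fun j _ => (hasDerivAt_pxd_time hv2 t x j).pow 2))).sub
        (((HasDerivAt.fun_sum fun j _ =>
            (hasDerivAt_pxd_time hv2 t x j).const_mul (2*lam*(x j - x₀ j))).const_mul 2).mul
          (hasDerivAt_ptd_time hv2 t x))).sub
        (((hasDerivAt_f_time hv2 t x).const_mul Ψ).mul (hasDerivAt_ptd_time hv2 t x))).add
        (hA6t.mul ((hasDerivAt_f_time hv2 t x).pow 2)))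
  -- spatial divergence terms
  have hSp := fun (i : Fin n) =>
    (HasDerivAt.deriv
      ((((((((hasDerivAt_pxd_space hv2 t x i i).const_mul 2).mul
          (HasDerivAt.fun_sum fun j _ => (lxupd i j).mul (hasDerivAt_pxd_space hv2 t x i j))).sub
        ((lxupd i i).mul
          (HasDerivAt.fun_sum fun j _ => (hasDerivAt_pxd_space hv2 t x i j).pow 2))).sub
        (((hasDerivAt_ptd_space hv2 t x i).const_mul (2 * (-(2*c*lam)*(t - T/2)))).mul
          (hasDerivAt_pxd_space hv2 t x i i))).add
        ((lxupd i i).mul ((hasDerivAt_ptd_space hv2 t x i).pow 2))).add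
        (((hasDerivAt_f_space hv2 t x i).const_mul Ψ).mul
          (hasDerivAt_pxd_space hv2 t x i i))).sub
        ((hA6s i).mul ((hasDerivAt_f_space hv2 t x i).pow 2))) :
      pxd (fun s y =>
        2 * pxd v i s y * ∑ j : Fin n, 2 * lam * (y j - x₀ j) * pxd v j s y -
              2 * lam * (y i - x₀ i) * ∑ j : Fin n, pxd v j s y ^ 2 -
            2 * (-(2 * c * lam) * (s - T / 2)) * ptd v s y * pxd v i s y +
          2 * lam * (y i - x₀ i) * ptd v s y ^ 2 +
        Ψ * v s y * pxd v i s y -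
        A s y * (2 * lam * (y i - x₀ i)) * v s y ^ 2) i t x = _)
  simp only [Pi.mul_apply, Pi.pow_apply, Pi.add_apply, Function.update_eq_self, pow_one, zero_mul, zero_add, mul_zero, add_zero,
    ite_mul, Finset.sum_add_distrib, Finset.sum_ite_eq', Finset.mem_univ, if_true,
    eq_self_iff_true, Nat.cast_ofNat, show (2:ℕ)-1 = 1 from rfl] at hT hSp
  -- clean form of the time divergence
  have hT2 : ptd (fun s y =>
        -(2 * c * lam) * (s - T / 2) * (ptd v s y ^ 2 + ∑ i : Fin n, pxd v i s y ^ 2) -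
            (2 * ∑ j : Fin n, 2 * lam * (y j - x₀ j) * pxd v j s y) * ptd v s y -
          Ψ * v s y * ptd v s y +
        A s y * (-(2 * c * lam) * (s - T / 2)) * v s y ^ 2) t x
      = -(2*c*lam)*((ptd v t x)^2 + ∑ i, (pxd v i t x)^2)
        + -(2*c*lam)*(t - T/2)*(2*ptd v t x*Hd v t x dirT dirT
            + ∑ i : Fin n, 2 * pxd v i t x * Hd v t x dirT (dirX i))
        - (2*(∑ i : Fin n, 2 * lam * (x i - x₀ i) * Hd v t x dirT (dirX i)))*ptd v t x
        - (2*(∑ i : Fin n, 2 * lam * (x i - x₀ i) * pxd v i t x))*Hd v t x dirT dirT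
        - Ψ*(ptd v t x)^2 - Ψ*(v t x)*Hd v t x dirT dirT
        + ptd (fun s y => A s y * (-(2 * c * lam) * (s - T / 2))) t x*(v t x)^2
        + A t x*(-(2*c*lam)*(t - T/2))*(2*v t x*ptd v t x) := by
    rw [hT]; ring
  -- clean form of the spatial divergence
  have hSp2 : ∀ i : Fin n, pxd (fun s y =>
        2 * pxd v i s y * ∑ j : Fin n, 2 * lam * (y j - x₀ j) * pxd v j s y -
              2 * lam * (y i - x₀ i) * ∑ j : Fin n, pxd v j s y ^ 2 -
            2 * (-(2 * c * lam) * (s - T / 2)) * ptd v s y * pxd v i s y +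
          2 * lam * (y i - x₀ i) * ptd v s y ^ 2 +
        Ψ * v s y * pxd v i s y -
        A s y * (2 * lam * (y i - x₀ i)) * v s y ^ 2) i t x
      = 2*(∑ j : Fin n, 2 * lam * (x j - x₀ j) * pxd v j t x)*Hd v t x (dirX i) (dirX i)
        + 4*lam*(pxd v i t x)^2
        + 2*(pxd v i t x * ∑ j : Fin n, 2 * lam * (x j - x₀ j) * Hd v t x (dirX i) (dirX j))
        - 2*lam*(∑ j : Fin n, (pxd v j t x)^2)
        - 2*lam*((x i - x₀ i) * ∑ j : Fin n, 2 * pxd v j t x * Hd v t x (dirX i) (dirX j))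
        + 4*c*lam*(t - T/2)*(Hd v t x dirT (dirX i) * pxd v i t x)
        + (4*c*lam*(t - T/2)*ptd v t x)*Hd v t x (dirX i) (dirX i)
        + 2*lam*(ptd v t x)^2
        + (4*lam*ptd v t x)*((x i - x₀ i)*Hd v t x dirT (dirX i))
        + Ψ*(pxd v i t x)^2
        + (Ψ*v t x)*Hd v t x (dirX i) (dirX i)
        - (v t x)^2 * pxd (fun s y => A s y * (2 * lam * (y i - x₀ i))) i t x
        - (2*(A t x)*v t x)*(2 * lam * (x i - x₀ i) * pxd v i t x) := by
    intro i
    refine Eq.trans (hSp i) ?_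
    rw [hd_symm hv2 t x (dirX i) dirT]
    ring
  have hSpSum : (∑ i : Fin n, pxd (fun s y =>
        2 * pxd v i s y * ∑ j : Fin n, 2 * lam * (y j - x₀ j) * pxd v j s y -
              2 * lam * (y i - x₀ i) * ∑ j : Fin n, pxd v j s y ^ 2 -
            2 * (-(2 * c * lam) * (s - T / 2)) * ptd v s y * pxd v i s y +
          2 * lam * (y i - x₀ i) * ptd v s y ^ 2 +
        Ψ * v s y * pxd v i s y -
        A s y * (2 * lam * (y i - x₀ i)) * v s y ^ 2) i t x) = _ :=
    Finset.sum_congr rfl (fun i _ => hSp2 i)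
  rw [hT2, hSpSum]
  -- auxiliary sum identities
  have hswap : (∑ i : Fin n, pxd v i t x
        * ∑ j : Fin n, 2 * lam * (x j - x₀ j) * Hd v t x (dirX i) (dirX j))
      = lam * ∑ i : Fin n, (x i - x₀ i)
        * ∑ j : Fin n, 2 * pxd v j t x * Hd v t x (dirX i) (dirX j) := by
    simp only [Finset.mul_sum]
    rw [Finset.sum_comm]
    refine Finset.sum_congr rfl fun a _ => Finset.sum_congr rfl fun b _ => ?_
    rw [hd_symm hv2 t x (dirX b) (dirX a)]
    ring
  have hM0 : (∑ i : Fin n, 2 * pxd v i t x * Hd v t x dirT (dirX i))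
      = 2 * ∑ i : Fin n, Hd v t x dirT (dirX i) * pxd v i t x := by
    rw [Finset.mul_sum]
    exact Finset.sum_congr rfl fun i _ => by ring
  have hSLH : (∑ i : Fin n, 2 * lam * (x i - x₀ i) * Hd v t x dirT (dirX i))
      = 2 * lam * ∑ i : Fin n, (x i - x₀ i) * Hd v t x dirT (dirX i) := by
    rw [Finset.mul_sum]
    exact Finset.sum_congr rfl fun i _ => by ring
  have hSL : (∑ i : Fin n, 2 * lam * (x i - x₀ i) * pxd v i t x)
      = 2 * lam * ∑ i : Fin n, (x i - x₀ i) * pxd v i t x := by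
    rw [Finset.mul_sum]
    exact Finset.sum_congr rfl fun i _ => by ring
  have hApt : A t x = 4 * lam ^ 2 * (c ^ 2 * (t - T / 2) ^ 2 - ∑ i, (x i - x₀ i) ^ 2)
      + (4 * c + 1 - k) * lam := hAp t x
  simp only [Finset.sum_add_distrib, Finset.sum_sub_distrib, ← Finset.mul_sum,
    Finset.sum_const, Finset.card_univ, Fintype.card_fin, nsmul_eq_mul]
  linear_combination (-2 * (-(2 * c * lam) * (t - T / 2)) * ptd v t x +
        2 * ∑ i : Fin n, 2 * lam * (x i - x₀ i) * pxd v i t x + Ψ * v t x) * e1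
    + 2 * hswap + (-(2*c*lam)*(t - T/2)) * hM0 - 2 * ptd v t x * hSLH
    - ((-2 * (-(2 * c * lam) * (t - T / 2)) * ptd v t x +
        2 * ∑ i : Fin n, 2 * lam * (x i - x₀ i) * pxd v i t x + Ψ * v t x) * v t x) * hApt
    - ((-2 * (-(2 * c * lam) * (t - T / 2)) * ptd v t x +
        2 * ∑ i : Fin n, 2 * lam * (x i - x₀ i) * pxd v i t x + Ψ * v t x) * v t x) * hΨ
    + ((∑ i : Fin n, (pxd v i t x)^2) - (ptd v t x)^2) * hΨ
end

section
/- Let c ∈ (0, 4/5), T > 0 and R₁ > 0 satisfy cT > 2R₁, fix x₀ ∈ ℝⁿ, and for parameters λ > 0, β > 0 define, for t ∈ (0,T) and x ∈ ℝⁿ, F₁(t,x) = c + cβ(T−2t)²/(t²(T−t)²) − β|T−2t|(2|x−x₀| + λ^{−1})/(t²(T−t)²) and F₂(t,x) = 4−5c + cβ(T−2t)²/(t²(T−t)²) − 2β|T−2t||x−x₀|/(t²(T−t)²). Then there exist β₀ > 0 and λ₀ > 0 such that for every β ∈ (0,β₀), every λ ≥ λ₀, every t ∈ (0,T) and every x with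 |x−x₀| ≤ R₁, one has F₁(t,x) > 0 and F₂(t,x) > 0. (These are the functions (4.6)–(4.7) of the paper with the choice k = 1−c, and their positivity is established in Step 3 of the proof of Theorem 3.1.) -/
set_option maxHeartbeats 2000000 in
/-- Positivity of the coefficients `F₁`, `F₂` (functions (4.6)–(4.7)
of the paper with `k = 1 − c`), established in Step 3 of the proof of Theorem 3.1:
there exist `β₀ > 0` and `λ₀ > 0` such that for all `β ∈ (0,β₀)`, `λ ≥ λ₀`,
`t ∈ (0,T)` and `|x − x₀| ≤ R₁`, both `F₁(t,x) > 0` and `F₂(t,x) > 0`. -/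
theorem stmt_13 {n : ℕ} (hn : 1 ≤ n) (x₀ : EuclideanSpace ℝ (Fin n))
    (c T R₁ : ℝ) (hc : c ∈ Set.Ioo (0 : ℝ) (4 / 5)) (hT : 0 < T) (hR₁ : 0 < R₁)
    (hcT : 2 * R₁ < c * T) :
    ∃ β₀ > (0 : ℝ), ∃ lam₀ > (0 : ℝ),
      ∀ β ∈ Set.Ioo (0 : ℝ) β₀, ∀ lam : ℝ, lam₀ ≤ lam →
        ∀ t ∈ Set.Ioo (0 : ℝ) T, ∀ x : EuclideanSpace ℝ (Fin n), ‖x - x₀‖ ≤ R₁ →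
          0 < c + c * β * (T - 2 * t) ^ 2 / (t ^ 2 * (T - t) ^ 2)
              - β * |T - 2 * t| * (2 * ‖x - x₀‖ + lam⁻¹) / (t ^ 2 * (T - t) ^ 2)
          ∧ 0 < 4 - 5 * c + c * β * (T - 2 * t) ^ 2 / (t ^ 2 * (T - t) ^ 2)
              - 2 * β * |T - 2 * t| * ‖x - x₀‖ / (t ^ 2 * (T - t) ^ 2) := by
  obtain ⟨hc0, hc45⟩ := hc
  set m := min c (4 - 5 * c) with hm_def
  have hm : 0 < m := lt_min hc0 (by linarith)
  have hmc : m ≤ c := min_le_left _ _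
  have hm45 : m ≤ 4 - 5 * c := min_le_right _ _
  clear_value m
  set δ := (c * T - 2 * R₁) / (2 * c) with hδ_def
  have hδ : 0 < δ := div_pos (by linarith) (by linarith)
  clear_value δ
  set K₀ := R₁ + c * T / 2 with hK₀_def
  have hK₀pos : (0 : ℝ) < K₀ := by rw [hK₀_def]; nlinarith
  clear_value K₀
  have hcTδ : c * (T - δ) = K₀ := by
    rw [hδ_def, hK₀_def]; field_simp; ring
  refine ⟨m * c * (δ / 2) ^ 4 / (2 * K₀ ^ 2), by positivity,
    2 / (c * T - 2 * R₁), div_pos (by norm_num) (by linarith), ?_⟩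
  intro β hβ lam hlam t ht x hx
  obtain ⟨hβ0, hββ⟩ := hβ
  obtain ⟨ht0, htT⟩ := ht
  have hr0 : (0 : ℝ) ≤ ‖x - x₀‖ := norm_nonneg _
  set r := ‖x - x₀‖ with hr_def
  clear_value r
  have hsq : (T - 2 * t) ^ 2 = |T - 2 * t| ^ 2 := (sq_abs _).symm
  rw [hsq]
  have hs0 : 0 ≤ |T - 2 * t| := abs_nonneg _
  set s := |T - 2 * t| with hs_def
  clear_value s
  have hD : 0 < t ^ 2 * (T - t) ^ 2 :=
    mul_pos (pow_pos ht0 2) (pow_pos (by linarith) 2)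
  set D := t ^ 2 * (T - t) ^ 2 with hD_def
  clear_value D
  have hlam0 : 0 < lam :=
    lt_of_lt_of_le (div_pos (by norm_num) (by linarith)) hlam
  have hinv : lam⁻¹ ≤ (c * T - 2 * R₁) / 2 := by
    have h1 : lam⁻¹ ≤ (2 / (c * T - 2 * R₁))⁻¹ :=
      inv_anti₀ (div_pos (by norm_num) (by linarith)) hlam
    rwa [inv_div] at h1
  have hinv0 : 0 < lam⁻¹ := inv_pos.mpr hlam0
  set K := 2 * r + lam⁻¹ with hK_def
  have hKpos : 0 < K := by rw [hK_def]; positivity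
  have hKK₀ : K ≤ K₀ := by rw [hK_def, hK₀_def]; linarith
  clear_value K
  -- key bound on the β-term
  have key : β * (s * K - c * s ^ 2) / D < m := by
    rcases le_or_gt K (c * s) with h | h
    · have h1 : s * K - c * s ^ 2 ≤ 0 := by nlinarith [mul_le_mul_of_nonneg_left h hs0]
      have h2 : β * (s * K - c * s ^ 2) / D ≤ 0 :=
        div_nonpos_of_nonpos_of_nonneg (by nlinarith) hD.le
      linarith
    · have hsK₀ : c * s < K₀ := lt_of_lt_of_le h hKK₀
      have hsT : s < T - δ := by
        have := hsK₀
        rw [← hcTδ] at this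
        exact lt_of_mul_lt_mul_left this hc0.le
      rw [hs_def] at hsT
      have habs := abs_lt.mp hsT
      rw [← hs_def] at hsT
      have ht1 : δ / 2 < t := by linarith [habs.1]
      have ht2 : t < T - δ / 2 := by linarith [habs.2]
      have hDlb : (δ / 2) ^ 4 ≤ D := by
        have h1 : (δ / 2) ^ 2 ≤ t ^ 2 := by nlinarith
        have h2 : (δ / 2) ^ 2 ≤ (T - t) ^ 2 := by nlinarith
        have h3 : (0:ℝ) ≤ (δ / 2) ^ 2 := sq_nonneg _
        rw [hD_def]
        nlinarith
      have hnum' : c * (s * K - c * s ^ 2) ≤ K₀ ^ 2 := by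
        nlinarith [mul_le_mul (le_of_lt hsK₀) hKK₀ hKpos.le hK₀pos.le,
          sq_nonneg (c * s)]
      have hnum : s * K - c * s ^ 2 ≤ K₀ ^ 2 / c := by
        rw [le_div_iff₀ hc0]; nlinarith
      rw [div_lt_iff₀ hD]
      have hβK : β * (s * K - c * s ^ 2) ≤ β * (K₀ ^ 2 / c) :=
        mul_le_mul_of_nonneg_left hnum hβ0.le
      have hBK : 0 < K₀ ^ 2 / c := by positivity
      have hβ2 : β * (K₀ ^ 2 / c) < (m * c * (δ / 2) ^ 4 / (2 * K₀ ^ 2)) * (K₀ ^ 2 / c) :=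
        mul_lt_mul_of_pos_right hββ hBK
      have hBval : (m * c * (δ / 2) ^ 4 / (2 * K₀ ^ 2)) * (K₀ ^ 2 / c)
          = m * (δ / 2) ^ 4 / 2 := by
        field_simp
      have h4 : m * (δ / 2) ^ 4 ≤ m * D := mul_le_mul_of_nonneg_left hDlb hm.le
      rw [hBval] at hβ2
      nlinarith
  refine ⟨?_, ?_⟩
  · have heq : c + c * β * s ^ 2 / D - β * s * K / D
        = c - β * (s * K - c * s ^ 2) / D := by ring
    rw [heq]; linarith
  · have h2 : β * (2 * s * r - c * s ^ 2) / D ≤ β * (s * K - c * s ^ 2) / D := by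
      rw [div_le_div_iff_of_pos_right hD]
      nlinarith [mul_nonneg (mul_nonneg hβ0.le hs0) hinv0.le]
    have heq : 4 - 5 * c + c * β * s ^ 2 / D - 2 * β * s * r / D
        = (4 - 5 * c) - β * (2 * s * r - c * s ^ 2) / D := by ring
    rw [heq]; linarith
end

section
/- Let 0 < R₀ < R₁, c ∈ (0,1) and T > 0 satisfy 4(4+5c)R₀²/(9c) > c²T² > 4R₁², fix x₀ ∈ ℝⁿ, and for a parameter β > 0 define, for t ∈ (0,T) and x ∈ ℝⁿ, G̃(t,x) = 4[ (4+5c)|x−x₀|² − 9c³(t−T/2)² ] + 4cβ(T−2t)²[ c²(t−T/2)² − |x−x₀|² ] / (t²(T−t)²). Then there exist β₀ > 0 and ε > 0 such that for every β ∈ (0,β₀), every t ∈ (0,T) and every x with R₀ ≤ |x−x₀| ≤ R₁, one has G̃(t,x) ≥ ε. (This is the uniform positivity of the explicit part of the zeroth-order coefficient G = G⁰ + G¹ in (4.8), established in Step 3 of the proof of Theorem 3.1 with k = 1−c.) -/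
set_option maxHeartbeats 1000000


/-- Uniform positivity of the explicit part `G̃` of the zeroth-order
Carleman coefficient `G = G⁰ + G¹` in (4.8) of the paper, established in Step 3 of the
proof of Theorem 3.1 with `k = 1 − c`. -/
theorem stmt_14 {n : ℕ} (hn : 1 ≤ n) (x₀ : EuclideanSpace ℝ (Fin n))
    (R₀ R₁ c T : ℝ) (hR₀ : 0 < R₀) (hR₀R₁ : R₀ < R₁)
    (hc : c ∈ Set.Ioo (0 : ℝ) 1) (hT : 0 < T)
    (h1 : c ^ 2 * T ^ 2 < 4 * (4 + 5 * c) * R₀ ^ 2 / (9 * c))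
    (h2 : 4 * R₁ ^ 2 < c ^ 2 * T ^ 2) :
    ∃ β₀ > (0 : ℝ), ∃ ε > (0 : ℝ),
      ∀ β ∈ Set.Ioo (0 : ℝ) β₀, ∀ t ∈ Set.Ioo (0 : ℝ) T,
        ∀ x : EuclideanSpace ℝ (Fin n), R₀ ≤ ‖x - x₀‖ → ‖x - x₀‖ ≤ R₁ →
          ε ≤ 4 * ((4 + 5 * c) * ‖x - x₀‖ ^ 2 - 9 * c ^ 3 * (t - T / 2) ^ 2)
              + 4 * c * β * (T - 2 * t) ^ 2
                  * (c ^ 2 * (t - T / 2) ^ 2 - ‖x - x₀‖ ^ 2)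
                  / (t ^ 2 * (T - t) ^ 2) := by
  obtain ⟨hc0, hc1⟩ := hc
  have h9c : (0:ℝ) < 9 * c := by linarith
  rw [lt_div_iff₀ h9c] at h1
  set A := 4 * (4 + 5 * c) * R₀ ^ 2 - 9 * c ^ 3 * T ^ 2 with hAdef
  have hA : 0 < A := by nlinarith [h1]
  have hm0 : R₁ ^ 2 / c ^ 2 < T ^ 2 / 4 := by
    rw [div_lt_div_iff₀ (by positivity) (by norm_num)]
    nlinarith [h2]
  set m := T ^ 2 / 4 - R₁ ^ 2 / c ^ 2 with hmdef
  have hm : 0 < m := by simp only [hmdef]; linarith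
  have hR₁ : 0 < R₁ := lt_trans hR₀ hR₀R₁
  set K := 4 * c * T ^ 2 * R₁ ^ 2 / m ^ 2 with hKdef
  have hK : 0 < K := by positivity
  have hKm : K * m ^ 2 = 4 * c * T ^ 2 * R₁ ^ 2 := by
    rw [hKdef, div_mul_cancel₀ _ (pow_ne_zero 2 hm.ne')]
  clear_value A m K
  refine ⟨A / (2 * (K + 1)), by positivity, A / 2, by positivity, ?_⟩
  rintro β ⟨hβ0, hβ1⟩ t ⟨ht0, htT⟩ x hr0 hr1
  set r := ‖x - x₀‖ with hrdef
  have hr0' : 0 ≤ r := norm_nonneg _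
  clear_value r
  have hrsq : R₀ ^ 2 ≤ r ^ 2 := pow_le_pow_left₀ hR₀.le hr0 2
  have hrsq1 : r ^ 2 ≤ R₁ ^ 2 := pow_le_pow_left₀ hr0' hr1 2
  have hu : 0 < t * (T - t) := mul_pos ht0 (by linarith)
  have hueq : t * (T - t) = T ^ 2 / 4 - (t - T / 2) ^ 2 := by ring
  have hs : (t - T / 2) ^ 2 ≤ T ^ 2 / 4 := by nlinarith [hu, hueq]
  have hD : 0 < t ^ 2 * (T - t) ^ 2 := by
    have h1' : 0 < T - t := by linarith
    positivity
  have hfirst : A ≤ 4 * ((4 + 5 * c) * r ^ 2 - 9 * c ^ 3 * (t - T / 2) ^ 2) := by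
    linarith [mul_le_mul_of_nonneg_left hs (by positivity : (0:ℝ) ≤ 9 * c ^ 3),
      mul_le_mul_of_nonneg_left hrsq (by linarith : (0:ℝ) ≤ 4 + 5 * c)]
  have hβK : β * K ≤ A / 2 := by
    have h3 : β * K ≤ A / (2 * (K + 1)) * K :=
      mul_le_mul_of_nonneg_right hβ1.le hK.le
    have h4 : A / (2 * (K + 1)) * K ≤ A / 2 := by
      rw [div_mul_eq_mul_div, div_le_div_iff₀ (by positivity) (by norm_num)]
      linarith [mul_pos hA hK]
    linarith
  rcases le_or_gt 0 (c ^ 2 * (t - T / 2) ^ 2 - r ^ 2) with hN | hN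
  · have hsec : 0 ≤ 4 * c * β * (T - 2 * t) ^ 2 * (c ^ 2 * (t - T / 2) ^ 2 - r ^ 2)
        / (t ^ 2 * (T - t) ^ 2) := by
      apply div_nonneg _ hD.le
      exact mul_nonneg (by positivity) hN
    linarith
  · -- second term may be negative; bound it below by -β*K
    have hsc : (t - T / 2) ^ 2 ≤ R₁ ^ 2 / c ^ 2 := by
      rw [le_div_iff₀ (by positivity : (0:ℝ) < c ^ 2)]
      linarith [hN, hrsq1]
    have hum : m ≤ t * (T - t) := by
      rw [hueq, hmdef]; linarith
    have hu2 : m ^ 2 ≤ (t * (T - t)) ^ 2 := pow_le_pow_left₀ hm.le hum 2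
    have h4s : (T - 2 * t) ^ 2 ≤ T ^ 2 := by linarith [hs]
    have hNlb : -R₁ ^ 2 ≤ c ^ 2 * (t - T / 2) ^ 2 - r ^ 2 := by linarith [hrsq1, mul_nonneg (sq_nonneg c) (sq_nonneg (t - T / 2))]
    have hX : -(β * (K * m ^ 2)) ≤
        4 * c * β * (T - 2 * t) ^ 2 * (c ^ 2 * (t - T / 2) ^ 2 - r ^ 2) := by
      rw [hKm]
      linarith [mul_nonneg (mul_nonneg (by positivity : (0:ℝ) ≤ 4 * c * β)
          (sq_nonneg (T - 2 * t))) (by linarith : (0:ℝ) ≤ R₁ ^ 2 + (c ^ 2 * (t - T / 2) ^ 2 - r ^ 2)),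
        mul_nonneg (mul_nonneg (by positivity : (0:ℝ) ≤ 4 * c * β)
          (by linarith : (0:ℝ) ≤ T ^ 2 - (T - 2 * t) ^ 2)) (by positivity : (0:ℝ) ≤ R₁ ^ 2)]
    have hsec : -(β * K) ≤ 4 * c * β * (T - 2 * t) ^ 2 * (c ^ 2 * (t - T / 2) ^ 2 - r ^ 2)
        / (t ^ 2 * (T - t) ^ 2) := by
      rw [le_div_iff₀ hD]
      have hDeq : t ^ 2 * (T - t) ^ 2 = (t * (T - t)) ^ 2 := by ring
      rw [hDeq]
      linarith [hX, mul_nonneg (mul_nonneg hβ0.le hK.le) (sub_nonneg.mpr hu2)]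
    linarith
end
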